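/- arXiv:1603.03653 — 7 statements merged into one kernel-verified Lean document; each statement's English description precedes it below -/
import Mathlib

section
/- The number of plane trees with l edges and k leaves equals the Narayana number N(l,k) = (1/l) * C(l,k) * C(l,k-1). -/
/-
The preorder sequence of child counts (Łukasiewicz word) of a plane tree with `l` edges and `k`
leaves is a word of length `l + 1` and sum `l` with `k` zeros, and these words are exactly those
whose prefixes of length `j ≤ l` have sum at least `j`. By the cycle lemma, every word of
length `l + 1` and sum `l` has exactly one rotation with this prefix property. Hence `l + 1` times
the number of trees is the number of all words of length `l + 1` and sum `l` with `k` zeros, which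
is `C(l+1, k) · C(l-1, k-1)`: choose the positions of the zeros, then a composition of `l` into
`l + 1 - k` positive parts. This equals `(l + 1)/l · C(l, k) · C(l, k-1)`.
-/

/-- A plane tree: a root together with a linearly ordered (possibly empty) list of subtrees. -/
inductive PlaneTree where
  | node : List PlaneTree → PlaneTree

namespace PlaneTree

/-- Number of edges of a plane tree. -/
def edges : PlaneTree → ℕ
  | node cs => cs.length + (cs.attach.map (fun c => edges c.1)).sum
  decreasing_by
    have := List.sizeOf_lt_of_mem c.2
    simp only [PlaneTree.node.sizeOf_spec]
    omega

/-- Number of vertices with no children (counting the root if childless). -/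
def childlessCount : PlaneTree → ℕ
  | node [] => 1
  | node (c :: cs) => ((c :: cs).attach.map (fun d => childlessCount d.1)).sum
  decreasing_by
    have := List.sizeOf_lt_of_mem d.2
    simp only [PlaneTree.node.sizeOf_spec]
    omega

/-- Number of leaves: non-root vertices with no children. -/
def leaves : PlaneTree → ℕ
  | node cs => (cs.attach.map (fun c => childlessCount c.1)).sum

end PlaneTree

namespace PlaneTree

@[induction_eliminator]
theorem induction {motive : PlaneTree → Prop}
    (node : ∀ cs, (∀ c ∈ cs, motive c) → motive (.node cs)) : ∀ t, motive t
  | .node cs => node cs fun c _ => induction node c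

@[simp]
theorem edges_node (cs : List PlaneTree) : (node cs).edges = cs.length + (cs.map edges).sum := by
  rw [edges, List.attach_map_val]

@[simp]
theorem childlessCount_node_nil : (node []).childlessCount = 1 := by
  rw [childlessCount]

theorem childlessCount_node_of_ne_nil {cs : List PlaneTree} (h : cs ≠ []) :
    (node cs).childlessCount = (cs.map childlessCount).sum := by
  obtain ⟨c, cs, rfl⟩ := List.exists_cons_of_ne_nil h
  rw [childlessCount, List.attach_map_val]

@[simp]
theorem leaves_node (cs : List PlaneTree) :
    (node cs).leaves = (cs.map childlessCount).sum := by
  rw [leaves, List.attach_map_val]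

theorem childlessCount_eq_leaves {t : PlaneTree} (ht : t.edges ≠ 0) :
    t.childlessCount = t.leaves := by
  obtain ⟨cs⟩ := t
  rw [leaves_node, childlessCount_node_of_ne_nil]
  rintro rfl
  simp at ht

def encode : PlaneTree → List ℕ
  | node cs => cs.length :: (cs.map encode).flatten

theorem length_encode (t : PlaneTree) : (encode t).length = t.edges + 1 := by
  induction t with
  | node cs ih =>
    simp only [encode, edges_node, List.length_cons, List.length_flatten, List.map_map,
      Function.comp_def]
    rw [List.map_congr_left ih, List.sum_map_add]
    simp only [List.map_const', List.sum_replicate, smul_eq_mul, mul_one]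
    omega

theorem count_zero_encode (t : PlaneTree) : (encode t).count 0 = t.childlessCount := by
  induction t with
  | node cs ih =>
    rcases eq_or_ne cs [] with rfl | hcs
    · simp [encode]
    simp only [encode, childlessCount_node_of_ne_nil hcs, List.count_cons, List.count_flatten,
      List.map_map, Function.comp_def]
    rw [List.map_congr_left ih]
    simp [hcs]

theorem encode_append_inj {t t' : PlaneTree} {r r' : List ℕ}
    (h : encode t ++ r = encode t' ++ r') : t = t' ∧ r = r' := by
  induction t generalizing t' r r' with
  | node cs ih =>
    obtain ⟨cs'⟩ := t'
    simp only [encode, List.cons_append, List.cons.injEq, node.injEq] at h ⊢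
    obtain ⟨hlen, h⟩ := h
    induction cs generalizing cs' r r' with
    | nil => cases cs' <;> simp_all
    | cons c cs ihcs =>
      obtain _ | ⟨c', cs'⟩ := cs'
      · simp at hlen
      simp only [List.map_cons, List.flatten_cons, List.append_assoc] at h
      obtain ⟨rfl, hrest⟩ := ih c (by simp) h
      obtain ⟨rfl, rfl⟩ := ihcs (fun d hd => ih d (by simp [hd])) cs' (by simpa using hlen) hrest
      simp

theorem encode_injective : Function.Injective encode := fun t t' h =>
  (encode_append_inj (r := []) (r' := []) (by simpa using h)).1

end PlaneTree

theorem List.rotate_rotate_of_add_eq_length {α : Type*} {w : List α} {a b : ℕ}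
    (h : a + b = w.length) : (w.rotate a).rotate b = w := by
  rw [List.rotate_rotate, h, List.rotate_length]

namespace Lukasiewicz

/- Read `w` as the preorder sequence of child counts of a forest of `m` trees: after its first `j`
letters, `m + height w j` subtrees remain to be read. `IsWord m w` says this stays positive until
the end of `w`, where it reaches zero. -/
def height (w : List ℕ) (j : ℕ) : ℤ := ((w.take j).sum : ℤ) - j

def IsWord (m : ℕ) (w : List ℕ) : Prop :=
  w.sum + m = w.length ∧ ∀ j < w.length, 0 < height w j + m

@[simp]
theorem height_zero (w : List ℕ) : height w 0 = 0 := by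
  simp [height]

theorem height_length (w : List ℕ) : height w w.length = w.sum - w.length := by
  simp [height]

theorem height_cons_succ (d : ℕ) (u : List ℕ) (j : ℕ) :
    height (d :: u) (j + 1) = d - 1 + height u j := by
  simp only [height, List.take_succ_cons, List.sum_cons]
  push_cast
  ring

theorem height_append_of_le {u : List ℕ} (v : List ℕ) {j : ℕ} (hj : j ≤ u.length) :
    height (u ++ v) j = height u j := by
  simp [height, List.take_append, Nat.sub_eq_zero_of_le hj]

theorem height_append_of_ge (u v : List ℕ) {j : ℕ} (hj : u.length ≤ j) :
    height (u ++ v) j = height u u.length + height v (j - u.length) := by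
  simp only [height, List.take_append, List.take_of_length_le hj, List.sum_append, List.take_length]
  push_cast
  omega

theorem isWord_nil : IsWord 0 [] := ⟨rfl, by simp⟩

theorem IsWord.append {m m' : ℕ} {u v : List ℕ} (hu : IsWord m u) (hv : IsWord m' v) :
    IsWord (m + m') (u ++ v) := by
  obtain ⟨hu, hu'⟩ := hu
  obtain ⟨hv, hv'⟩ := hv
  refine ⟨by simp only [List.sum_append, List.length_append]; omega, fun j hj => ?_⟩
  rcases le_or_gt u.length j with h | h
  · have := hv' (j - u.length) (by simp at hj; omega)
    rw [height_append_of_ge u v h, height_length]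
    omega
  · have := hu' j h
    rw [height_append_of_le v h.le]
    omega

theorem IsWord.cons {d : ℕ} {u : List ℕ} (h : IsWord d u) : IsWord 1 (d :: u) := by
  refine ⟨by have := h.1; simp only [List.sum_cons, List.length_cons]; omega, fun j hj => ?_⟩
  cases j with
  | zero => simp
  | succ j =>
    have := h.2 j (by simpa using hj)
    rw [height_cons_succ]
    omega

theorem IsWord.of_cons {m d : ℕ} {u : List ℕ} (h : IsWord m (d :: u)) :
    ∃ m', m = m' + 1 ∧ IsWord (m' + d) u := by
  obtain ⟨hsum, hpos⟩ := h
  obtain ⟨m', rfl⟩ : ∃ m', m = m' + 1 := Nat.exists_eq_add_one.2 (by simpa using hpos 0 (by simp))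
  refine ⟨m', rfl, by simp only [List.sum_cons, List.length_cons] at hsum; omega, fun j hj => ?_⟩
  have := hpos (j + 1) (by simpa using hj)
  rw [height_cons_succ] at this
  omega

theorem height_take (w : List ℕ) {j r : ℕ} (h : j ≤ r) : height (w.take r) j = height w j := by
  simp [height, List.take_take, min_eq_left h]

theorem height_add {w : List ℕ} {r : ℕ} (hr : r ≤ w.length) (j : ℕ) :
    height w (r + j) = height w r + height (w.drop r) j := by
  conv_lhs => rw [← List.take_append_drop r w]
  rw [height_append_of_ge _ _ (by simp), List.length_take_of_le hr, height_take w le_rfl,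
    Nat.add_sub_cancel_left]

theorem height_rotate_of_add_le {w : List ℕ} {r j : ℕ} (h : r + j ≤ w.length) :
    height (w.rotate r) j = height w (r + j) - height w r := by
  rw [List.rotate_eq_drop_append_take (by omega), height_append_of_le _ (by simp; omega),
    height_add (by omega)]
  ring

theorem height_rotate_of_length_le_add {w : List ℕ} {r j : ℕ} (hr : r ≤ w.length)
    (hj : j ≤ w.length) (h : w.length ≤ r + j) :
    height (w.rotate r) j = height w w.length - height w r + height w (r + j - w.length) := by
  have hdrop := height_add hr (w.length - r)
  rw [Nat.add_sub_cancel' hr] at hdrop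
  rw [List.rotate_eq_drop_append_take hr, height_append_of_ge _ _ (by simp; omega),
    height_take w (by simp; omega), List.length_drop, hdrop]
  rw [show j - (w.length - r) = r + j - w.length by omega]
  ring

theorem isWord_one_rotate_iff {w : List ℕ} (hw : w.sum + 1 = w.length) {r : ℕ}
    (hr : r < w.length) :
    IsWord 1 (w.rotate r) ↔
      (∀ j < w.length, height w r ≤ height w j) ∧ ∀ j < r, height w r < height w j := by
  have hend : height w w.length = -1 := by rw [height_length]; omega
  constructor
  · rintro ⟨-, hpos⟩
    have hafter : ∀ j, r ≤ j → j < w.length → height w r ≤ height w j := fun j hrj hj => by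
      have := hpos (j - r) (by simp; omega)
      rw [height_rotate_of_add_le (by omega), Nat.add_sub_cancel' hrj] at this
      omega
    have hbefore : ∀ j < r, height w r < height w j := fun j hj => by
      have := hpos (w.length - r + j) (by simp; omega)
      rw [height_rotate_of_length_le_add hr.le (by omega) (by omega),
        show r + (w.length - r + j) - w.length = j by omega] at this
      omega
    exact ⟨fun j hj => (le_or_gt r j).elim (hafter j · hj) fun h => (hbefore j h).le, hbefore⟩
  · rintro ⟨hmin, hbefore⟩
    refine ⟨by rw [(List.rotate_perm w r).sum_eq, List.length_rotate, hw], fun j hj => ?_⟩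
    rw [List.length_rotate] at hj
    rcases lt_or_ge (r + j) w.length with h | h
    · rw [height_rotate_of_add_le h.le]
      have := hmin (r + j) h
      omega
    · rw [height_rotate_of_length_le_add hr.le hj.le h]
      have := hbefore (r + j - w.length) (by omega)
      omega

/- The cycle lemma; the rotation starts at the leftmost minimum of `height w`. -/
theorem existsUnique_isWord_one_rotate {w : List ℕ} (hw : w.sum + 1 = w.length) :
    ∃! r, r < w.length ∧ IsWord 1 (w.rotate r) := by
  classical
  have hmin : ∃ r, r < w.length ∧ ∀ j < w.length, height w r ≤ height w j := by
    obtain ⟨r, hr, hmin⟩ :=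
      (Finset.range w.length).exists_min_image (height w) ⟨0, by simp; omega⟩
    exact ⟨r, by simpa using hr, fun j hj => hmin j (by simpa using hj)⟩
  obtain ⟨hr, hrmin⟩ := Nat.find_spec hmin
  refine ⟨Nat.find hmin, ⟨hr, (isWord_one_rotate_iff hw hr).2 ⟨hrmin, fun j hj => ?_⟩⟩, ?_⟩
  · have := Nat.find_min hmin hj
    push Not at this
    obtain ⟨i, hi, hlt⟩ := this (hj.trans hr)
    exact (hrmin i hi).trans_lt hlt
  · rintro r' ⟨hr', hw'⟩
    rw [isWord_one_rotate_iff hw hr'] at hw'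
    refine le_antisymm (not_lt.1 fun h => ?_) (Nat.find_min' hmin ⟨hr', hw'.1⟩)
    exact (hw'.2 _ h).not_ge (hrmin r' hr')

theorem card_sum_add_one_eq_mul_card_isWord {P : List ℕ → Prop} (hP : ∀ w r, P w → P (w.rotate r))
    (n : ℕ) :
    Nat.card {w : List ℕ // w.length = n ∧ w.sum + 1 = n ∧ P w} =
      n * Nat.card {w : List ℕ // IsWord 1 w ∧ w.length = n ∧ P w} := by
  let rotateBack (p : Fin n × {v : List ℕ // IsWord 1 v ∧ v.length = n ∧ P v}) :
      {w : List ℕ // w.length = n ∧ w.sum + 1 = n ∧ P w} :=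
    ⟨p.2.1.rotate (n - p.1), by rw [List.length_rotate, p.2.2.2.1],
      by rw [(List.rotate_perm _ _).sum_eq, p.2.2.1.1, p.2.2.2.1], hP _ _ p.2.2.2.2⟩
  have hbij : Function.Bijective rotateBack := by
    constructor
    · rintro ⟨r, v, hv, hvlen, _⟩ ⟨r', v', hv', hvlen', _⟩ h
      have hw : v.rotate (n - r) = v'.rotate (n - r') := congrArg Subtype.val h
      have hv_eq : (v.rotate (n - r)).rotate r = v :=
        List.rotate_rotate_of_add_eq_length (by omega)
      have hv'_eq : (v.rotate (n - r)).rotate r' = v' := by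
        rw [hw]
        exact List.rotate_rotate_of_add_eq_length (by omega)
      have hsum : (v.rotate (n - r)).sum + 1 = (v.rotate (n - r)).length := by
        rw [(List.rotate_perm _ _).sum_eq, List.length_rotate, hv.1]
      have hrr : (r : ℕ) = r' := (existsUnique_isWord_one_rotate hsum).unique
        ⟨by simp [hvlen], by rwa [hv_eq]⟩ ⟨by simp [hvlen], by rwa [hv'_eq]⟩
      obtain rfl := Fin.ext hrr
      obtain rfl : v = v' := hv_eq.symm.trans hv'_eq
      rfl
    · rintro ⟨w, hlen, hsum, hPw⟩
      obtain ⟨s, ⟨hs, hws⟩, -⟩ := existsUnique_isWord_one_rotate (hlen ▸ hsum)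
      refine ⟨(⟨s, hlen ▸ hs⟩, ⟨w.rotate s, hws, by rw [List.length_rotate, hlen], hP _ _ hPw⟩), ?_⟩
      exact Subtype.ext (List.rotate_rotate_of_add_eq_length (by simp only; omega))
  rw [← Nat.card_congr (Equiv.ofBijective rotateBack hbij), Nat.card_prod,
    Nat.card_eq_fintype_card, Fintype.card_fin]

end Lukasiewicz

namespace PlaneTree

open Lukasiewicz

theorem isWord_encode (t : PlaneTree) : IsWord 1 (encode t) := by
  induction t with
  | node cs ih =>
    rw [encode]
    refine IsWord.cons ?_
    induction cs with
    | nil => exact isWord_nil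
    | cons c cs ihcs =>
      rw [List.length_cons, add_comm]
      exact (ih c (by simp)).append (ihcs fun d hd => ih d (by simp [hd]))

theorem exists_flatten_map_encode_eq {m : ℕ} {w : List ℕ} (h : IsWord m w) :
    ∃ cs : List PlaneTree, cs.length = m ∧ (cs.map encode).flatten = w := by
  induction w generalizing m with
  | nil => exact ⟨[], by simpa using h.1.symm, rfl⟩
  | cons d u ih =>
    obtain ⟨m, rfl, hu⟩ := h.of_cons
    obtain ⟨cs, hlen, rfl⟩ := ih hu
    refine ⟨node (cs.take d) :: cs.drop d, by simp; omega, ?_⟩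
    rw [List.map_cons, List.flatten_cons, encode, List.length_take_of_le (by omega),
      List.cons_append, ← List.flatten_append, ← List.map_append, List.take_append_drop]

noncomputable def encodeEquiv : PlaneTree ≃ {w : List ℕ // IsWord 1 w} :=
  Equiv.ofBijective (fun t => ⟨encode t, isWord_encode t⟩) ⟨fun _ _ h => encode_injective
    (congrArg Subtype.val h), fun ⟨w, hw⟩ => by
      obtain ⟨cs, hlen, rfl⟩ := exists_flatten_map_encode_eq hw
      obtain ⟨t, rfl⟩ := List.length_eq_one_iff.1 hlen
      exact ⟨t, by simp⟩⟩

theorem card_edges_leaves {l : ℕ} (hl : l ≠ 0) (k : ℕ) :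
    Nat.card {t : PlaneTree // t.edges = l ∧ t.leaves = k} =
      Nat.card {w : List ℕ // IsWord 1 w ∧ w.length = l + 1 ∧ w.count 0 = k} := by
  refine Nat.card_congr <| (encodeEquiv.subtypeEquiv fun t => ?_).trans <|
    Equiv.subtypeSubtypeEquivSubtypeInter (IsWord 1) fun w => w.length = l + 1 ∧ w.count 0 = k
  show _ ↔ (encode t).length = l + 1 ∧ (encode t).count 0 = k
  rw [length_encode, count_zero_encode, Nat.add_right_cancel_iff]
  refine and_congr_right fun he => ?_
  rw [childlessCount_eq_leaves (he ▸ hl)]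

end PlaneTree

section ZeroSets

open Finset

variable {ι : Type*} [Fintype ι] [DecidableEq ι]

def positiveSumEquiv {S s : ℕ} (hS : Fintype.card ι + s = S) :
    {g : ι → ℕ // (∀ i, g i ≠ 0) ∧ ∑ i, g i = S} ≃ {h : ι → ℕ // ∑ i, h i = s} where
  toFun g := ⟨fun i => g.1 i - 1, by
    obtain ⟨g, hg, hsum⟩ := g
    have : ∑ i, (g i - 1 + 1) = ∑ i, g i := sum_congr rfl fun i _ => by have := hg i; omega
    rw [sum_add_distrib, hsum, ← hS] at this
    simp only [sum_const, card_univ, smul_eq_mul, mul_one] at this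
    show ∑ i, (g i - 1) = s
    omega⟩
  invFun h := ⟨fun i => h.1 i + 1, fun i => Nat.succ_ne_zero _, by
    simp [sum_add_distrib, h.2, ← hS, add_comm]⟩
  left_inv g := Subtype.ext <| funext fun i => by have := g.2.1 i; dsimp only; omega
  right_inv h := Subtype.ext <| funext fun i => Nat.add_sub_cancel _ _

def restrictZeroSetEquiv (z : Finset ι) (S : ℕ) :
    {f : ι → ℕ // (∀ i, f i = 0 ↔ i ∈ z) ∧ ∑ i, f i = S} ≃
      {g : (zᶜ : Finset ι) → ℕ // (∀ i, g i ≠ 0) ∧ ∑ i, g i = S} where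
  toFun f := ⟨fun i => f.1 i, fun i => by simpa [f.2.1] using mem_compl.1 i.2, by
    obtain ⟨f, hz, rfl⟩ := f
    rw [sum_coe_sort, Fintype.sum_subset]
    intro i hi
    simpa [hz] using hi⟩
  invFun g := ⟨fun i => if h : i ∈ zᶜ then g.1 ⟨i, h⟩ else 0, fun i => by
    by_cases h : i ∈ zᶜ
    · simp only [dif_pos h, g.2.1, false_iff]
      exact mem_compl.1 h
    · simp only [dif_neg h, true_iff]
      simpa using h, by
    obtain ⟨g, hg, rfl⟩ := g
    rw [← Fintype.sum_subset (s := zᶜ), ← sum_coe_sort]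
    · exact sum_congr rfl fun i _ => dif_pos i.2
    · intro i hi
      by_contra h
      exact hi (dif_neg h)⟩
  left_inv f := Subtype.ext <| funext fun i => by
    by_cases h : i ∈ zᶜ
    · exact dif_pos h
    · show dite _ _ _ = _
      rw [dif_neg h, eq_comm, f.2.1]
      simpa using h
  right_inv g := Subtype.ext <| funext fun i => dif_pos i.2

def sigmaZeroSetEquiv (k S : ℕ) :
    {f : ι → ℕ // #{i | f i = 0} = k ∧ ∑ i, f i = S} ≃
      Σ z : {z : Finset ι // #z = k}, {f : ι → ℕ // (∀ i, f i = 0 ↔ i ∈ z.1) ∧ ∑ i, f i = S} where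
  toFun f := ⟨⟨({i | f.1 i = 0} : Finset ι), f.2.1⟩, f.1, fun i => by simp, f.2.2⟩
  invFun p := ⟨p.2.1, by
    obtain ⟨⟨z, rfl⟩, f, hf, -⟩ := p
    congr
    ext i
    simp [hf], p.2.2.2⟩
  left_inv _ := rfl
  right_inv := by
    rintro ⟨⟨z, rfl⟩, f, hf, hS⟩
    obtain rfl : ({i | f i = 0} : Finset ι) = z := by ext i; simp [hf]
    rfl

theorem card_fun_eq_zero_sum (k m s : ℕ) (hι : Fintype.card ι = k + m) :
    Nat.card {f : ι → ℕ // #{i | f i = 0} = k ∧ ∑ i, f i = m + s} =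
      (k + m).choose k * m.multichoose s := by
  have hcompl (z : {z : Finset ι // #z = k}) : Fintype.card (z.1ᶜ : Finset ι) = m := by
    rw [Fintype.card_coe, card_compl, z.2]
    omega
  rw [Nat.card_congr <| (sigmaZeroSetEquiv k (m + s)).trans <| Equiv.sigmaCongrRight fun z =>
      (restrictZeroSetEquiv z.1 _).trans <| (positiveSumEquiv (by rw [hcompl z])).trans
        (Sym.equivNatSumOfFintype _ s).symm,
    Nat.card_eq_fintype_card, Fintype.card_sigma]
  simp only [Sym.card_sym_eq_multichoose, hcompl, sum_const, card_univ, Fintype.card_finset_len,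
    hι, smul_eq_mul]

theorem card_list_length_sum_count_zero (k m s : ℕ) :
    Nat.card {w : List ℕ // w.length = k + m ∧ w.sum = m + s ∧ w.count 0 = k} =
      (k + m).choose k * m.multichoose s := by
  rw [← card_fun_eq_zero_sum k m s (Fintype.card_fin _)]
  refine Nat.card_congr <|
    (Equiv.subtypeSubtypeEquivSubtypeInter (fun w : List ℕ => w.length = k + m) _).symm.trans <|
      (Equiv.vectorEquivFin ℕ (k + m)).subtypeEquiv fun v => ?_
  show _ ↔ #{i | v.get i = 0} = k ∧ ∑ i, v.get i = m + s
  rw [Fin.card_filter_univ_eq_vector_get_eq_count, ← List.sum_ofFn, ← List.Vector.toList_ofFn,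
    List.Vector.ofFn_get]
  exact and_comm

end ZeroSets

theorem inv_mul_choose_mul_choose (j m : ℕ) :
    1 / ((j + m + 1 : ℕ) : ℚ) * (j + m + 1).choose (j + 1) * (j + m + 1).choose j =
      1 / ((j + m + 2 : ℕ) : ℚ) * (j + m + 2).choose (j + 1) * (j + m).choose j := by
  rw [Nat.cast_choose ℚ (by omega : j + 1 ≤ j + m + 1),
    Nat.cast_choose ℚ (by omega : j ≤ j + m + 1), Nat.cast_choose ℚ (by omega : j + 1 ≤ j + m + 2),
    Nat.cast_choose ℚ (by omega : j ≤ j + m),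
    show j + m + 1 - (j + 1) = m by omega, show j + m + 1 - j = m + 1 by omega,
    show j + m + 2 - (j + 1) = m + 1 by omega, show j + m - j = m by omega]
  simp only [show j + m + 2 = j + m + 1 + 1 by ring, Nat.factorial_succ]
  push_cast
  field_simp

/-- The number of plane trees with `l` edges and `k` leaves equals the Narayana number
`N(l,k) = (1/l) · C(l,k) · C(l,k-1)`. -/
theorem planeTree_count_narayana (l k : ℕ) (hk : 1 ≤ k) (hkl : k ≤ l) :
    (Nat.card {t : PlaneTree // t.edges = l ∧ t.leaves = k} : ℚ) =
      (1 / (l : ℚ)) * (l.choose k) * (l.choose (k - 1)) := by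
  obtain ⟨j, rfl⟩ : ∃ j, k = j + 1 := ⟨k - 1, by omega⟩
  obtain ⟨m, rfl⟩ : ∃ m, l = j + m + 1 := ⟨l - (j + 1), by omega⟩
  have hcount : (j + m + 2) * Nat.card {t : PlaneTree // t.edges = j + m + 1 ∧ t.leaves = j + 1} =
      (j + m + 2).choose (j + 1) * (j + m).choose j := by
    rw [PlaneTree.card_edges_leaves (by omega), ← Lukasiewicz.card_sum_add_one_eq_mul_card_isWord
      (fun w r h => (List.rotate_perm w r).count_eq 0 ▸ h)]
    have hwords := card_list_length_sum_count_zero (j + 1) (m + 1) j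
    rw [Nat.multichoose_eq, show m + 1 + j - 1 = j + m by omega,
      show j + 1 + (m + 1) = j + m + 2 by omega] at hwords
    rw [← hwords]
    exact Nat.card_congr (Equiv.subtypeEquivRight fun w => by omega)
  rw [Nat.add_sub_cancel, inv_mul_choose_mul_choose]
  field_simp
  rw [mul_comm]
  exact_mod_cast hcount
end

section
/- The number of noncrossing perfect matchings on 2l points arranged on a line (arcs drawn in the upper half-plane, no two arcs crossing) having exactly k arcs of the form (i,i+1) equals the Narayana number N(l,k) = (1/l) * C(l,k) * C(l,k-1). -/
/-!
A noncrossing perfect matching is determined by its set of left endpoints ("openers"): the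
innermost arc joins the first right endpoint `c` to the last point before `c`, and removing it
leaves a smaller noncrossing matching. The same induction shows that the opener sets that occur
are exactly the ballot sets, in which every initial segment has at least as many openers as
right endpoints. Reading openers as up-steps gives a bijection with Dyck paths of semilength `l`
in which the arcs `(i, i + 1)` become the peaks.

Dyck prefixes with `u` up-steps, `d` down-steps and `k` peaks are counted by splitting off the
last step, which gives Pascal-type recursions in `u` and `d`. The closed form
`ballotFormula` satisfies the same recursions, and at `u = d = l` it is the Narayana number.
-/

/-- `M` is a noncrossing perfect matching on the points `1,…,2l` arranged on a line:
every arc `(i,j)` has `1 ≤ i < j ≤ 2l`, every point lies in exactly one arc, and no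
two arcs cross. -/
def IsNoncrossingPerfectMatching (l : ℕ) (M : Finset (ℕ × ℕ)) : Prop :=
  (∀ p ∈ M, 1 ≤ p.1 ∧ p.1 < p.2 ∧ p.2 ≤ 2 * l) ∧
  (∀ v : ℕ, 1 ≤ v → v ≤ 2 * l → ∃! p, p ∈ M ∧ (p.1 = v ∨ p.2 = v)) ∧
  (∀ p ∈ M, ∀ q ∈ M, ¬ (p.1 < q.1 ∧ q.1 < p.2 ∧ p.2 < q.2))

open Finset

def intChoose (n r : ℤ) : ℚ :=
  if 0 ≤ r ∧ r ≤ n then (n.toNat.choose r.toNat : ℚ) else 0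

@[norm_cast]
lemma intChoose_natCast (n r : ℕ) : intChoose n r = n.choose r := by
  unfold intChoose
  split_ifs with h
  · simp
  · rw [Nat.choose_eq_zero_of_lt (by omega), Nat.cast_zero]

lemma intChoose_add_one_add_one {n : ℤ} (hn : 0 ≤ n) (r : ℤ) :
    intChoose (n + 1) (r + 1) = intChoose n r + intChoose n (r + 1) := by
  lift n to ℕ using hn
  rcases lt_or_ge r 0 with hr | hr
  · obtain rfl | hr : r = -1 ∨ r + 1 < 0 := by omega
    · simp [intChoose]; omega
    · simp [intChoose, show ¬0 ≤ r + 1 by omega, show ¬0 ≤ r by omega]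
  · lift r to ℕ using hr
    exact_mod_cast Nat.choose_succ_succ n r

/-- For `d ≤ u`, `ballotFormula u d k e` counts the lattice paths with `u` up-steps and `d`
down-steps that stay weakly above the axis, have `k` peaks, and end with an up-step iff `e`. -/
def ballotFormula (u d k : ℕ) : Bool → ℚ
  | true => intChoose (u - 1) (k - 1) * intChoose d (k - 1)
      - intChoose u (k - 1) * intChoose (d - 1) (k - 1)
  | false => if u = 0 ∧ d = 0 ∧ k = 0 then 1 else
      intChoose (u - 1) (k - 1) * intChoose d k - intChoose u (k - 1) * intChoose (d - 1) k

lemma ballotFormula_zero_true (u d : ℕ) : ballotFormula u d 0 true = 0 := by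
  simp [ballotFormula, intChoose]

lemma ballotFormula_self_true (u k : ℕ) : ballotFormula u u k true = 0 := by
  rw [ballotFormula]; ring

lemma ballotFormula_zero_false {u : ℕ} (hu : u ≠ 0) (k : ℕ) :
    ballotFormula u 0 k false = 0 := by
  rcases k with _ | k <;> simp [ballotFormula, hu, intChoose]

lemma ballotFormula_succ_true {u d : ℕ} (hd : d ≤ u) (k : ℕ) :
    ballotFormula (u + 1) d (k + 1) true =
      ballotFormula u d (k + 1) true + ballotFormula u d k false := by
  rcases u with _ | u
  · obtain rfl : d = 0 := by omega
    rcases k with _ | k <;> simp [ballotFormula, intChoose]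
  · have h₁ := intChoose_add_one_add_one (n := u) (by omega) (k - 1)
    have h₂ := intChoose_add_one_add_one (n := u + 1) (by omega) (k - 1)
    simp only [ballotFormula, Nat.cast_add, Nat.cast_one, add_sub_cancel_right, sub_add_cancel,
      add_eq_zero, one_ne_zero, and_false, false_and, if_false] at h₁ h₂ ⊢
    linear_combination intChoose d k * h₁ - intChoose (d - 1) k * h₂

lemma ballotFormula_succ_false {u d : ℕ} (hd : d < u) (k : ℕ) :
    ballotFormula u (d + 1) k false =
      ballotFormula u d k true + ballotFormula u d k false := by
  obtain ⟨u, rfl⟩ : ∃ v, u = v + 1 := ⟨u - 1, by omega⟩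
  simp only [ballotFormula, Nat.cast_add, Nat.cast_one, add_sub_cancel_right,
    add_eq_zero, one_ne_zero, and_false, false_and, if_false]
  rcases d with _ | d
  · rcases k with _ | k <;> simp [intChoose]
    rcases k with _ | k <;> simp
  · have h₁ := intChoose_add_one_add_one (n := d + 1) (by omega) (k - 1)
    have h₂ := intChoose_add_one_add_one (n := d) (by omega) (k - 1)
    push_cast at h₁ h₂ ⊢
    simp only [add_sub_cancel_right, sub_add_cancel] at h₁ h₂ ⊢
    linear_combination intChoose u (k - 1) * h₁ - intChoose (u + 1) (k - 1) * h₂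

lemma choose_mul_choose_sub_choose_mul_choose (m j : ℕ) :
    ((m.choose j * (m + 1).choose (j + 1) - (m + 1).choose j * m.choose (j + 1) : ℚ)) * (m + 1) =
      (m + 1).choose (j + 1) * (m + 1).choose j := by
  rcases le_or_gt j m with hj | hj
  · have hA := Nat.add_one_mul_choose_eq m j
    have hB := Nat.add_one_mul_choose_eq m (j + 1)
    have hC := Nat.choose_succ_right_eq (m + 1) j
    have hD := Nat.choose_succ_right_eq (m + 1) (j + 1)
    qify [show j ≤ m + 1 by omega] at hA hB hC
    qify [show j + 1 ≤ m + 1 by omega] at hD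
    linear_combination ((m + 1).choose (j + 1) : ℚ) * hA - ((m + 1).choose j : ℚ) * hB
      + ((m + 1).choose (j + 1) : ℚ) * hC - ((m + 1).choose j : ℚ) * hD
  · simp [Nat.choose_eq_zero_of_lt hj, Nat.choose_eq_zero_of_lt (show m < j + 1 by omega),
      Nat.choose_eq_zero_of_lt (show m + 1 < j + 1 by omega)]

lemma ballotFormula_self_false (l : ℕ) {k : ℕ} (hk : k ≠ 0) :
    ballotFormula l l k false = 1 / l * l.choose k * l.choose (k - 1) := by
  obtain ⟨j, rfl⟩ : ∃ j, k = j + 1 := ⟨k - 1, by omega⟩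
  rcases l with _ | m
  · simp [ballotFormula, intChoose]
  · have := choose_mul_choose_sub_choose_mul_choose m j
    simp only [ballotFormula, Nat.cast_add, Nat.cast_one, add_sub_cancel_right, add_eq_zero,
      one_ne_zero, and_false, if_false]
    rw [← Nat.cast_add_one, ← Nat.cast_add_one]
    simp only [intChoose_natCast, Nat.add_sub_cancel]
    field_simp
    linear_combination this

def peaks (O : Finset ℕ) : Finset ℕ := O.filter (fun i => i + 1 ∉ O)

lemma card_peaks_insert_add_one {O : Finset ℕ} {n : ℕ} (hO : ∀ x ∈ O, x ≤ n) :
    #(peaks (insert (n + 1) O)) = #(peaks O) + if n ∈ O then 0 else 1 := by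
  have hn : n + 1 ∉ (peaks O).erase n := fun h => by
    have := hO _ (filter_subset _ _ (mem_of_mem_erase h)); omega
  have key : peaks (insert (n + 1) O) = insert (n + 1) ((peaks O).erase n) := by
    ext i
    simp only [peaks, mem_filter, mem_insert, mem_erase]
    constructor
    · rintro ⟨hi | hi, hi'⟩
      · exact Or.inl hi
      · exact Or.inr ⟨by omega, hi, fun h => hi' (Or.inr h)⟩
    · rintro (rfl | ⟨hi, hi', hi''⟩)
      · exact ⟨Or.inl rfl, by rintro (h | h) <;> [omega; exact absurd (hO _ h) (by omega)]⟩
      · exact ⟨Or.inr hi', by rintro (h | h) <;> [omega; exact hi'' h]⟩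
  rw [key, card_insert_of_notMem hn]
  split_ifs with h
  · have : n ∈ peaks O := mem_filter.2 ⟨h, fun h' => by have := hO _ h'; omega⟩
    rw [card_erase_of_mem this]
    have := card_pos.2 ⟨n, this⟩
    omega
  · rw [erase_eq_of_notMem (s := peaks O) fun h' => h (filter_subset _ _ h')]

def IsBallot (S O : Finset ℕ) : Prop :=
  ∀ s ∈ S, #(S.filter (· ≤ s)) ≤ 2 * #(O.filter (· ≤ s))

instance (S O : Finset ℕ) : Decidable (IsBallot S O) :=
  inferInstanceAs (Decidable (∀ s ∈ S, _))

lemma isBallot_insert_add_one_iff {S O : Finset ℕ} {n : ℕ} (hS : ∀ x ∈ S, x ≤ n)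
    (hO : O ⊆ insert (n + 1) S) :
    IsBallot (insert (n + 1) S) O ↔ IsBallot S (O.erase (n + 1)) ∧ #S + 1 ≤ 2 * #O := by
  have hnS : n + 1 ∉ S := fun h => by have := hS _ h; omega
  have hle : ∀ x ∈ insert (n + 1) S, x ≤ n + 1 :=
    (forall_mem_insert _ _ _).2 ⟨le_rfl, fun x hx => (hS x hx).trans n.le_succ⟩
  rw [IsBallot, IsBallot, forall_mem_insert, filter_true_of_mem hle,
    filter_true_of_mem fun x hx => hle x (hO hx), card_insert_of_notMem hnS]
  refine and_comm.trans <| and_congr_left fun _ => forall₂_congr fun s hs => ?_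
  have hsn := hS s hs
  rw [filter_insert, if_neg (by omega), filter_erase, erase_eq_of_notMem (by simp; omega)]

/-- A path with `u` up-steps and `d` down-steps is encoded by the set of positions in
`1, …, u + d` of its up-steps; `e` records whether the last step is an up-step. -/
def dyckPrefixes (u d k : ℕ) (e : Bool) : Finset (Finset ℕ) :=
  (Icc 1 (u + d)).powerset.filter fun O =>
    #O = u ∧ IsBallot (Icc 1 (u + d)) O ∧ #(peaks O) = k ∧ (u + d ∈ O ↔ e)

section dyckPrefixes

variable {u d k : ℕ} {e : Bool} {O : Finset ℕ}

lemma mem_dyckPrefixes : O ∈ dyckPrefixes u d k e ↔ O ⊆ Icc 1 (u + d) ∧ #O = u ∧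
    IsBallot (Icc 1 (u + d)) O ∧ #(peaks O) = k ∧ (u + d ∈ O ↔ e) := by
  rw [dyckPrefixes, mem_filter, mem_powerset]

lemma dyckPrefixes_zero_zero (k : ℕ) (e : Bool) :
    dyckPrefixes 0 0 k e = if k = 0 ∧ e = false then {∅} else ∅ := by
  ext O
  rw [mem_dyckPrefixes, Icc_eq_empty (by omega), subset_empty]
  constructor
  · rintro ⟨rfl, -, -, hk, he⟩
    simp_all [peaks]
  · intro h
    split_ifs at h with hke
    · obtain rfl := mem_singleton.1 h
      simp [peaks, hke, IsBallot]
    · simp at h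

lemma dyckPrefixes_zero_true : dyckPrefixes u d 0 true = ∅ := by
  refine eq_empty_of_forall_notMem fun O hO => ?_
  obtain ⟨hOsub, -, -, hk, he⟩ := mem_dyckPrefixes.1 hO
  have htop : u + d ∈ peaks O :=
    mem_filter.2 ⟨by simpa using he, fun h' => by have := mem_Icc.1 (hOsub h'); omega⟩
  simp [card_eq_zero.1 hk] at htop

lemma dyckPrefixes_self_true (hu : u ≠ 0) : dyckPrefixes u u k true = ∅ := by
  refine eq_empty_of_forall_notMem fun O hO => ?_
  obtain ⟨hOsub, hcard, hbal, -, he⟩ := mem_dyckPrefixes.1 hO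
  have hS : (Icc 1 (u + u)).filter (· ≤ u + u - 1) = Icc 1 (u + u - 1) := by
    ext x; simp only [mem_filter, mem_Icc]; omega
  have hO : O.filter (· ≤ u + u - 1) = O.erase (u + u) := by
    ext x
    by_cases hx : x ∈ O
    · have := mem_Icc.1 (hOsub hx)
      simp only [mem_filter, mem_erase, hx, true_and, and_true]
      omega
    · simp [hx]
  have := hbal (u + u - 1) (mem_Icc.2 ⟨by omega, by omega⟩)
  rw [hS, hO, card_erase_of_mem (by simpa using he), hcard, Nat.card_Icc] at this
  omega

lemma dyckPrefixes_zero_false (hu : u ≠ 0) : dyckPrefixes u 0 k false = ∅ := by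
  refine eq_empty_of_forall_notMem fun O hO => ?_
  obtain ⟨hOsub, hcard, -, -, he⟩ := mem_dyckPrefixes.1 hO
  have : O = Icc 1 (u + 0) := eq_of_subset_of_card_le hOsub (by simp [hcard])
  exact absurd (he.1 (by simp [this]; omega)) (by simp)

lemma insert_mem_dyckPrefixes_iff (hd : d ≤ u) (hO : O ⊆ Icc 1 (u + d)) :
    insert (u + d + 1) O ∈ dyckPrefixes (u + 1) d (k + 1) true ↔
      O ∈ dyckPrefixes u d (k + 1) true ∨ O ∈ dyckPrefixes u d k false := by
  have hnO : u + d + 1 ∉ O := fun h => by have := mem_Icc.1 (hO h); omega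
  have hle : ∀ x ∈ O, x ≤ u + d := fun x hx => (mem_Icc.1 (hO hx)).2
  rw [mem_dyckPrefixes, mem_dyckPrefixes, mem_dyckPrefixes, show u + 1 + d = u + d + 1 by ring,
    ← insert_Icc_right_eq_Icc_add_one (by omega),
    isBallot_insert_add_one_iff (fun x hx => (mem_Icc.1 hx).2) (insert_subset_insert _ hO),
    erase_insert hnO, card_peaks_insert_add_one hle, card_insert_of_notMem hnO, Nat.card_Icc]
  by_cases h : u + d ∈ O <;> simp [h, hO, insert_subset_insert _ hO] <;> omega

lemma dyckPrefixes_succ_true (hd : d ≤ u) :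
    dyckPrefixes (u + 1) d (k + 1) true =
      (dyckPrefixes u d (k + 1) true ∪ dyckPrefixes u d k false).image (insert (u + d + 1)) := by
  ext O
  rw [mem_image]
  constructor
  · intro hO
    obtain ⟨hOsub, -, -, -, he⟩ := mem_dyckPrefixes.1 hO
    have htop : u + d + 1 ∈ O := by simpa [add_right_comm] using he
    have hsub : O.erase (u + d + 1) ⊆ Icc 1 (u + d) := fun x hx => by
      have := mem_Icc.1 (hOsub (mem_of_mem_erase hx))
      exact mem_Icc.2 ⟨this.1, by have := ne_of_mem_erase hx; omega⟩
    rw [← insert_erase htop, insert_mem_dyckPrefixes_iff hd hsub] at hO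
    exact ⟨_, mem_union.2 hO, insert_erase htop⟩
  · rintro ⟨O, hO, rfl⟩
    have hsub : O ⊆ Icc 1 (u + d) := by
      rcases mem_union.1 hO with hO | hO <;> exact (mem_dyckPrefixes.1 hO).1
    exact (insert_mem_dyckPrefixes_iff hd hsub).2 (mem_union.1 hO)

lemma dyckPrefixes_succ_false (hd : d < u) :
    dyckPrefixes u (d + 1) k false = dyckPrefixes u d k true ∪ dyckPrefixes u d k false := by
  ext O
  rw [mem_union, mem_dyckPrefixes, mem_dyckPrefixes, mem_dyckPrefixes, ← add_assoc,
    ← insert_Icc_right_eq_Icc_add_one (by omega)]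
  by_cases hO : O ⊆ Icc 1 (u + d)
  · have hnO : u + d + 1 ∉ O := fun h => by have := mem_Icc.1 (hO h); omega
    rw [isBallot_insert_add_one_iff (fun x hx => (mem_Icc.1 hx).2) (hO.trans (subset_insert _ _)),
      erase_eq_of_notMem hnO, Nat.card_Icc]
    by_cases h : u + d ∈ O <;> simp [h, hO, hnO, hO.trans (subset_insert _ _)] <;> omega
  · simp only [hO, false_and, or_self, iff_false]
    rintro ⟨hsub, -, -, -, he⟩
    refine hO fun x hx => ?_
    rcases mem_insert.1 (hsub hx) with rfl | hx'
    · simp at he; exact absurd hx he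
    · exact hx'

lemma disjoint_dyckPrefixes_true_false (u d k k' : ℕ) :
    Disjoint (dyckPrefixes u d k true) (dyckPrefixes u d k' false) :=
  disjoint_left.2 fun _ h h' => Bool.false_ne_true <|
    (mem_dyckPrefixes.1 h').2.2.2.2.1 <| (mem_dyckPrefixes.1 h).2.2.2.2.2 rfl

lemma card_dyckPrefixes_succ_true (hd : d ≤ u) :
    #(dyckPrefixes (u + 1) d (k + 1) true) =
      #(dyckPrefixes u d (k + 1) true) + #(dyckPrefixes u d k false) := by
  rw [dyckPrefixes_succ_true hd, card_image_of_injOn, card_union_of_disjoint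
    (disjoint_dyckPrefixes_true_false ..)]
  have hnotMem : ∀ O ∈ dyckPrefixes u d (k + 1) true ∪ dyckPrefixes u d k false,
      u + d + 1 ∉ O := fun O hO h => by
    rcases mem_union.1 hO with hO | hO <;>
      · have := mem_Icc.1 ((mem_dyckPrefixes.1 hO).1 h); omega
  intro O₁ h₁ O₂ h₂ heq
  rw [← erase_insert (hnotMem O₁ h₁), heq, erase_insert (hnotMem O₂ h₂)]

lemma card_dyckPrefixes_succ_false (hd : d < u) :
    #(dyckPrefixes u (d + 1) k false) =
      #(dyckPrefixes u d k true) + #(dyckPrefixes u d k false) := by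
  rw [dyckPrefixes_succ_false hd, card_union_of_disjoint (disjoint_dyckPrefixes_true_false ..)]

end dyckPrefixes

theorem card_dyckPrefixes {u d : ℕ} (hd : d ≤ u) (k : ℕ) (e : Bool) :
    (#(dyckPrefixes u d k e) : ℚ) = ballotFormula u d k e := by
  induction h : u + d generalizing u d k e with
  | zero =>
    obtain ⟨rfl, rfl⟩ : u = 0 ∧ d = 0 := by omega
    rw [dyckPrefixes_zero_zero]
    cases e
    · rcases k with _ | k <;> simp [ballotFormula, intChoose]
    · simp [ballotFormula_self_true]
  | succ n ih =>
    cases e with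
    | true =>
      rcases k with _ | k
      · rw [dyckPrefixes_zero_true, ballotFormula_zero_true, card_empty, Nat.cast_zero]
      obtain hd | rfl := hd.lt_or_eq
      · obtain ⟨u, rfl⟩ : ∃ v, u = v + 1 := ⟨u - 1, by omega⟩
        rw [card_dyckPrefixes_succ_true (by omega), Nat.cast_add, ih (by omega) _ _ (by omega),
          ih (by omega) _ _ (by omega), ballotFormula_succ_true (by omega)]
      · rw [dyckPrefixes_self_true (by omega), ballotFormula_self_true, card_empty, Nat.cast_zero]
    | false =>
      rcases d with _ | d
      · rw [dyckPrefixes_zero_false (by omega), ballotFormula_zero_false (by omega), card_empty,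
          Nat.cast_zero]
      · rw [card_dyckPrefixes_succ_false (by omega), Nat.cast_add, ih (by omega) _ _ (by omega),
          ih (by omega) _ _ (by omega), ballotFormula_succ_false (by omega)]

structure IsNoncrossingMatchingOn (S : Finset ℕ) (M : Finset (ℕ × ℕ)) : Prop where
  fst_lt_snd : ∀ p ∈ M, p.1 < p.2
  fst_mem : ∀ p ∈ M, p.1 ∈ S
  snd_mem : ∀ p ∈ M, p.2 ∈ S
  existsUnique : ∀ v ∈ S, ∃! p, p ∈ M ∧ (p.1 = v ∨ p.2 = v)
  not_cross : ∀ p ∈ M, ∀ q ∈ M, ¬(p.1 < q.1 ∧ q.1 < p.2 ∧ p.2 < q.2)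

def openers (M : Finset (ℕ × ℕ)) : Finset ℕ := M.image Prod.fst

def closers (M : Finset (ℕ × ℕ)) : Finset ℕ := M.image Prod.snd

namespace IsNoncrossingMatchingOn

variable {S : Finset ℕ} {M : Finset (ℕ × ℕ)} {p q : ℕ × ℕ}

lemma eq_of_fst_eq (h : IsNoncrossingMatchingOn S M) (hp : p ∈ M) (hq : q ∈ M)
    (e : p.1 = q.1) : p = q :=
  (h.existsUnique p.1 (h.fst_mem p hp)).unique ⟨hp, Or.inl rfl⟩ ⟨hq, Or.inl e.symm⟩

lemma eq_of_snd_eq (h : IsNoncrossingMatchingOn S M) (hp : p ∈ M) (hq : q ∈ M)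
    (e : p.2 = q.2) : p = q :=
  (h.existsUnique p.2 (h.snd_mem p hp)).unique ⟨hp, Or.inr rfl⟩ ⟨hq, Or.inr e.symm⟩

lemma fst_ne_snd (h : IsNoncrossingMatchingOn S M) (hp : p ∈ M) (hq : q ∈ M) : p.1 ≠ q.2 := by
  intro e
  obtain rfl : p = q :=
    (h.existsUnique p.1 (h.fst_mem p hp)).unique ⟨hp, Or.inl rfl⟩ ⟨hq, Or.inr e.symm⟩
  exact (h.fst_lt_snd p hp).ne e

lemma openers_union_closers (h : IsNoncrossingMatchingOn S M) : openers M ∪ closers M = S := by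
  ext v
  simp only [openers, closers, mem_union, mem_image]
  constructor
  · rintro (⟨p, hp, rfl⟩ | ⟨p, hp, rfl⟩)
    exacts [h.fst_mem p hp, h.snd_mem p hp]
  · intro hv
    obtain ⟨p, ⟨hp, rfl | rfl⟩, -⟩ := h.existsUnique v hv
    exacts [Or.inl ⟨p, hp, rfl⟩, Or.inr ⟨p, hp, rfl⟩]

lemma disjoint_openers_closers (h : IsNoncrossingMatchingOn S M) :
    Disjoint (openers M) (closers M) := by
  simp only [openers, closers, disjoint_left, mem_image]
  rintro _ ⟨p, hp, rfl⟩ ⟨q, hq, e⟩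
  exact h.fst_ne_snd hp hq e.symm

lemma card_openers (h : IsNoncrossingMatchingOn S M) : #(openers M) = #M :=
  card_image_of_injOn fun _ hp _ hq => h.eq_of_fst_eq hp hq

lemma card_eq (h : IsNoncrossingMatchingOn S M) : #S = 2 * #M := by
  rw [← h.openers_union_closers, card_union_of_disjoint h.disjoint_openers_closers,
    h.card_openers, closers, card_image_of_injOn fun _ hp _ hq => h.eq_of_snd_eq hp hq, two_mul]

lemma isBallot (h : IsNoncrossingMatchingOn S M) : IsBallot S (openers M) := by
  intro s _
  have hsplit : #(S.filter (· ≤ s)) =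
      #((openers M).filter (· ≤ s)) + #((closers M).filter (· ≤ s)) := by
    rw [← card_union_of_disjoint (disjoint_filter_filter h.disjoint_openers_closers),
      ← filter_union, h.openers_union_closers]
  have hcl : #((closers M).filter (· ≤ s)) ≤ #((openers M).filter (· ≤ s)) :=
    calc #((closers M).filter (· ≤ s))
        ≤ #(M.filter (·.2 ≤ s)) := by rw [closers, filter_image]; exact card_image_le
      _ = #((M.filter (·.2 ≤ s)).image Prod.fst) :=
        (card_image_of_injOn fun _ hp _ hq => h.eq_of_fst_eq (filter_subset _ _ hp)
          (filter_subset _ _ hq)).symm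
      _ ≤ #((openers M).filter (· ≤ s)) := by
        rw [openers, filter_image]
        refine card_le_card (image_subset_image fun p hp => ?_)
        rw [mem_filter] at hp ⊢
        exact ⟨hp.1, (h.fst_lt_snd p hp.1).le.trans hp.2⟩
  omega

lemma mk_add_one_mem_iff (h : IsNoncrossingMatchingOn S M) (hS : (S : Set ℕ).OrdConnected)
    (i : ℕ) : (i, i + 1) ∈ M ↔ i ∈ peaks (openers M) := by
  rw [peaks, mem_filter]
  constructor
  · intro hi
    exact ⟨mem_image_of_mem _ hi,
      fun h' => disjoint_left.1 h.disjoint_openers_closers h' (mem_image_of_mem Prod.snd hi)⟩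
  · rintro ⟨hi, hi'⟩
    obtain ⟨p, hp, rfl⟩ := mem_image.1 hi
    have hpS : p.1 + 1 ∈ S := hS.out (h.fst_mem p hp) (h.snd_mem p hp)
      ⟨by omega, h.fst_lt_snd p hp⟩
    rw [← h.openers_union_closers, mem_union, or_iff_right hi'] at hpS
    obtain ⟨q, hq, hq2⟩ := mem_image.1 hpS
    by_cases hq1 : q.1 = p.1
    · rwa [← show q = (p.1, p.1 + 1) from Prod.ext hq1 hq2]
    · have hpq : p ≠ q := fun e => hq1 (e ▸ rfl)
      have := h.fst_lt_snd q hq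
      have := h.fst_lt_snd p hp
      have : p.2 ≠ q.2 := fun e => hpq (h.eq_of_snd_eq hp hq e)
      exact absurd ⟨by omega, by omega, by omega⟩ (h.not_cross q hq p hp)

lemma card_filter_eq_card_peaks (h : IsNoncrossingMatchingOn S M)
    (hS : (S : Set ℕ).OrdConnected) :
    #(M.filter fun p => p.2 = p.1 + 1) = #(peaks (openers M)) := by
  have himage : (M.filter fun p => p.2 = p.1 + 1).image Prod.fst = peaks (openers M) := by
    ext i
    rw [← h.mk_add_one_mem_iff hS, mem_image]
    constructor
    · rintro ⟨p, hp, rfl⟩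
      obtain ⟨hp, e⟩ := mem_filter.1 hp
      rwa [← e]
    · exact fun hi => ⟨_, mem_filter.2 ⟨hi, rfl⟩, rfl⟩
  rw [← himage, card_image_of_injOn fun _ hp _ hq =>
    h.eq_of_fst_eq (filter_subset _ _ hp) (filter_subset _ _ hq)]

lemma mem_of_innermost (h : IsNoncrossingMatchingOn S M) {o c : ℕ} (hc : c ∈ S)
    (hcO : c ∉ openers M) (ho : o ∈ openers M) (hoc : o < c)
    (hgap : ∀ x ∈ S, x < c → x ≤ o) : (o, c) ∈ M := by
  rw [← h.openers_union_closers, mem_union, or_iff_right hcO] at hc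
  obtain ⟨p, hp, rfl⟩ := mem_image.1 hc
  obtain ⟨q, hq, rfl⟩ := mem_image.1 ho
  have hp1 := hgap _ (h.fst_mem p hp) (h.fst_lt_snd p hp)
  have hq12 := h.fst_lt_snd q hq
  obtain hlt | heq := hp1.lt_or_eq
  · exfalso
    obtain h2 | h2 | h2 := lt_trichotomy q.2 p.2
    · have := hgap _ (h.snd_mem q hq) h2; omega
    · obtain rfl := h.eq_of_snd_eq hp hq h2.symm; omega
    · exact h.not_cross p hp q hq ⟨hlt, hoc, h2⟩
  · obtain rfl := h.eq_of_fst_eq hp hq heq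
    exact hp

lemma erase_arc (h : IsNoncrossingMatchingOn S M) {o c : ℕ} (hm : (o, c) ∈ M) :
    IsNoncrossingMatchingOn ((S.erase o).erase c) (M.erase (o, c)) where
  fst_lt_snd p hp := h.fst_lt_snd p (mem_of_mem_erase hp)
  fst_mem p hp := by
    obtain ⟨hne, hp⟩ := mem_erase.1 hp
    exact mem_erase.2 ⟨h.fst_ne_snd hp hm, mem_erase.2
      ⟨fun e => hne (h.eq_of_fst_eq hp hm e), h.fst_mem p hp⟩⟩
  snd_mem p hp := by
    obtain ⟨hne, hp⟩ := mem_erase.1 hp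
    exact mem_erase.2 ⟨fun e => hne (h.eq_of_snd_eq hp hm e), mem_erase.2
      ⟨fun e => h.fst_ne_snd hm hp e.symm, h.snd_mem p hp⟩⟩
  existsUnique v hv := by
    obtain ⟨hvc, hv⟩ := mem_erase.1 hv
    obtain ⟨hvo, hv⟩ := mem_erase.1 hv
    obtain ⟨p, ⟨hp, hpv⟩, huniq⟩ := h.existsUnique v hv
    refine ⟨p, ⟨mem_erase.2 ⟨?_, hp⟩, hpv⟩,
      fun q hq => huniq q ⟨mem_of_mem_erase hq.1, hq.2⟩⟩
    rintro rfl
    rcases hpv with e | e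
    exacts [hvo e.symm, hvc e.symm]
  not_cross p hp q hq := h.not_cross p (mem_of_mem_erase hp) q (mem_of_mem_erase hq)

lemma openers_erase (h : IsNoncrossingMatchingOn S M) {o c : ℕ} (hm : (o, c) ∈ M) :
    openers (M.erase (o, c)) = (openers M).erase o := by
  ext x
  simp only [openers, mem_image, mem_erase]
  constructor
  · rintro ⟨p, ⟨hne, hp⟩, rfl⟩
    exact ⟨fun e => hne (h.eq_of_fst_eq hp hm e), p, hp, rfl⟩
  · rintro ⟨hne, p, hp, rfl⟩
    exact ⟨p, ⟨fun e => hne (by rw [e]), hp⟩, rfl⟩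

lemma insert_arc (h : IsNoncrossingMatchingOn S M) {o c : ℕ} (hoc : o < c) (ho : o ∉ S)
    (hc : c ∉ S) (hgap : ∀ x ∈ S, ¬(o < x ∧ x < c)) :
    IsNoncrossingMatchingOn (insert o (insert c S)) (insert (o, c) M) where
  fst_lt_snd := forall_mem_insert _ _ _ |>.2 ⟨hoc, h.fst_lt_snd⟩
  fst_mem := forall_mem_insert _ _ _ |>.2
    ⟨mem_insert_self _ _, fun p hp => mem_insert_of_mem (mem_insert_of_mem (h.fst_mem p hp))⟩
  snd_mem := forall_mem_insert _ _ _ |>.2 ⟨mem_insert_of_mem (mem_insert_self _ _),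
    fun p hp => mem_insert_of_mem (mem_insert_of_mem (h.snd_mem p hp))⟩
  existsUnique v hv := by
    have hM : ∀ p ∈ M, p.1 ≠ o ∧ p.1 ≠ c ∧ p.2 ≠ o ∧ p.2 ≠ c := fun p hp => by
      have h1 := h.fst_mem p hp
      have h2 := h.snd_mem p hp
      exact ⟨ne_of_mem_of_not_mem h1 ho, ne_of_mem_of_not_mem h1 hc,
        ne_of_mem_of_not_mem h2 ho, ne_of_mem_of_not_mem h2 hc⟩
    rcases mem_insert.1 hv with rfl | hv
    · refine ⟨(v, c), ⟨mem_insert_self _ _, Or.inl rfl⟩, fun q ⟨hq, hqv⟩ => ?_⟩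
      rcases mem_insert.1 hq with rfl | hq
      · rfl
      · have := hM q hq; omega
    rcases mem_insert.1 hv with rfl | hv
    · refine ⟨(o, v), ⟨mem_insert_self _ _, Or.inr rfl⟩, fun q ⟨hq, hqv⟩ => ?_⟩
      rcases mem_insert.1 hq with rfl | hq
      · rfl
      · have := hM q hq; omega
    obtain ⟨p, ⟨hp, hpv⟩, huniq⟩ := h.existsUnique v hv
    refine ⟨p, ⟨mem_insert_of_mem hp, hpv⟩, fun q ⟨hq, hqv⟩ => ?_⟩
    rcases mem_insert.1 hq with rfl | hq
    · rcases hqv with rfl | rfl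
      exacts [absurd hv ho, absurd hv hc]
    · exact huniq q ⟨hq, hqv⟩
  not_cross p hp q hq := by
    rcases mem_insert.1 hp with rfl | hp <;> rcases mem_insert.1 hq with rfl | hq
    · omega
    · exact fun hcross => hgap _ (h.fst_mem q hq) ⟨hcross.1, hcross.2.1⟩
    · exact fun hcross => hgap _ (h.snd_mem p hp) ⟨hcross.2.1, hcross.2.2⟩
    · exact h.not_cross p hp q hq

end IsNoncrossingMatchingOn

namespace IsBallot

variable {S O : Finset ℕ}

lemma exists_innermost (hbal : IsBallot S O) (hOS : O ⊆ S) (hO : #O < #S) :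
    ∃ c ∈ S, c ∉ O ∧ (∀ x ∈ S, x < c → x ∈ O) ∧
      ∃ o ∈ O, o < c ∧ ∀ x ∈ S, x < c → x ≤ o := by
  have hne : (S \ O).Nonempty := by rw [← card_pos, card_sdiff_of_subset hOS]; omega
  obtain ⟨hcS, hcO⟩ := mem_sdiff.1 ((S \ O).min'_mem hne)
  set c := (S \ O).min' hne
  have hbelow : ∀ x ∈ S, x < c → x ∈ O := fun x hx hxc => by_contra fun hxO =>
    ((S \ O).min'_le x (mem_sdiff.2 ⟨hx, hxO⟩)).not_gt hxc
  have hne' : (S.filter (· < c)).Nonempty := by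
    by_contra hemp
    have hO0 : O.filter (· ≤ c) = ∅ := filter_eq_empty_iff.2 fun x hx hxc =>
      hemp ⟨x, mem_filter.2 ⟨hOS hx, lt_of_le_of_ne hxc (ne_of_mem_of_not_mem hx hcO)⟩⟩
    have := hbal c hcS
    rw [hO0, card_empty, mul_zero, Nat.le_zero, card_eq_zero] at this
    exact notMem_empty c (this ▸ mem_filter.2 ⟨hcS, le_rfl⟩)
  obtain ⟨hoS, hoc⟩ := mem_filter.1 ((S.filter (· < c)).max'_mem hne')
  exact ⟨c, hcS, hcO, hbelow, _, hbelow _ hoS hoc, hoc,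
    fun x hx hxc => le_max' _ x (mem_filter.2 ⟨hx, hxc⟩)⟩

lemma erase_erase (hbal : IsBallot S O) (hOS : O ⊆ S) {o c : ℕ} (hc : c ∈ S) (hcO : c ∉ O)
    (hbelow : ∀ x ∈ S, x < c → x ∈ O) (ho : o ∈ O) (hoc : o < c) :
    IsBallot ((S.erase o).erase c) (O.erase o) := by
  intro s hs
  have hb := hbal s (mem_of_mem_erase (mem_of_mem_erase hs))
  rw [filter_erase, filter_erase, filter_erase]
  have hoO : o ∉ O.filter (· ≤ s) ∨ 1 ≤ #(O.filter (· ≤ s)) := by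
    by_cases hos : o ≤ s
    · exact Or.inr (card_pos.2 ⟨o, mem_filter.2 ⟨ho, hos⟩⟩)
    · exact Or.inl fun h => hos (mem_filter.1 h).2
  rcases lt_or_ge s o with hso | hos
  · rw [erase_eq_of_notMem (s := (S.filter (· ≤ s)).erase o) (by simp; omega),
      erase_eq_of_notMem (s := S.filter (· ≤ s)) (by simp; omega),
      erase_eq_of_notMem (s := O.filter (· ≤ s)) (by simp; omega)]
    exact hb
  rcases lt_or_ge s c with hsc | hcs
  · have hSO : S.filter (· ≤ s) = O.filter (· ≤ s) := by
      ext x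
      simp only [mem_filter]
      exact ⟨fun ⟨hx, hxs⟩ => ⟨hbelow x hx (by omega), hxs⟩,
        fun ⟨hx, hxs⟩ => ⟨hOS hx, hxs⟩⟩
    rw [hSO, erase_eq_of_notMem fun h => hcO (mem_filter.1 (mem_of_mem_erase h)).1,
      card_erase_of_mem (mem_filter.2 ⟨ho, hos⟩)]
    omega
  · rw [card_erase_of_mem (mem_erase.2 ⟨by omega, mem_filter.2 ⟨hc, hcs⟩⟩),
      card_erase_of_mem (mem_filter.2 ⟨hOS ho, hos⟩),
      card_erase_of_mem (mem_filter.2 ⟨ho, hos⟩)]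
    omega

end IsBallot

theorem existsUnique_isNoncrossingMatchingOn_openers_eq {S O : Finset ℕ} (hOS : O ⊆ S)
    (hcard : #S = 2 * #O) (hbal : IsBallot S O) :
    ∃! M, IsNoncrossingMatchingOn S M ∧ openers M = O := by
  induction h : #O generalizing S O with
  | zero =>
    obtain rfl := card_eq_zero.1 h
    obtain rfl : S = ∅ := card_eq_zero.1 (by omega)
    have hempty : ∀ M, IsNoncrossingMatchingOn ∅ M → M = ∅ := fun M hM =>
      eq_empty_of_forall_notMem fun p hp => notMem_empty _ (hM.fst_mem p hp)
    exact ⟨∅, ⟨⟨by simp, by simp, by simp, by simp, by simp⟩, rfl⟩,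
      fun M hM => hempty M hM.1⟩
  | succ n ih =>
    obtain ⟨c, hc, hcO, hbelow, o, ho, hoc, hgap⟩ := hbal.exists_innermost hOS (by omega)
    have hoS := hOS ho
    have hcS' : c ∈ S.erase o := mem_erase.2 ⟨by omega, hc⟩
    obtain ⟨M', ⟨hM', hM'O⟩, huniq⟩ := ih (S := (S.erase o).erase c)
      (fun x hx => mem_erase.2 ⟨ne_of_mem_of_not_mem (mem_of_mem_erase hx) hcO,
        erase_subset_erase o hOS hx⟩)
      (by rw [card_erase_of_mem hcS', card_erase_of_mem hoS, card_erase_of_mem ho]; omega)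
      (hbal.erase_erase hOS hc hcO hbelow ho hoc)
      (by rw [card_erase_of_mem ho]; omega)
    refine ⟨insert (o, c) M', ⟨?_, ?_⟩, fun M ⟨hM, hMO⟩ => ?_⟩
    · have := hM'.insert_arc hoc (by simp) (by simp) fun x hx hx' =>
        (hgap x (mem_of_mem_erase (mem_of_mem_erase hx)) hx'.2).not_gt hx'.1
      rwa [insert_erase hcS', insert_erase hoS] at this
    · rw [openers, image_insert, ← openers, hM'O, insert_erase ho]
    · have hm : (o, c) ∈ M := hM.mem_of_innermost hc (hMO ▸ hcO) (hMO ▸ ho) hoc hgap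
      rw [← insert_erase hm, huniq _ ⟨hM.erase_arc hm, by rw [hM.openers_erase hm, hMO]⟩]

lemma isNoncrossingPerfectMatching_iff (l : ℕ) (M : Finset (ℕ × ℕ)) :
    IsNoncrossingPerfectMatching l M ↔ IsNoncrossingMatchingOn (Icc 1 (l + l)) M := by
  rw [IsNoncrossingPerfectMatching, ← two_mul]
  constructor
  · rintro ⟨hM, hcover, hcross⟩
    exact
      { fst_lt_snd := fun p hp => (hM p hp).2.1
        fst_mem := fun p hp => mem_Icc.2 (by have := hM p hp; omega)
        snd_mem := fun p hp => mem_Icc.2 (by have := hM p hp; omega)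
        existsUnique := fun v hv => hcover v (mem_Icc.1 hv).1 (mem_Icc.1 hv).2
        not_cross := hcross }
  · intro h
    refine ⟨fun p hp => ?_, fun v hv hv' => h.existsUnique v (mem_Icc.2 ⟨hv, hv'⟩),
      h.not_cross⟩
    have := mem_Icc.1 (h.fst_mem p hp)
    have := mem_Icc.1 (h.snd_mem p hp)
    have := h.fst_lt_snd p hp
    omega

lemma openers_mem_dyckPrefixes {l : ℕ} {M : Finset (ℕ × ℕ)}
    (h : IsNoncrossingMatchingOn (Icc 1 (l + l)) M) :
    openers M ∈ dyckPrefixes l l #(M.filter fun p => p.2 = p.1 + 1) false := by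
  have hcard := h.card_eq
  rw [Nat.card_Icc] at hcard
  refine mem_dyckPrefixes.2 ⟨fun x hx => ?_, by rw [h.card_openers]; omega, h.isBallot,
    (h.card_filter_eq_card_peaks (by rw [coe_Icc]; exact Set.ordConnected_Icc)).symm, ?_⟩
  · obtain ⟨p, hp, rfl⟩ := mem_image.1 hx
    exact h.fst_mem p hp
  · simp only [Bool.false_eq_true, iff_false]
    intro hx
    obtain ⟨p, hp, e⟩ := mem_image.1 hx
    have := h.fst_lt_snd p hp
    have := mem_Icc.1 (h.snd_mem p hp)
    omega

theorem card_noncrossingPerfectMatchings (l k : ℕ) :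
    Nat.card {M : Finset (ℕ × ℕ) // IsNoncrossingPerfectMatching l M ∧
      #(M.filter fun p => p.2 = p.1 + 1) = k} = #(dyckPrefixes l l k false) := by
  rw [← Nat.card_eq_finsetCard]
  refine Nat.card_eq_of_bijective (fun M => ⟨openers M.1, ?_⟩) ⟨?_, ?_⟩
  · obtain ⟨M, hM, rfl⟩ := M
    exact openers_mem_dyckPrefixes ((isNoncrossingPerfectMatching_iff l M).1 hM)
  · rintro ⟨M₁, hM₁, _⟩ ⟨M₂, hM₂, _⟩ he
    rw [isNoncrossingPerfectMatching_iff] at hM₁ hM₂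
    obtain ⟨hsub, hcard, hbal, -⟩ := mem_dyckPrefixes.1 (openers_mem_dyckPrefixes hM₁)
    have hcardS : #(Icc 1 (l + l)) = 2 * #(openers M₁) := by rw [Nat.card_Icc, hcard]; omega
    exact Subtype.ext <|
      (existsUnique_isNoncrossingMatchingOn_openers_eq hsub hcardS hbal).unique
        ⟨hM₁, rfl⟩ ⟨hM₂, (congrArg Subtype.val he).symm⟩
  · rintro ⟨O, hO⟩
    obtain ⟨hsub, hcard, hbal, hpeaks, -⟩ := mem_dyckPrefixes.1 hO
    have hcardS : #(Icc 1 (l + l)) = 2 * #O := by rw [Nat.card_Icc, hcard]; omega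
    obtain ⟨M, ⟨hM, rfl⟩, -⟩ :=
      existsUnique_isNoncrossingMatchingOn_openers_eq hsub hcardS hbal
    refine ⟨⟨M, (isNoncrossingPerfectMatching_iff l M).2 hM, ?_⟩, rfl⟩
    rw [hM.card_filter_eq_card_peaks (by rw [coe_Icc]; exact Set.ordConnected_Icc), hpeaks]

theorem noncrossing_matching_one_arcs_narayana_general (l k : ℕ) (hk : 1 ≤ k) :
    (Nat.card {M : Finset (ℕ × ℕ) // IsNoncrossingPerfectMatching l M ∧
        (M.filter (fun p => p.2 = p.1 + 1)).card = k} : ℚ) =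
      (1 / (l : ℚ)) * (l.choose k) * (l.choose (k - 1)) := by
  rw [card_noncrossingPerfectMatchings, card_dyckPrefixes le_rfl,
    ballotFormula_self_false l (by omega)]

/-- The number of noncrossing perfect matchings on `2l` points with exactly `k` arcs of the
form `(i,i+1)` equals the Narayana number `N(l,k) = (1/l)·C(l,k)·C(l,k-1)`. -/
theorem noncrossing_matching_one_arcs_narayana (l k : ℕ) (hk : 1 ≤ k) (hkl : k ≤ l) :
    (Nat.card {M : Finset (ℕ × ℕ) // IsNoncrossingPerfectMatching l M ∧
        (M.filter (fun p => p.2 = p.1 + 1)).card = k} : ℚ) =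
      (1 / (l : ℚ)) * (l.choose k) * (l.choose (k - 1)) :=
  noncrossing_matching_one_arcs_narayana_general l k hk
end

section
/- For λ = 2, the number of RNA secondary structures on n vertices with exactly l ≥ 1 arcs and minimum arc-length 2 equals (1/l) * C(n-l, l+1) * C(n-l-1, l-1). -/
/-- `M` is an RNA secondary structure on vertices `1,…,n` with minimum arc-length 2:
every arc `(i,j)` satisfies `1 ≤ i`, `j ≤ n` and `j - i ≥ 2`; no two arcs share a vertex;
and no two arcs cross. -/
def IsSecStr2 (n : ℕ) (M : Finset (ℕ × ℕ)) : Prop :=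
  (∀ p ∈ M, 1 ≤ p.1 ∧ p.1 + 2 ≤ p.2 ∧ p.2 ≤ n) ∧
  (∀ p ∈ M, ∀ q ∈ M, p ≠ q → p.1 ≠ q.1 ∧ p.1 ≠ q.2 ∧ p.2 ≠ q.1 ∧ p.2 ≠ q.2) ∧
  (∀ p ∈ M, ∀ q ∈ M, ¬ (p.1 < q.1 ∧ q.1 < p.2 ∧ p.2 < q.2))

/-!
Record a structure by the sets `L` and `R` of left and right endpoints of its arcs. As arcs
do not cross, the arc closing at the least `j ∈ R` opens at the greatest `i ∈ L` below `j`;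
removing it and recursing shows that `(L, R)` determines the structure, and that the pairs
which occur are exactly those where every initial segment `1, …, x` contains at least as many
points of `L` as of `R`, and no `i ∈ L` has `i + 1 ∈ R` (arc length at least 2).

Sorting these pairs by the role of the last vertex (unpaired, in `L`, in `R`) gives a
Pascal-type recursion, in which one also records whether the last vertex lies in `L`. With
`a` left and `b` right endpoints and `g + 1` unpaired vertices it is solved by the
reflection-type difference `C(b+g, g) C(a+g+1, g+1) - C(b+g, g+1) C(a+g+1, g)`, which for
`a = b = l` is the stated formula; for `n ≤ 2l` both sides vanish.
-/

namespace Finset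

lemma card_eq_card_filter_add_add {α : Type*} {s : Finset α} (P Q : α → Prop) [DecidablePred P]
    [DecidablePred Q] (h : ∀ x ∈ s, ¬(P x ∧ Q x)) :
    #s = #{x ∈ s | ¬P x ∧ ¬Q x} + #{x ∈ s | P x} + #{x ∈ s | Q x} := by
  have hP := card_filter_add_card_filter_not (s := s) P
  have hQ := card_filter_add_card_filter_not (s := {x ∈ s | ¬P x}) Q
  rw [filter_filter, filter_filter,
    filter_congr fun x hx => show ¬P x ∧ Q x ↔ Q x from
      ⟨And.right, fun hq => ⟨fun hp => h x hx ⟨hp, hq⟩, hq⟩⟩]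
    at hQ
  change #s = _ + #(filter P s) + #(filter Q s)
  omega

lemma image_erase_of_injOn {α β : Type*} [DecidableEq α] [DecidableEq β] {s : Finset α}
    {f : α → β} (hf : Set.InjOn f s) {a : α} (ha : a ∈ s) :
    (s.erase a).image f = (s.image f).erase (f a) := by
  rw [erase_eq, erase_eq, image_sdiff_of_injOn hf (singleton_subset_iff.mpr ha), image_singleton]

end Finset

open Finset

namespace SecStr2

lemma subset_Icc_of_notMem {s : Finset ℕ} {n : ℕ} (hs : s ⊆ Icc 1 (n + 1))
    (hn : n + 1 ∉ s) : s ⊆ Icc 1 n :=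
  (subset_insert_iff_of_notMem hn).mp (by rwa [insert_Icc_right_eq_Icc_add_one (by omega)])

lemma succ_notMem_of_subset_Icc {s : Finset ℕ} {n : ℕ} (hs : s ⊆ Icc 1 n) : n + 1 ∉ s :=
  fun hn => by simpa using (mem_Icc.mp (hs hn)).2

lemma filter_le_eq_self {s : Finset ℕ} {n x : ℕ} (hs : s ⊆ Icc 1 n) (hx : n ≤ x) :
    {r ∈ s | r ≤ x} = s :=
  filter_true_of_mem fun _ hr => (mem_Icc.mp (hs hr)).2.trans hx

lemma filter_le_insert_of_lt {s : Finset ℕ} {v x : ℕ} (hx : x < v) :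
    {r ∈ insert v s | r ≤ x} = {r ∈ s | r ≤ x} := by
  rw [filter_insert, if_neg (by omega)]

structure IsBallotPair (n : ℕ) (L R : Finset ℕ) : Prop where
  left_subset : L ⊆ Icc 1 n
  right_subset : R ⊆ Icc 1 n
  disjoint : Disjoint L R
  ballot : ∀ x, #{r ∈ R | r ≤ x} ≤ #{i ∈ L | i ≤ x}
  succ_notMem : ∀ i ∈ L, i + 1 ∉ R

namespace IsBallotPair

variable {n : ℕ} {L R : Finset ℕ}

lemma card_right_le (h : IsBallotPair n L R) : #R ≤ #L := by
  simpa only [filter_le_eq_self h.left_subset le_rfl, filter_le_eq_self h.right_subset le_rfl]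
    using h.ballot n

lemma mono (h : IsBallotPair n L R) {m : ℕ} (hnm : n ≤ m) : IsBallotPair m L R :=
  ⟨h.left_subset.trans (Icc_subset_Icc_right hnm),
    h.right_subset.trans (Icc_subset_Icc_right hnm), h.disjoint, h.ballot, h.succ_notMem⟩

lemma of_succ (h : IsBallotPair (n + 1) L R) (hL : n + 1 ∉ L) (hR : n + 1 ∉ R) :
    IsBallotPair n L R :=
  ⟨subset_Icc_of_notMem h.left_subset hL, subset_Icc_of_notMem h.right_subset hR,
    h.disjoint, h.ballot, h.succ_notMem⟩

lemma insert_left (h : IsBallotPair n L R) : IsBallotPair (n + 1) (insert (n + 1) L) R := by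
  have hR := succ_notMem_of_subset_Icc h.right_subset
  refine ⟨insert_subset (by simp) (h.left_subset.trans (Icc_subset_Icc_right (by omega))),
    (h.mono n.le_succ).right_subset, disjoint_insert_left.mpr ⟨hR, h.disjoint⟩,
    fun x => (h.ballot x).trans (card_le_card (filter_subset_filter _ (subset_insert _ _))), ?_⟩
  intro i hi hR'
  rcases mem_insert.mp hi with rfl | hi
  · have := (mem_Icc.mp (h.right_subset hR')).2
    omega
  · exact h.succ_notMem i hi hR'

lemma erase_left (h : IsBallotPair (n + 1) L R) (hn : n + 1 ∈ L) :
    IsBallotPair n (L.erase (n + 1)) R := by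
  have hR : R ⊆ Icc 1 n := subset_Icc_of_notMem h.right_subset (disjoint_left.mp h.disjoint hn)
  refine ⟨subset_Icc_of_notMem ((erase_subset _ _).trans h.left_subset) (notMem_erase _ _), hR,
    disjoint_of_subset_left (erase_subset _ _) h.disjoint, fun x => ?_,
    fun i hi => h.succ_notMem i (mem_of_mem_erase hi)⟩
  calc #{r ∈ R | r ≤ x} = #{r ∈ R | r ≤ min x n} := by
        congr 1
        refine filter_congr fun r hr => ?_
        have := (mem_Icc.mp (hR hr)).2
        omega
    _ ≤ #{i ∈ L | i ≤ min x n} := h.ballot _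
    _ ≤ #{i ∈ L.erase (n + 1) | i ≤ x} := by
        refine card_le_card fun i hi => ?_
        simp only [mem_filter, mem_erase] at hi ⊢
        exact ⟨⟨by omega, hi.1⟩, by omega⟩

lemma insert_right (h : IsBallotPair n L R) (hn : n ∉ L) (hc : #R < #L) :
    IsBallotPair (n + 1) L (insert (n + 1) R) := by
  have hL := succ_notMem_of_subset_Icc h.left_subset
  refine ⟨(h.mono n.le_succ).left_subset,
    insert_subset (by simp) (h.right_subset.trans (Icc_subset_Icc_right (by omega))),
    disjoint_insert_right.mpr ⟨hL, h.disjoint⟩, fun x => ?_, ?_⟩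
  · rcases lt_or_ge x (n + 1) with hx | hx
    · rw [filter_le_insert_of_lt hx]
      exact h.ballot x
    · rw [filter_le_eq_self h.left_subset (by omega)]
      exact (card_filter_le _ _).trans ((card_insert_le _ _).trans hc)
  · rintro i hi hi'
    rcases mem_insert.mp hi' with hi' | hi'
    · exact hn (by rwa [show n = i by omega])
    · exact h.succ_notMem i hi hi'

lemma erase_right (h : IsBallotPair (n + 1) L R) (hn : n + 1 ∈ R) :
    IsBallotPair n L (R.erase (n + 1)) :=
  ⟨subset_Icc_of_notMem h.left_subset (disjoint_right.mp h.disjoint hn),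
    subset_Icc_of_notMem ((erase_subset _ _).trans h.right_subset) (notMem_erase _ _),
    disjoint_of_subset_right (erase_subset _ _) h.disjoint,
    fun x => (card_le_card (filter_subset_filter _ (erase_subset _ _))).trans (h.ballot x),
    fun i hi hi' => h.succ_notMem i hi (mem_of_mem_erase hi')⟩

lemma erase_erase (h : IsBallotPair n L R) {i j : ℕ} (hi : i ∈ L) (hj : j ∈ R) (hij : i < j)
    (hmin : ∀ r ∈ R, j ≤ r) : IsBallotPair n (L.erase i) (R.erase j) := by
  refine ⟨(erase_subset _ _).trans h.left_subset, (erase_subset _ _).trans h.right_subset,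
    disjoint_of_subset_left (erase_subset _ _) (disjoint_of_subset_right (erase_subset _ _)
      h.disjoint), fun x => ?_,
    fun k hk hk' => h.succ_notMem k (mem_of_mem_erase hk) (mem_of_mem_erase hk')⟩
  rcases lt_or_ge x j with hx | hx
  · rw [card_eq_zero.mpr (filter_eq_empty_iff.mpr fun r hr => ?_)]
    · exact Nat.zero_le _
    · have := hmin r (mem_of_mem_erase hr)
      omega
  · rw [filter_erase, filter_erase, card_erase_of_mem (mem_filter.mpr ⟨hj, hx⟩),
      card_erase_of_mem (mem_filter.mpr ⟨hi, by omega⟩)]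
    exact Nat.sub_le_sub_right (h.ballot x) 1

end IsBallotPair

lemma isBallotPair_zero {L R : Finset ℕ} : IsBallotPair 0 L R ↔ L = ∅ ∧ R = ∅ := by
  constructor
  · intro h
    exact ⟨subset_empty.mp h.left_subset, subset_empty.mp h.right_subset⟩
  · rintro ⟨rfl, rfl⟩
    exact ⟨empty_subset _, empty_subset _, disjoint_empty_left _, by simp, by simp⟩

-- With `t = true`, vertex `n` must not be a left endpoint, so that `n + 1` may become a right one.
open Classical in
noncomputable def ballotPairs (n a b : ℕ) (t : Bool) : Finset (Finset ℕ × Finset ℕ) :=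
  {p ∈ (Icc 1 n).powerset ×ˢ (Icc 1 n).powerset |
    IsBallotPair n p.1 p.2 ∧ #p.1 = a ∧ #p.2 = b ∧ (t → n ∉ p.1)}

lemma mem_ballotPairs {n a b : ℕ} {t : Bool} {p : Finset ℕ × Finset ℕ} :
    p ∈ ballotPairs n a b t ↔
      IsBallotPair n p.1 p.2 ∧ #p.1 = a ∧ #p.2 = b ∧ (t → n ∉ p.1) := by
  simp only [ballotPairs, mem_filter, mem_product, mem_powerset]
  exact ⟨And.right, fun h => ⟨⟨h.1.left_subset, h.1.right_subset⟩, h⟩⟩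

lemma card_ballotPairs_zero (a b : ℕ) (t : Bool) :
    #(ballotPairs 0 a b t) = if a = 0 ∧ b = 0 then 1 else 0 := by
  split_ifs with h
  · obtain ⟨rfl, rfl⟩ := h
    refine card_eq_one.mpr
      ⟨(∅, ∅), eq_singleton_iff_unique_mem.mpr ⟨?_, fun p hp => ?_⟩⟩
    · exact mem_ballotPairs.mpr ⟨isBallotPair_zero.mpr ⟨rfl, rfl⟩, rfl, rfl, by simp⟩
    · obtain ⟨hL, hR⟩ := isBallotPair_zero.mp (mem_ballotPairs.mp hp).1
      exact Prod.ext hL hR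
  · refine card_eq_zero.mpr (eq_empty_iff_forall_notMem.mpr fun p hp => h ?_)
    obtain ⟨hpair, rfl, rfl, -⟩ := mem_ballotPairs.mp hp
    obtain ⟨hL, hR⟩ := isBallotPair_zero.mp hpair
    simp [hL, hR]

lemma card_ballotPairs_succ_filter_notMem (n a b : ℕ) (t : Bool) :
    #{p ∈ ballotPairs (n + 1) a b t | n + 1 ∉ p.1 ∧ n + 1 ∉ p.2} =
      #(ballotPairs n a b false) := by
  congr 1
  ext p
  simp only [mem_filter, mem_ballotPairs]
  constructor
  · rintro ⟨⟨h, ha, hb, -⟩, hL, hR⟩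
    exact ⟨h.of_succ hL hR, ha, hb, by simp⟩
  · rintro ⟨h, ha, hb, -⟩
    have hL := succ_notMem_of_subset_Icc h.left_subset
    exact ⟨⟨h.mono n.le_succ, ha, hb, fun _ => hL⟩, hL,
      succ_notMem_of_subset_Icc h.right_subset⟩

lemma card_ballotPairs_succ_filter_mem_left (n a b : ℕ) (t : Bool) :
    #{p ∈ ballotPairs (n + 1) a b t | n + 1 ∈ p.1} =
      if t = false ∧ 0 < a then #(ballotPairs n (a - 1) b false) else 0 := by
  split_ifs with h
  · obtain ⟨rfl, ha⟩ := h
    refine card_nbij' (fun p => (p.1.erase (n + 1), p.2)) (fun q => (insert (n + 1) q.1, q.2))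
      (fun p hp => ?_) (fun q hq => ?_) (fun p hp => ?_) (fun q hq => ?_)
    · rw [mem_coe, mem_filter, mem_ballotPairs] at hp
      obtain ⟨⟨h, rfl, rfl, -⟩, hn⟩ := hp
      exact mem_ballotPairs.mpr ⟨h.erase_left hn, card_erase_of_mem hn, rfl, by simp⟩
    · obtain ⟨h, ha', hb, -⟩ := mem_ballotPairs.mp hq
      refine mem_filter.mpr ⟨mem_ballotPairs.mpr ⟨h.insert_left, ?_, hb, by simp⟩,
        mem_insert_self _ _⟩
      rw [card_insert_of_notMem (succ_notMem_of_subset_Icc h.left_subset)]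
      omega
    · exact Prod.ext (insert_erase (mem_filter.mp hp).2) rfl
    · exact Prod.ext (erase_insert (succ_notMem_of_subset_Icc
        (mem_ballotPairs.mp hq).1.left_subset)) rfl
  · refine card_eq_zero.mpr (filter_eq_empty_iff.mpr fun p hp hn => h ?_)
    obtain ⟨-, ha, -, ht⟩ := mem_ballotPairs.mp hp
    refine ⟨by simpa using mt ht (not_not.mpr hn), ?_⟩
    exact ha ▸ card_pos.mpr ⟨n + 1, hn⟩

lemma card_ballotPairs_succ_filter_mem_right (n a b : ℕ) (t : Bool) :
    #{p ∈ ballotPairs (n + 1) a b t | n + 1 ∈ p.2} =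
      if 0 < b ∧ b ≤ a then #(ballotPairs n a (b - 1) true) else 0 := by
  split_ifs with hab
  · refine card_nbij' (fun p => (p.1, p.2.erase (n + 1))) (fun q => (q.1, insert (n + 1) q.2))
      (fun p hp => ?_) (fun q hq => ?_) (fun p hp => ?_) (fun q hq => ?_)
    · rw [mem_coe, mem_filter, mem_ballotPairs] at hp
      obtain ⟨⟨h, rfl, rfl, -⟩, hn⟩ := hp
      exact mem_ballotPairs.mpr ⟨h.erase_right hn, rfl, card_erase_of_mem hn,
        fun _ hn' => h.succ_notMem n hn' hn⟩
    · obtain ⟨h', rfl, hb, hn⟩ := mem_ballotPairs.mp hq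
      have hR := succ_notMem_of_subset_Icc h'.right_subset
      refine mem_filter.mpr ⟨mem_ballotPairs.mpr ⟨h'.insert_right (hn rfl) (by omega), rfl, ?_,
        fun _ => succ_notMem_of_subset_Icc h'.left_subset⟩, mem_insert_self _ _⟩
      rw [card_insert_of_notMem hR]
      omega
    · exact Prod.ext rfl (insert_erase (mem_filter.mp hp).2)
    · exact Prod.ext rfl (erase_insert (succ_notMem_of_subset_Icc
        (mem_ballotPairs.mp hq).1.right_subset))
  · refine card_eq_zero.mpr (filter_eq_empty_iff.mpr fun p hp hn => hab ?_)
    obtain ⟨hpair, rfl, rfl, -⟩ := mem_ballotPairs.mp hp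
    exact ⟨card_pos.mpr ⟨n + 1, hn⟩, hpair.card_right_le⟩

lemma card_ballotPairs_succ (n a b : ℕ) (t : Bool) :
    #(ballotPairs (n + 1) a b t) = #(ballotPairs n a b false) +
      (if t = false ∧ 0 < a then #(ballotPairs n (a - 1) b false) else 0) +
      (if 0 < b ∧ b ≤ a then #(ballotPairs n a (b - 1) true) else 0) := by
  rw [card_eq_card_filter_add_add (fun p => n + 1 ∈ p.1) (fun p => n + 1 ∈ p.2)
    fun p hp hn => disjoint_left.mp (mem_ballotPairs.mp hp).1.disjoint hn.1 hn.2,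
    card_ballotPairs_succ_filter_notMem, card_ballotPairs_succ_filter_mem_left,
    card_ballotPairs_succ_filter_mem_right]

lemma card_ballotPairs_eq_zero_of_lt_add {n a b : ℕ} {t : Bool} (h : n < a + b) :
    #(ballotPairs n a b t) = 0 := by
  induction n generalizing a b t with
  | zero => rw [card_ballotPairs_zero, if_neg (by omega)]
  | succ n ih =>
    rw [card_ballotPairs_succ, ih (a := a) (by omega), ih (a := a - 1) (by omega),
      ih (b := b - 1) (by omega)]
    simp

lemma card_ballotPairs_eq_zero_of_lt {n a b : ℕ} {t : Bool} (h : a < b) :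
    #(ballotPairs n a b t) = 0 := by
  induction n generalizing a b t with
  | zero => rw [card_ballotPairs_zero, if_neg (by omega)]
  | succ n ih =>
    rw [card_ballotPairs_succ, ih h, ih (a := a - 1) (by omega),
      if_neg (show ¬(0 < b ∧ b ≤ a) by omega)]
    simp

lemma card_ballotPairs_add (a b : ℕ) (t : Bool) :
    #(ballotPairs (a + b) a b t) = if b = 0 ∧ (t → a = 0) then 1 else 0 := by
  induction h : a + b generalizing a b t with
  | zero =>
    obtain ⟨rfl, rfl⟩ : a = 0 ∧ b = 0 := by omega
    simp [card_ballotPairs_zero]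
  | succ m ih =>
    rw [card_ballotPairs_succ, card_ballotPairs_eq_zero_of_lt_add (by omega)]
    rcases a with _ | a <;> rcases b with _ | b
    · omega
    · simp
    · cases t <;> simp [ih a 0 false (by omega)]
    · simp [ih a (b + 1) false (by omega), ih (a + 1) b true (by omega)]

lemma card_ballotPairs_eq_zero_of_le {n a b : ℕ} {t : Bool} (hn : n ≤ a + b) (hb : 0 < b) :
    #(ballotPairs n a b t) = 0 := by
  rcases hn.lt_or_eq with hn | rfl
  · exact card_ballotPairs_eq_zero_of_lt_add hn
  · rw [card_ballotPairs_add, if_neg (by omega)]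

end SecStr2

namespace IsSecStr2

variable {n : ℕ} {M : Finset (ℕ × ℕ)}

lemma mono (h : IsSecStr2 n M) {M' : Finset (ℕ × ℕ)} (hM' : M' ⊆ M) : IsSecStr2 n M' :=
  ⟨fun p hp => h.1 p (hM' hp), fun p hp q hq => h.2.1 p (hM' hp) q (hM' hq),
    fun p hp q hq => h.2.2 p (hM' hp) q (hM' hq)⟩

lemma injOn_fst (h : IsSecStr2 n M) : Set.InjOn Prod.fst (M : Set (ℕ × ℕ)) :=
  fun p hp q hq hpq => by_contra fun hne => (h.2.1 p hp q hq hne).1 hpq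

lemma injOn_snd (h : IsSecStr2 n M) : Set.InjOn Prod.snd (M : Set (ℕ × ℕ)) :=
  fun p hp q hq hpq => by_contra fun hne => (h.2.1 p hp q hq hne).2.2.2 hpq

lemma isGreatest_fst (h : IsSecStr2 n M) {p : ℕ × ℕ} (hp : p ∈ M)
    (hmin : ∀ q ∈ M, p.2 ≤ q.2) :
    IsGreatest {i | i ∈ M.image Prod.fst ∧ i < p.2} p.1 := by
  refine ⟨⟨mem_image_of_mem _ hp, by have := h.1 p hp; omega⟩, ?_⟩
  rintro _ ⟨hi, hip⟩
  obtain ⟨q, hq, rfl⟩ := mem_image.mp hi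
  by_contra! hpq
  have hne : q ≠ p := fun he => by rw [he] at hpq; omega
  have := (h.2.1 p hp q hq hne.symm).2.2.2
  exact h.2.2 p hp q hq ⟨hpq, hip, lt_of_le_of_ne (hmin q hq) this⟩

lemma isBallotPair (h : IsSecStr2 n M) :
    SecStr2.IsBallotPair n (M.image Prod.fst) (M.image Prod.snd) := by
  refine ⟨?_, ?_, ?_, fun x => ?_, ?_⟩
  · simp only [subset_iff, mem_image, mem_Icc]
    rintro _ ⟨p, hp, rfl⟩
    have := h.1 p hp
    omega
  · simp only [subset_iff, mem_image, mem_Icc]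
    rintro _ ⟨p, hp, rfl⟩
    have := h.1 p hp
    omega
  · simp only [disjoint_left, mem_image]
    rintro _ ⟨p, hp, rfl⟩ ⟨q, hq, hqp⟩
    by_cases hpq : p = q
    · subst hpq
      have := h.1 p hp
      omega
    · exact (h.2.1 p hp q hq hpq).2.1 hqp.symm
  · calc #{r ∈ M.image Prod.snd | r ≤ x} = #{q ∈ M | q.2 ≤ x} := by
          rw [filter_image, card_image_of_injOn (h.injOn_snd.mono (filter_subset _ _))]
      _ = #({q ∈ M | q.2 ≤ x}.image Prod.fst) :=
          (card_image_of_injOn (h.injOn_fst.mono (filter_subset _ _))).symm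
      _ ≤ #{i ∈ M.image Prod.fst | i ≤ x} := by
          refine card_le_card ?_
          simp only [subset_iff, mem_image, mem_filter]
          rintro _ ⟨q, ⟨hq, hqx⟩, rfl⟩
          have := h.1 q hq
          exact ⟨⟨q, hq, rfl⟩, by omega⟩
  · simp only [mem_image]
    rintro _ ⟨p, hp, rfl⟩ ⟨q, hq, hqp⟩
    have := h.1 p hp
    have := h.1 q hq
    exact h.2.2 q hq p hp ⟨by omega, by omega, by omega⟩

lemma eq_of_image_eq {M' : Finset (ℕ × ℕ)} (h : IsSecStr2 n M) (h' : IsSecStr2 n M')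
    (hfst : M.image Prod.fst = M'.image Prod.fst) (hsnd : M.image Prod.snd = M'.image Prod.snd) :
    M = M' := by
  induction hk : #M generalizing M M' with
  | zero =>
    rw [card_eq_zero.mp hk, image_empty, eq_comm, image_eq_empty] at hfst
    rw [card_eq_zero.mp hk, hfst]
  | succ k ih =>
    have hne : (M.image Prod.snd).Nonempty := (card_pos.mp (by omega)).image _
    set j := (M.image Prod.snd).min' hne
    obtain ⟨p, hp, hpj⟩ := mem_image.mp ((M.image Prod.snd).min'_mem hne)
    obtain ⟨p', hp', hp'j⟩ : ∃ p' ∈ M', p'.2 = j :=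
      mem_image.mp (by rw [← hsnd]; exact min'_mem _ hne)
    have hmin : ∀ q ∈ M, p.2 ≤ q.2 := fun q hq => hpj ▸ min'_le _ _ (mem_image_of_mem _ hq)
    have hmin' : ∀ q ∈ M', p'.2 ≤ q.2 := fun q hq =>
      hp'j ▸ min'_le _ _ (hsnd ▸ mem_image_of_mem _ hq)
    have hpp' : p = p' := by
      have h₂ : p.2 = p'.2 := hpj.trans hp'j.symm
      refine Prod.ext ((h.isGreatest_fst hp hmin).unique ?_) h₂
      rw [hfst, h₂]
      exact h'.isGreatest_fst hp' hmin'
    subst hpp'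
    have herase := ih (h.mono (erase_subset p M)) (h'.mono (erase_subset p M'))
      (by rw [image_erase_of_injOn h.injOn_fst hp, image_erase_of_injOn h'.injOn_fst hp', hfst])
      (by rw [image_erase_of_injOn h.injOn_snd hp, image_erase_of_injOn h'.injOn_snd hp', hsnd])
      (by rw [card_erase_of_mem hp, hk]; rfl)
    rw [← insert_erase hp, ← insert_erase hp', herase]

lemma insert {i j : ℕ} (h : IsSecStr2 n M) (hi : 1 ≤ i) (hij : i + 2 ≤ j) (hj : j ≤ n)
    (hM : ∀ q ∈ M, (q.1 < i ∨ j < q.1) ∧ j < q.2) : IsSecStr2 n (insert (i, j) M) := by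
  refine ⟨?_, ?_, ?_⟩
  · intro p hp
    rcases mem_insert.mp hp with rfl | hp
    · exact ⟨hi, hij, hj⟩
    · exact h.1 p hp
  · intro p hp q hq hpq
    rcases mem_insert.mp hp with rfl | hp <;> rcases mem_insert.mp hq with rfl | hq
    · exact absurd rfl hpq
    · have := hM q hq
      have := h.1 q hq
      refine ⟨?_, ?_, ?_, ?_⟩ <;> dsimp only <;> omega
    · have := hM p hp
      have := h.1 p hp
      refine ⟨?_, ?_, ?_, ?_⟩ <;> dsimp only <;> omega
    · exact h.2.1 p hp q hq hpq
  · intro p hp q hq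
    rcases mem_insert.mp hp with rfl | hp <;> rcases mem_insert.mp hq with rfl | hq
    · dsimp only
      omega
    · have := hM q hq
      dsimp only
      omega
    · have := hM p hp
      dsimp only
      omega
    · exact h.2.2 p hp q hq

end IsSecStr2

namespace SecStr2

lemma IsBallotPair.exists_isSecStr2 {n : ℕ} {L R : Finset ℕ} (h : IsBallotPair n L R)
    (hc : #L = #R) : ∃ M, IsSecStr2 n M ∧ M.image Prod.fst = L ∧ M.image Prod.snd = R := by
  induction hk : #R generalizing L R with
  | zero =>
    refine ⟨∅, ⟨by simp, by simp, by simp⟩, ?_, ?_⟩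
    · rw [image_empty, eq_comm, ← card_eq_zero, hc, hk]
    · rw [image_empty, eq_comm, ← card_eq_zero, hk]
  | succ k ih =>
    have hR : R.Nonempty := card_pos.mp (by omega)
    set j := R.min' hR
    have hj : j ∈ R := R.min'_mem hR
    have hmin : ∀ r ∈ R, j ≤ r := fun r hr => R.min'_le r hr
    have hL : {i ∈ L | i < j}.Nonempty := by
      have hj' : 0 < #{r ∈ R | r ≤ j} := card_pos.mpr ⟨j, mem_filter.mpr ⟨hj, le_rfl⟩⟩
      obtain ⟨i, hi⟩ := card_pos.mp (hj'.trans_le (h.ballot j))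
      obtain ⟨hiL, hij⟩ := mem_filter.mp hi
      refine ⟨i, mem_filter.mpr ⟨hiL, lt_of_le_of_ne hij fun he => ?_⟩⟩
      exact disjoint_left.mp h.disjoint hiL (he ▸ hj)
    set i := {i ∈ L | i < j}.max' hL
    obtain ⟨hi, hij⟩ := mem_filter.mp ({i ∈ L | i < j}.max'_mem hL)
    have hmax : ∀ x ∈ L, x < j → x ≤ i :=
      fun x hx hxj => le_max' _ x (mem_filter.mpr ⟨hx, hxj⟩)
    have hi1 : i + 1 ≠ j := fun he => h.succ_notMem i hi (he ▸ hj)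
    obtain ⟨M, hM, hML, hMR⟩ := ih (h.erase_erase hi hj hij hmin)
      (by rw [card_erase_of_mem hi, card_erase_of_mem hj, hc])
      (by rw [card_erase_of_mem hj, hk]; rfl)
    refine ⟨insert (i, j) M, hM.insert (mem_Icc.mp (h.left_subset hi)).1 (by omega)
      (mem_Icc.mp (h.right_subset hj)).2 fun q hq => ⟨?_, ?_⟩, ?_, ?_⟩
    · have hq1 : q.1 ∈ L.erase i := hML ▸ mem_image_of_mem _ hq
      have hq1j : q.1 ≠ j := fun he =>
        disjoint_left.mp h.disjoint (mem_of_mem_erase hq1) (he ▸ hj)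
      have := ne_of_mem_erase hq1
      by_cases hqj : q.1 < j
      · exact Or.inl (lt_of_le_of_ne (hmax _ (mem_of_mem_erase hq1) hqj) this)
      · exact Or.inr (by omega)
    · have hq2 : q.2 ∈ R.erase j := hMR ▸ mem_image_of_mem _ hq
      exact lt_of_le_of_ne (hmin _ (mem_of_mem_erase hq2)) (ne_of_mem_erase hq2).symm
    · rw [image_insert, hML, insert_erase hi]
    · rw [image_insert, hMR, insert_erase hj]

theorem card_secStr2_eq_card_ballotPairs (n l : ℕ) :
    Nat.card {M : Finset (ℕ × ℕ) // IsSecStr2 n M ∧ #M = l} =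
      #(ballotPairs n l l false) := by
  let f : {M : Finset (ℕ × ℕ) // IsSecStr2 n M ∧ #M = l} → ballotPairs n l l false :=
    fun M => ⟨(M.1.image Prod.fst, M.1.image Prod.snd), mem_ballotPairs.mpr
      ⟨M.2.1.isBallotPair, (card_image_of_injOn M.2.1.injOn_fst).trans M.2.2,
        (card_image_of_injOn M.2.1.injOn_snd).trans M.2.2, by simp⟩⟩
  have hf : Function.Bijective f := by
    refine ⟨fun M M' hMM' => ?_, fun p => ?_⟩
    · have := congrArg Subtype.val hMM'
      exact Subtype.ext (M.2.1.eq_of_image_eq M'.2.1 (congrArg Prod.fst this)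
        (congrArg Prod.snd this))
    · obtain ⟨hp, hL, hR, -⟩ := mem_ballotPairs.mp p.2
      obtain ⟨M, hM, hML, hMR⟩ := hp.exists_isSecStr2 (hL.trans hR.symm)
      refine ⟨⟨M, hM, ?_⟩, Subtype.ext (Prod.ext hML hMR)⟩
      rw [← card_image_of_injOn hM.injOn_snd, hMR, hR]
  rw [Nat.card_congr (Equiv.ofBijective f hf), Nat.card_eq_finsetCard]

/- Cutting the word of left endpoints, right endpoints and unpaired vertices at its `g + 1`
unpaired vertices, the `a` left endpoints fill `g + 2` blocks and the `b` right endpoints the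
last `g + 1` (a right endpoint never follows a left one directly); the subtracted term is the
reflection correction for the ballot condition. -/
def ballotNum (a b g : ℕ) : ℚ :=
  (b + g).choose g * (a + g + 1).choose (g + 1) - (b + g).choose (g + 1) * (a + g + 1).choose g

def ballotNumNoOpen (a b g : ℕ) : ℚ :=
  (b + g).choose g * (a + g).choose g - (b + g).choose (g + 1) * (a + g).choose (a + 1)

lemma ballotNumNoOpen_succ (a b g : ℕ) : ballotNumNoOpen a b (g + 1) =
    (b + g + 1).choose (g + 1) * (a + g + 1).choose (g + 1) -
      (b + g + 1).choose (g + 2) * (a + g + 1).choose g := by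
  rw [ballotNumNoOpen, Nat.choose_symm_of_eq_add (show a + (g + 1) = (a + 1) + g by ring)]
  simp only [← add_assoc]

lemma ballotNum_zero_right (a b : ℕ) : ballotNum a b 0 = a + 1 - b := by
  simp [ballotNum]

lemma ballotNumNoOpen_zero_right (a b : ℕ) : ballotNumNoOpen a b 0 = 1 := by
  simp [ballotNumNoOpen]

lemma ballotNum_self_succ (a g : ℕ) : ballotNum a (a + 1) g = 0 := by
  rw [ballotNum, add_right_comm a 1 g]
  ring

lemma ballotNum_succ_right {a b : ℕ} (g : ℕ) (hba : b ≤ a) :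
    ballotNum a b (g + 1) = ballotNum a b g + (if 0 < a then ballotNum (a - 1) b (g + 1) else 0) +
      (if 0 < b then ballotNumNoOpen a (b - 1) (g + 1) else 0) := by
  rcases a with _ | a <;> rcases b with _ | b
  · simp [ballotNum]
  · omega
  · simp only [Nat.succ_pos, lt_irrefl, if_true, if_false, add_zero, add_tsub_cancel_right]
    simp only [ballotNum, zero_add, Nat.choose_self, Nat.choose_succ_self, Nat.cast_one,
      Nat.cast_zero, one_mul, zero_mul, sub_zero]
    rw [show a + 1 + (g + 1) + 1 = (a + g + 2) + 1 by ring, Nat.choose_succ_succ', Nat.cast_add]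
    ring_nf
  · rw [ballotNumNoOpen_succ]
    simp only [ballotNum, Nat.succ_pos, if_true, add_tsub_cancel_right, add_right_comm _ 1,
      add_assoc, Nat.reduceAdd]
    simp only [← add_assoc, Nat.choose_succ_succ', Nat.cast_add]
    ring

lemma ballotNumNoOpen_succ_right (a b g : ℕ) :
    ballotNumNoOpen a b (g + 1) =
      ballotNum a b g + (if 0 < b then ballotNumNoOpen a (b - 1) (g + 1) else 0) := by
  rcases b with _ | b
  · rw [ballotNumNoOpen_succ, ballotNum]
    simp
  · rw [ballotNumNoOpen_succ, if_pos b.succ_pos, add_tsub_cancel_right, ballotNumNoOpen_succ]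
    simp only [ballotNum, add_right_comm _ 1, add_assoc, Nat.reduceAdd]
    simp only [← add_assoc, Nat.choose_succ_succ', Nat.cast_add]
    ring

lemma ballotNum_self (k g : ℕ) :
    ballotNum (k + 1) (k + 1) g =
      1 / (k + 1 : ℚ) * (k + g + 2).choose (k + 2) * (k + g + 1).choose k := by
  have hfac (m : ℕ) : (m.factorial : ℚ) ≠ 0 := Nat.cast_ne_zero.mpr m.factorial_ne_zero
  rw [ballotNum, show k + 1 + g = k + g + 1 by ring,
    Nat.cast_choose ℚ (show g ≤ k + g + 1 by omega),
    Nat.cast_choose ℚ (show g + 1 ≤ k + g + 2 by omega),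
    Nat.cast_choose ℚ (show g + 1 ≤ k + g + 1 by omega),
    Nat.cast_choose ℚ (show g ≤ k + g + 2 by omega),
    Nat.cast_choose ℚ (show k + 2 ≤ k + g + 2 by omega),
    Nat.cast_choose ℚ (show k ≤ k + g + 1 by omega)]
  simp only [show k + g + 1 - g = k + 1 by omega, show k + g + 2 - (g + 1) = k + 1 by omega,
    show k + g + 1 - (g + 1) = k by omega, show k + g + 2 - g = k + 2 by omega,
    show k + g + 2 - (k + 2) = g by omega, show k + g + 1 - k = g + 1 by omega,
    Nat.factorial_succ, Nat.cast_mul]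
  push_cast
  field_simp
  ring

lemma card_ballotPairs_eq_ballotNum (n : ℕ) : ∀ a b g, b ≤ a → n = a + b + g + 1 →
    (#(ballotPairs n a b false) : ℚ) = ballotNum a b g ∧
      (#(ballotPairs n a b true) : ℚ) = ballotNumNoOpen a b g := by
  induction n with
  | zero => intros; omega
  | succ n ih =>
    intro a b g hba hn
    replace hn : n = a + b + g := by omega
    have hleft (ha : 0 < a) : (#(ballotPairs n (a - 1) b false) : ℚ) = ballotNum (a - 1) b g := by
      rcases (show b ≤ a - 1 ∨ b = a - 1 + 1 by omega) with hb | hb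
      · exact (ih (a - 1) b g hb (by omega)).1
      · rw [card_ballotPairs_eq_zero_of_lt (by omega), hb, ballotNum_self_succ, Nat.cast_zero]
    have hsucc (t : Bool) : (#(ballotPairs (n + 1) a b t) : ℚ) = #(ballotPairs n a b false) +
        (if t = false ∧ 0 < a then ballotNum (a - 1) b g else 0) +
        (if 0 < b then ballotNumNoOpen a (b - 1) g else 0) := by
      have hL :
          ((if t = false ∧ 0 < a then #(ballotPairs n (a - 1) b false) else 0 : ℕ) : ℚ) =
          if t = false ∧ 0 < a then ballotNum (a - 1) b g else 0 := by
        split_ifs with h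
        exacts [hleft h.2, Nat.cast_zero]
      have hR : ((if 0 < b ∧ b ≤ a then #(ballotPairs n a (b - 1) true) else 0 : ℕ) : ℚ) =
          if 0 < b then ballotNumNoOpen a (b - 1) g else 0 := by
        split_ifs with h h' h'
        exacts [(ih a (b - 1) g (by omega) (by omega)).2, by omega, by omega, Nat.cast_zero]
      rw [card_ballotPairs_succ, Nat.cast_add, Nat.cast_add, hL, hR]
    rcases g with _ | g
    · have hfirst : (#(ballotPairs n a b false) : ℚ) = if b = 0 then 1 else 0 := by
        rw [hn, add_zero, card_ballotPairs_add]
        simp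
      rw [hsucc, hsucc, hfirst]
      rcases a with _ | a <;> rcases b with _ | b
      · simp [ballotNum_zero_right, ballotNumNoOpen_zero_right]
      · omega
      · simp [ballotNum_zero_right, ballotNumNoOpen_zero_right]
        ring
      · simp [ballotNum_zero_right, ballotNumNoOpen_zero_right]
        ring
    · rw [hsucc, hsucc, (ih a b g hba (by omega)).1, ballotNum_succ_right g hba,
        ballotNumNoOpen_succ_right a b g]
      simp

end SecStr2

/-- The number of RNA secondary structures on `n` vertices with exactly `l ≥ 1` arcs and
minimum arc-length 2 equals `(1/l)·C(n-l, l+1)·C(n-l-1, l-1)`. -/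
theorem secStr_count_waterman (n l : ℕ) (hl : 1 ≤ l) :
    (Nat.card {M : Finset (ℕ × ℕ) // IsSecStr2 n M ∧ M.card = l} : ℚ) =
      (1 / (l : ℚ)) * ((n - l).choose (l + 1)) * ((n - l - 1).choose (l - 1)) := by
  rw [SecStr2.card_secStr2_eq_card_ballotPairs]
  obtain ⟨k, rfl⟩ : ∃ k, l = k + 1 := ⟨l - 1, by omega⟩
  rcases le_or_gt n (2 * (k + 1)) with hn | hn
  · rw [SecStr2.card_ballotPairs_eq_zero_of_le (by omega) k.succ_pos,
      Nat.choose_eq_zero_of_lt (by omega : n - (k + 1) < k + 1 + 1)]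
    simp
  · obtain ⟨g, rfl⟩ : ∃ g, n = k + 1 + (k + 1) + g + 1 := ⟨n - 2 * (k + 1) - 1, by omega⟩
    rw [(SecStr2.card_ballotPairs_eq_ballotNum _ _ _ g le_rfl rfl).1, SecStr2.ballotNum_self,
      show k + 1 + (k + 1) + g + 1 - (k + 1) = k + g + 2 by omega,
      show k + g + 2 - 1 = k + g + 1 by omega, add_tsub_cancel_right]
    push_cast
    ring
end

section
/- The generating function S(x,y) = Σ s(n,l) x^n y^l counting RNA secondary structures with minimum arc-length λ, minimum stack-length r, by length n and number of arcs l, satisfies the functional equation (x²y)^r · S(x,y)² − B(x,y) · S(x,y) + A(x,y) = 0, where A(x,y) = 1 − x²y + (x²y)^r and B(x,y) = (1−x)·A(x,y) + (x²y)^r · Σ_{i=0}^{λ−2} x^i. -/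
open PowerSeries

/-- `M` is an `r`-canonical RNA secondary structure on vertices `1,…,n` with minimum
arc-length `lam`: arcs `(i,j)` satisfy `1 ≤ i`, `j ≤ n`, `j - i ≥ lam`; arcs are pairwise
vertex-disjoint and noncrossing; and every maximal stack has length at least `r`
(i.e. if `(i-1,j+1)` is not an arc then `(i+t, j-t)` is an arc for all `t < r`). -/
def IsCanSecStr (n lam r : ℕ) (M : Finset (ℕ × ℕ)) : Prop :=
  (∀ p ∈ M, 1 ≤ p.1 ∧ p.1 + lam ≤ p.2 ∧ p.2 ≤ n) ∧
  (∀ p ∈ M, ∀ q ∈ M, p ≠ q → p.1 ≠ q.1 ∧ p.1 ≠ q.2 ∧ p.2 ≠ q.1 ∧ p.2 ≠ q.2) ∧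
  (∀ p ∈ M, ∀ q ∈ M, ¬ (p.1 < q.1 ∧ q.1 < p.2 ∧ p.2 < q.2)) ∧
  (∀ p ∈ M, (p.1 - 1, p.2 + 1) ∉ M → ∀ t < r, (p.1 + t, p.2 - t) ∈ M)

/-- The number of `r`-canonical secondary structures with minimum arc-length `lam`,
`n` vertices and `l` arcs. -/
noncomputable def sCount (lam r n l : ℕ) : ℕ :=
  Nat.card {M : Finset (ℕ × ℕ) // IsCanSecStr n lam r M ∧ M.card = l}

/-- The bivariate generating function `S(x,y) = Σ_{n,l} s(n,l) x^n y^l`, viewed as a formal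
power series in `x` with coefficients that are polynomials in `y`. -/
noncomputable def Sgf (lam r : ℕ) : PowerSeries (Polynomial ℚ) :=
  PowerSeries.mk fun n =>
    ∑ l ∈ Finset.range (n + 1), Polynomial.C ((sCount lam r n l : ℚ)) * Polynomial.X ^ l

/-- The monomial `x²y`. -/
noncomputable def xxy : PowerSeries (Polynomial ℚ) :=
  PowerSeries.X ^ 2 * PowerSeries.C (Polynomial.X : Polynomial ℚ)

/-- `A(x,y) = 1 - x²y + (x²y)^r`. -/
noncomputable def Agf (r : ℕ) : PowerSeries (Polynomial ℚ) := 1 - xxy + xxy ^ r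

/-- `B(x,y) = (1-x)·A(x,y) + (x²y)^r · Σ_{i=0}^{λ-2} x^i`. -/
noncomputable def Bgf (lam r : ℕ) : PowerSeries (Polynomial ℚ) :=
  (1 - PowerSeries.X) * Agf r + xxy ^ r * ∑ i ∈ Finset.range (lam - 1), PowerSeries.X ^ i


/-!
Sort structures by the partner of vertex `1`: either vertex `1` is unpaired, or it is paired with
some `j`, and the structure splits into a *closed* structure on `[1, j]` (one containing the arc
`(1, j)`) followed by an arbitrary structure on the remaining vertices. With `C` the generating
function of closed structures this gives `S = 1 + x S + C S`.

A closed structure either has an outer stack longer than `r`, and removing its outermost arc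
leaves a closed structure, or its outer stack has exactly `r` arcs and encloses a structure
without the arc `(1, n)` that is long enough for the innermost stack arc to respect `λ`. Hence
`(1 - x²y) C = (x²y)^r (S - C - Σ_{i<λ-1} x^i)`, and eliminating `C` gives the equation.
-/

open Finset
open scoped Classical

noncomputable section

def ArcsCompatible (p q : ℕ × ℕ) : Prop :=
  p.2 < q.1 ∨ q.2 < p.1 ∨ (p.1 < q.1 ∧ q.2 < p.2) ∨ (q.1 < p.1 ∧ p.2 < q.2)

theorem ArcsCompatible.symm {p q : ℕ × ℕ} (h : ArcsCompatible p q) : ArcsCompatible q p := by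
  unfold ArcsCompatible at *; omega

namespace IsCanSecStr

variable {n N lam r : ℕ} {M M₁ M₂ : Finset (ℕ × ℕ)}

theorem bounds (h : IsCanSecStr n lam r M) {p : ℕ × ℕ} (hp : p ∈ M) :
    1 ≤ p.1 ∧ p.1 + lam ≤ p.2 ∧ p.2 ≤ n :=
  h.1 p hp

theorem ne_ends (h : IsCanSecStr n lam r M) {p q : ℕ × ℕ} (hp : p ∈ M) (hq : q ∈ M)
    (hpq : p ≠ q) : p.1 ≠ q.1 ∧ p.1 ≠ q.2 ∧ p.2 ≠ q.1 ∧ p.2 ≠ q.2 :=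
  h.2.1 p hp q hq hpq

theorem stack (h : IsCanSecStr n lam r M) {p : ℕ × ℕ} (hp : p ∈ M)
    (hout : (p.1 - 1, p.2 + 1) ∉ M) {t : ℕ} (ht : t < r) : (p.1 + t, p.2 - t) ∈ M :=
  h.2.2.2 p hp hout t ht

theorem outer_stack_mem (h : IsCanSecStr n lam r M) (h1n : (1, n) ∈ M) {t : ℕ} (ht : t < r) :
    (1 + t, n - t) ∈ M :=
  h.stack h1n (fun hout => by have := h.bounds hout; omega) ht

theorem compatible (h : IsCanSecStr n lam r M) {p q : ℕ × ℕ} (hp : p ∈ M) (hq : q ∈ M)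
    (hpq : p ≠ q) : ArcsCompatible p q := by
  have := h.bounds hp; have := h.bounds hq; have := h.ne_ends hp hq hpq
  have := h.2.2.1 p hp q hq; have := h.2.2.1 q hq p hp
  unfold ArcsCompatible; omega

theorem of_compatible
    (hbounds : ∀ p ∈ M, 1 ≤ p.1 ∧ p.1 + lam ≤ p.2 ∧ p.2 ≤ n)
    (hcompat : ∀ p ∈ M, ∀ q ∈ M, p ≠ q → ArcsCompatible p q)
    (hstack : ∀ p ∈ M, (p.1 - 1, p.2 + 1) ∉ M → ∀ t < r, (p.1 + t, p.2 - t) ∈ M) :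
    IsCanSecStr n lam r M := by
  refine ⟨hbounds, fun p hp q hq hpq => ?_, fun p hp q hq => ?_, hstack⟩
  · have hc := hcompat p hp q hq hpq; have := hbounds p hp; have := hbounds q hq
    unfold ArcsCompatible at hc; omega
  · by_cases hpq : p = q
    · subst hpq; omega
    · have hc := hcompat p hp q hq hpq; have := hbounds p hp; have := hbounds q hq
      unfold ArcsCompatible at hc; omega

theorem mono (h : IsCanSecStr n lam r M) (hn : n ≤ N) : IsCanSecStr N lam r M :=
  ⟨fun _ hp => (h.bounds hp).imp_right fun h' => ⟨h'.1, h'.2.trans hn⟩, h.2⟩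

theorem of_forall_snd_le (h : IsCanSecStr N lam r M) (hM : ∀ p ∈ M, p.2 ≤ n) :
    IsCanSecStr n lam r M :=
  ⟨fun p hp => ⟨(h.bounds hp).1, (h.bounds hp).2.1, hM p hp⟩, h.2⟩

theorem card_le (h : IsCanSecStr n lam r M) : M.card ≤ n := by
  have hinj : Set.InjOn Prod.fst (M : Set (ℕ × ℕ)) := fun p hp q hq hpq => by
    by_contra hne; exact (h.ne_ends hp hq hne).1 hpq
  calc M.card = (M.image Prod.fst).card := (card_image_of_injOn hinj).symm
    _ ≤ (Icc 1 n).card := card_le_card fun a ha => by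
        obtain ⟨p, hp, rfl⟩ := mem_image.1 ha
        have := h.bounds hp; rw [mem_Icc]; omega
    _ = n := by simp

theorem union (h₁ : IsCanSecStr n lam r M₁) (h₂ : IsCanSecStr n lam r M₂)
    (hcompat : ∀ p ∈ M₁, ∀ q ∈ M₂, p ≠ q → ArcsCompatible p q) :
    IsCanSecStr n lam r (M₁ ∪ M₂) := by
  refine of_compatible (fun p hp => ?_) (fun p hp q hq hpq => ?_) (fun p hp hout t ht => ?_)
  · rcases mem_union.1 hp with hp | hp
    exacts [h₁.bounds hp, h₂.bounds hp]
  · rcases mem_union.1 hp with hp | hp <;> rcases mem_union.1 hq with hq | hq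
    exacts [h₁.compatible hp hq hpq, hcompat p hp q hq hpq,
      (hcompat q hq p hp (Ne.symm hpq)).symm, h₂.compatible hp hq hpq]
  · rcases mem_union.1 hp with hp | hp
    · exact mem_union_left _ (h₁.stack hp (fun h => hout (mem_union_left _ h)) ht)
    · exact mem_union_right _ (h₂.stack hp (fun h => hout (mem_union_right _ h)) ht)

theorem filter (h : IsCanSecStr n lam r M) (P : ℕ × ℕ → Prop) [DecidablePred P]
    (hdown : ∀ p ∈ M, P p → ∀ t < r, P (p.1 + t, p.2 - t))
    (hup : ∀ p ∈ M, P p → (p.1 - 1, p.2 + 1) ∈ M → ¬ P (p.1 - 1, p.2 + 1) →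
      ∀ t < r, (p.1 + t, p.2 - t) ∈ M) :
    IsCanSecStr n lam r (M.filter P) := by
  refine ⟨fun p hp => h.bounds (mem_of_mem_filter p hp),
    fun p hp q hq => h.ne_ends (mem_of_mem_filter p hp) (mem_of_mem_filter q hq),
    fun p hp q hq => h.2.2.1 p (mem_of_mem_filter p hp) q (mem_of_mem_filter q hq), ?_⟩
  intro p hp hout t ht
  obtain ⟨hpM, hpP⟩ := mem_filter.1 hp
  have hstack : (p.1 + t, p.2 - t) ∈ M := by
    by_cases houtM : (p.1 - 1, p.2 + 1) ∈ M
    · exact hup p hpM hpP houtM (fun hP => hout (mem_filter.2 ⟨houtM, hP⟩)) t ht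
    · exact h.stack hpM houtM ht
  exact mem_filter.2 ⟨hstack, hdown p hpM hpP t ht⟩

end IsCanSecStr

def shiftArcs (k : ℕ) (M : Finset (ℕ × ℕ)) : Finset (ℕ × ℕ) :=
  M.image fun p => (p.1 + k, p.2 + k)

section Shift

variable {n lam r k : ℕ} {M : Finset (ℕ × ℕ)}

theorem shiftArc_injective (k : ℕ) : Function.Injective fun p : ℕ × ℕ => (p.1 + k, p.2 + k) :=
  fun p q h => by simp only [Prod.ext_iff, add_left_inj] at h ⊢; exact h

theorem mem_shiftArcs {q : ℕ × ℕ} : q ∈ shiftArcs k M ↔ ∃ p ∈ M, (p.1 + k, p.2 + k) = q :=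
  mem_image

theorem add_mem_shiftArcs {a b : ℕ} : (a + k, b + k) ∈ shiftArcs k M ↔ (a, b) ∈ M :=
  (shiftArc_injective k).mem_finset_image (a := (a, b))

theorem card_shiftArcs (k : ℕ) (M : Finset (ℕ × ℕ)) : (shiftArcs k M).card = M.card :=
  card_image_of_injective M (shiftArc_injective k)

theorem shiftArcs_injective (k : ℕ) : Function.Injective (shiftArcs k) :=
  image_injective (shiftArc_injective k)

theorem IsCanSecStr.shift (h : IsCanSecStr n lam r M) :
    IsCanSecStr (n + k) lam r (shiftArcs k M) := by
  refine IsCanSecStr.of_compatible (fun q hq => ?_) (fun q hq q' hq' hne => ?_)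
    (fun q hq hout t ht => ?_)
  · obtain ⟨p, hp, rfl⟩ := mem_shiftArcs.1 hq
    have := h.bounds hp; dsimp only; omega
  · obtain ⟨p, hp, rfl⟩ := mem_shiftArcs.1 hq
    obtain ⟨p', hp', rfl⟩ := mem_shiftArcs.1 hq'
    have hc := h.compatible hp hp' (fun h => hne (h ▸ rfl))
    unfold ArcsCompatible at hc ⊢; dsimp only; omega
  · obtain ⟨p, hp, rfl⟩ := mem_shiftArcs.1 hq
    have := h.bounds hp
    dsimp only at hout ⊢
    have hout' : (p.1 - 1, p.2 + 1) ∉ M := fun hmem =>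
      hout (by convert add_mem_shiftArcs.2 hmem using 2 <;> omega)
    have hin := h.stack hp hout' ht
    have := h.bounds hin
    convert add_mem_shiftArcs.2 hin using 2 <;> omega

theorem IsCanSecStr.of_shift (hM : ∀ p ∈ M, 1 ≤ p.1)
    (h : IsCanSecStr (n + k) lam r (shiftArcs k M)) : IsCanSecStr n lam r M := by
  refine IsCanSecStr.of_compatible (fun p hp => ?_) (fun p hp p' hp' hne => ?_)
    (fun p hp hout t ht => ?_)
  · have := h.bounds (add_mem_shiftArcs.2 hp); have := hM p hp; omega
  · have hc := h.compatible (add_mem_shiftArcs.2 hp) (add_mem_shiftArcs.2 hp')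
      (fun h => hne ((shiftArc_injective k) h))
    unfold ArcsCompatible at hc ⊢; omega
  · have := hM p hp
    have hout' : (p.1 + k - 1, p.2 + k + 1) ∉ shiftArcs k M := fun hmem =>
      hout (add_mem_shiftArcs.1 (by convert hmem using 2 <;> omega))
    have hin := h.stack (add_mem_shiftArcs.2 hp) hout' ht
    obtain ⟨q, hq, hqe⟩ := mem_shiftArcs.1 hin
    simp only [Prod.ext_iff] at hqe
    convert hq using 2 <;> omega

theorem IsCanSecStr.exists_shift_eq (h : IsCanSecStr (n + k) lam r M)
    (hk : ∀ p ∈ M, k < p.1) : ∃ M', IsCanSecStr n lam r M' ∧ shiftArcs k M' = M := by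
  set M' := M.image fun p => (p.1 - k, p.2 - k)
  have hshift : shiftArcs k M' = M := by
    rw [shiftArcs, image_image]
    refine (image_congr fun p hp => ?_).trans image_id
    have := hk p hp; have := h.bounds hp
    simp only [Function.comp_apply, id_eq, Prod.ext_iff]; omega
  refine ⟨M', IsCanSecStr.of_shift (fun p hp => ?_) (hshift ▸ h), hshift⟩
  obtain ⟨q, hq, rfl⟩ := mem_image.1 hp
  have := hk q hq; simp only; omega

end Shift

def stackArcs (k N : ℕ) : Finset (ℕ × ℕ) :=
  (range k).image fun t => (1 + t, N - t)

def enclose (n k : ℕ) (M : Finset (ℕ × ℕ)) : Finset (ℕ × ℕ) :=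
  stackArcs k (n + 2 * k) ∪ shiftArcs k M

section Enclose

variable {n lam r k : ℕ} {M : Finset (ℕ × ℕ)}

theorem mem_stackArcs {N : ℕ} {q : ℕ × ℕ} :
    q ∈ stackArcs k N ↔ ∃ t < k, (1 + t, N - t) = q := by
  simp [stackArcs]

theorem card_stackArcs (k N : ℕ) : (stackArcs k N).card = k := by
  rw [stackArcs, card_image_of_injective _ fun t t' h => by simpa using congrArg Prod.fst h,
    card_range]

theorem filter_enclose (hM : ∀ p ∈ M, 1 ≤ p.1) :
    (enclose n k M).filter (fun p => k < p.1) = shiftArcs k M := by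
  rw [enclose, filter_union, filter_false_of_mem, filter_true_of_mem, empty_union]
  · intro q hq
    obtain ⟨p, hp, rfl⟩ := mem_shiftArcs.1 hq
    have := hM p hp; dsimp only; omega
  · intro q hq
    obtain ⟨t, ht, rfl⟩ := mem_stackArcs.1 hq
    dsimp only; omega

theorem card_enclose (hM : ∀ p ∈ M, 1 ≤ p.1) : (enclose n k M).card = M.card + k := by
  rw [enclose, card_union_of_disjoint, card_stackArcs, card_shiftArcs, add_comm]
  refine disjoint_left.2 fun q hq hq' => ?_
  obtain ⟨t, ht, rfl⟩ := mem_stackArcs.1 hq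
  obtain ⟨p, hp, he⟩ := mem_shiftArcs.1 hq'
  have := hM p hp; simp only [Prod.ext_iff] at he; omega

theorem enclose_inj {M' : Finset (ℕ × ℕ)} (hM : ∀ p ∈ M, 1 ≤ p.1) (hM' : ∀ p ∈ M', 1 ≤ p.1)
    (h : enclose n k M = enclose n k M') : M = M' :=
  shiftArcs_injective k (by rw [← filter_enclose hM, ← filter_enclose hM', h])

theorem isCanSecStr_enclose (h : IsCanSecStr n lam r M) (hlen : lam ≤ n + 1)
    (hstack : ∀ t < r, k ≤ t → (1 + t - k, n + k - t) ∈ M) :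
    IsCanSecStr (n + 2 * k) lam r (enclose n k M) := by
  have hM := h.shift (k := k)
  have hcross : ∀ s ∈ stackArcs k (n + 2 * k), ∀ q ∈ shiftArcs k M, ArcsCompatible s q := by
    intro s hs q hq
    obtain ⟨t, ht, rfl⟩ := mem_stackArcs.1 hs
    obtain ⟨p, hp, rfl⟩ := mem_shiftArcs.1 hq
    have := h.bounds hp
    unfold ArcsCompatible; dsimp only; omega
  refine IsCanSecStr.of_compatible (fun q hq => ?_) (fun q hq q' hq' hne => ?_)
    (fun q hq hout t ht => ?_)
  · rcases mem_union.1 hq with hq | hq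
    · obtain ⟨t, ht, rfl⟩ := mem_stackArcs.1 hq
      dsimp only; omega
    · have := hM.bounds hq; omega
  · rcases mem_union.1 hq with hq | hq <;> rcases mem_union.1 hq' with hq' | hq'
    · obtain ⟨t, ht, rfl⟩ := mem_stackArcs.1 hq
      obtain ⟨t', ht', rfl⟩ := mem_stackArcs.1 hq'
      have htt' : t ≠ t' := fun he => hne (he ▸ rfl)
      unfold ArcsCompatible; dsimp only; omega
    exacts [hcross _ hq _ hq', (hcross _ hq' _ hq).symm, hM.compatible hq hq' hne]
  · rcases mem_union.1 hq with hq | hq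
    · obtain ⟨u, hu, rfl⟩ := mem_stackArcs.1 hq
      obtain rfl : u = 0 := by
        by_contra hu0
        refine hout (mem_union_left _ (mem_stackArcs.2 ⟨u - 1, by omega, ?_⟩))
        ext <;> dsimp only <;> omega
      by_cases htk : t < k
      · exact mem_union_left _ (mem_stackArcs.2 ⟨t, htk, by simp⟩)
      · refine mem_union_right _ ?_
        have := h.bounds (hstack t ht (by omega))
        convert add_mem_shiftArcs.2 (hstack t ht (by omega)) using 2 <;> dsimp only <;> omega
    · exact mem_union_right _ (hM.stack hq (fun h => hout (mem_union_right _ h)) ht)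

/-- The arcs off the stack share no endpoint with it, so they are nested inside it. -/
theorem IsCanSecStr.nested_of_stackArcs_subset {N : ℕ} (h : IsCanSecStr N lam r M)
    (hstk : stackArcs k N ⊆ M) {p : ℕ × ℕ} (hp : p ∈ M) (hns : p ∉ stackArcs k N) :
    k < p.1 ∧ p.2 + k ≤ N := by
  have hb := h.bounds hp
  have key : ∀ t < k, p.1 ≠ 1 + t ∧ p.2 ≠ N - t := fun t ht => by
    have hs : (1 + t, N - t) ∈ stackArcs k N := mem_stackArcs.2 ⟨t, ht, rfl⟩
    have := h.ne_ends hp (hstk hs) (fun he => hns (he ▸ hs))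
    exact ⟨this.1, this.2.2.2⟩
  constructor
  · by_contra hlt; have := key (p.1 - 1) (by omega); omega
  · by_contra hlt; have := key (N - p.2) (by omega); omega

theorem IsCanSecStr.exists_enclose_eq (h : IsCanSecStr (n + 2 * k) lam r M)
    (hstk : stackArcs k (n + 2 * k) ⊆ M)
    (hinner : (k + 1, n + k) ∈ M → ∀ t < r, (k + 1 + t, n + k - t) ∈ M) :
    ∃ M', IsCanSecStr n lam r M' ∧ enclose n k M' = M := by
  have hnested := fun p (hp : p ∈ M) => h.nested_of_stackArcs_subset hstk hp
  have hR : IsCanSecStr (n + 2 * k) lam r (M.filter fun p => k < p.1) := by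
    refine h.filter _ (fun p _ hp t _ => by dsimp only; omega) fun p hpM hk hout hnk => ?_
    have hout_stk : (p.1 - 1, p.2 + 1) ∈ stackArcs k (n + 2 * k) := by
      by_contra hns; have := hnested _ hout hns; dsimp only at this hnk; omega
    obtain ⟨t, ht, he⟩ := mem_stackArcs.1 hout_stk
    simp only [Prod.ext_iff] at he
    obtain rfl : p = (k + 1, n + k) := by ext <;> dsimp only at hnk ⊢ <;> omega
    exact hinner hpM
  have hRk : ∀ p ∈ M.filter (fun p => k < p.1), k < p.1 ∧ p.2 + k ≤ n + 2 * k := fun p hp =>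
    hnested p (mem_filter.1 hp).1 fun hs => by
      obtain ⟨t, ht, rfl⟩ := mem_stackArcs.1 hs
      have := (mem_filter.1 hp).2; dsimp only at this; omega
  obtain ⟨M', hM', hshift⟩ :=
    (hR.of_forall_snd_le (n := n + k) fun p hp => by have := hRk p hp; omega).exists_shift_eq
      fun p hp => (hRk p hp).1
  refine ⟨M', hM', ?_⟩
  rw [enclose, hshift]
  ext q
  simp only [mem_union, mem_filter]
  constructor
  · rintro (hq | hq)
    exacts [hstk hq, hq.1]
  · intro hq
    by_cases hs : q ∈ stackArcs k (n + 2 * k)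
    exacts [Or.inl hs, Or.inr ⟨hq, (hnested q hq hs).1⟩]

end Enclose

section Concat

variable {n lam r j m : ℕ} {M M₁ M₂ : Finset (ℕ × ℕ)}

theorem isCanSecStr_concat (h₁ : IsCanSecStr j lam r M₁) (h₂ : IsCanSecStr m lam r M₂) :
    IsCanSecStr (j + m) lam r (M₁ ∪ shiftArcs j M₂) := by
  refine (h₁.mono (Nat.le_add_right j m)).union (add_comm m j ▸ h₂.shift) fun p hp q hq _ => ?_
  obtain ⟨q', hq', rfl⟩ := mem_shiftArcs.1 hq
  have := h₁.bounds hp; have := h₂.bounds hq'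
  unfold ArcsCompatible; dsimp only; omega

theorem filter_concat (h₁ : IsCanSecStr j lam r M₁) (h₂ : IsCanSecStr m lam r M₂) :
    (M₁ ∪ shiftArcs j M₂).filter (fun p => p.2 ≤ j) = M₁ ∧
      (M₁ ∪ shiftArcs j M₂).filter (fun p => ¬ p.2 ≤ j) = shiftArcs j M₂ := by
  have hleft : ∀ p ∈ M₁, p.2 ≤ j := fun p hp => (h₁.bounds hp).2.2
  have hright : ∀ q ∈ shiftArcs j M₂, ¬ q.2 ≤ j := fun q hq => by
    obtain ⟨p, hp, rfl⟩ := mem_shiftArcs.1 hq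
    have := h₂.bounds hp; dsimp only; omega
  constructor
  · rw [filter_union, filter_true_of_mem hleft, filter_false_of_mem hright, union_empty]
  · rw [filter_union, filter_false_of_mem (fun p hp => not_not.2 (hleft p hp)),
      filter_true_of_mem hright, empty_union]

/-- No arc crosses or touches `(1, j)`, so every other arc lies inside it or to its right. -/
theorem IsCanSecStr.exists_concat_eq (h : IsCanSecStr n lam r M) (hj : (1, j) ∈ M) :
    ∃ M₁ M₂, IsCanSecStr j lam r M₁ ∧ (1, j) ∈ M₁ ∧ IsCanSecStr (n - j) lam r M₂ ∧
      M₁ ∪ shiftArcs j M₂ = M := by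
  have hbj := h.bounds hj
  have hside : ∀ p ∈ M, p.2 ≤ j ∨ j < p.1 := fun p hp => by
    by_cases hpj : p = (1, j)
    · subst hpj; left; rfl
    · have hc := h.compatible hp hj hpj; have := h.bounds hp
      unfold ArcsCompatible at hc; dsimp only at hc; omega
  have hleft : IsCanSecStr j lam r (M.filter fun p => p.2 ≤ j) := by
    refine (h.filter _ (fun p _ hp t _ => by dsimp only; omega) fun p hpM hp hout hnot => ?_)
      |>.of_forall_snd_le fun p hp => (mem_filter.1 hp).2
    exfalso
    have hpj : p = (1, j) := by
      by_contra hne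
      have := h.ne_ends hpM hj hne; dsimp only at hnot; omega
    subst hpj
    have := h.bounds hout; dsimp only at this; omega
  have hright : IsCanSecStr (n - j + j) lam r (M.filter fun p => j < p.1) := by
    rw [Nat.sub_add_cancel hbj.2.2]
    refine h.filter _ (fun p _ hp t _ => by dsimp only; omega) fun p hpM hp hout hnot => ?_
    exfalso
    have := h.bounds hpM
    have := h.ne_ends hout hj (fun he => by simp only [Prod.ext_iff] at he hnot; omega)
    dsimp only at this hnot; omega
  obtain ⟨M₂, hM₂, hshift⟩ := hright.exists_shift_eq fun p hp => (mem_filter.1 hp).2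
  refine ⟨_, M₂, hleft, mem_filter.2 ⟨hj, le_rfl⟩, hM₂, ?_⟩
  rw [hshift, ← filter_or]
  exact filter_true_of_mem hside

end Concat

def secStrs (lam r n : ℕ) : Finset (Finset (ℕ × ℕ)) :=
  (Icc 1 n ×ˢ Icc 1 n).powerset.filter (IsCanSecStr n lam r)

def closedSecStrs (lam r n : ℕ) : Finset (Finset (ℕ × ℕ)) :=
  (secStrs lam r n).filter fun M => (1, n) ∈ M

/-- Closed structures whose outer stack has length exactly `r`. -/
def minStackSecStrs (lam r n : ℕ) : Finset (Finset (ℕ × ℕ)) :=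
  (closedSecStrs lam r n).filter fun M => (1 + r, n - r) ∉ M

/-- The structures that can fill the inside of an outer stack of length exactly `r`: the
innermost stack arc then spans `n + 1`, which must respect the minimum arc-length. -/
def innerSecStrs (lam r n : ℕ) : Finset (Finset (ℕ × ℕ)) :=
  (secStrs lam r n).filter fun M => (1, n) ∉ M ∧ lam ≤ n + 1

def arcWeight (F : Finset (Finset (ℕ × ℕ))) : Polynomial ℚ :=
  ∑ M ∈ F, Polynomial.X ^ M.card

section Counting

variable {n lam r j : ℕ} {M : Finset (ℕ × ℕ)}

theorem mem_secStrs : M ∈ secStrs lam r n ↔ IsCanSecStr n lam r M := by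
  refine mem_filter.trans (and_iff_right_of_imp fun h => mem_powerset.2 fun p hp => ?_)
  have := h.bounds hp
  simp only [mem_product, mem_Icc]; omega

theorem mem_closedSecStrs : M ∈ closedSecStrs lam r n ↔ IsCanSecStr n lam r M ∧ (1, n) ∈ M := by
  rw [closedSecStrs, mem_filter, mem_secStrs]

theorem secStrs_eq_singleton_empty (hn : n ≤ lam) : secStrs lam r n = {∅} := by
  ext M
  rw [mem_secStrs, mem_singleton]
  constructor
  · intro h
    refine eq_empty_of_forall_notMem fun p hp => ?_
    have := h.bounds hp; omega
  · rintro rfl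
    exact ⟨by simp, by simp, by simp, by simp⟩

theorem closedSecStrs_eq_empty (hlam : 1 ≤ lam) (hn : n < 2 * r) : closedSecStrs lam r n = ∅ := by
  refine eq_empty_of_forall_notMem fun M hM => ?_
  obtain ⟨h, h1n⟩ := mem_closedSecStrs.1 hM
  have := h.bounds (h.outer_stack_mem h1n (show r - 1 < r by omega))
  dsimp only at this; omega

theorem arcWeight_image {s : Finset (Finset (ℕ × ℕ))} {g : Finset (ℕ × ℕ) → Finset (ℕ × ℕ)}
    (c : ℕ) (hinj : Set.InjOn g s) (hcard : ∀ M ∈ s, (g M).card = M.card + c) :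
    arcWeight (s.image g) = Polynomial.X ^ c * arcWeight s := by
  rw [arcWeight, sum_image hinj, arcWeight, mul_sum]
  exact sum_congr rfl fun M hM => by rw [hcard M hM, pow_add, mul_comm]

theorem arcWeight_image_prod {s t : Finset (Finset (ℕ × ℕ))}
    {g : Finset (ℕ × ℕ) × Finset (ℕ × ℕ) → Finset (ℕ × ℕ)} (hinj : Set.InjOn g (s ×ˢ t))
    (hcard : ∀ x ∈ s ×ˢ t, (g x).card = x.1.card + x.2.card) :
    arcWeight ((s ×ˢ t).image g) = arcWeight s * arcWeight t := by
  rw [arcWeight, sum_image (by rwa [coe_product]), arcWeight, arcWeight, sum_mul_sum,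
    ← sum_product']
  exact sum_congr rfl fun x hx => by rw [hcard x hx, pow_add]

/-- The partner of vertex `1`, or `0` when vertex `1` is unpaired. -/
def partner (M : Finset (ℕ × ℕ)) : ℕ :=
  M.sup fun p => if p.1 = 1 then p.2 else 0

theorem partner_eq_of_mem (h : IsCanSecStr n lam r M) (hj : (1, j) ∈ M) : partner M = j := by
  refine le_antisymm (Finset.sup_le fun p hp => ?_) ?_
  · split_ifs with hp1
    · by_contra hlt
      exact (h.ne_ends hp hj (fun he => by simp [he] at hlt)).1 hp1
    · exact Nat.zero_le j
  · exact (if_pos rfl).symm.trans_le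
      (Finset.le_sup (f := fun p : ℕ × ℕ => if p.1 = 1 then p.2 else 0) hj)

theorem partner_eq_zero (hM : ∀ p ∈ M, p.1 ≠ 1) : partner M = 0 :=
  Nat.eq_zero_of_le_zero (Finset.sup_le fun p hp => by simp [hM p hp])

theorem partner_eq_zero_iff (h : IsCanSecStr n lam r M) :
    partner M = 0 ↔ ∀ p ∈ M, p.1 ≠ 1 := by
  refine ⟨fun h0 p hp hp1 => ?_, partner_eq_zero⟩
  have hpM : (1, p.2) ∈ M := by rwa [← hp1]
  have := h.bounds hp; rw [partner_eq_of_mem h hpM] at h0; omega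

theorem partner_eq_iff (h : IsCanSecStr n lam r M) (hj : j ≠ 0) :
    partner M = j ↔ (1, j) ∈ M := by
  refine ⟨fun hpj => ?_, partner_eq_of_mem h⟩
  by_cases hex : ∃ p ∈ M, p.1 = 1
  · obtain ⟨p, hp, hp1⟩ := hex
    have hpM : (1, p.2) ∈ M := by rwa [← hp1]
    rwa [← hpj, partner_eq_of_mem h hpM]
  · simp only [not_exists, not_and] at hex
    exact absurd (hpj ▸ partner_eq_zero hex) hj

theorem filter_partner_eq_zero :
    (secStrs lam r (n + 1)).filter (fun M => partner M = 0) =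
      (secStrs lam r n).image (shiftArcs 1) := by
  ext M
  simp only [mem_filter, mem_image, mem_secStrs]
  constructor
  · rintro ⟨h, h0⟩
    exact (h.exists_shift_eq fun p hp => by
      have := h.bounds hp; have := (partner_eq_zero_iff h).1 h0 p hp; omega)
  · rintro ⟨M', h, rfl⟩
    refine ⟨h.shift, partner_eq_zero fun p hp => ?_⟩
    obtain ⟨q, hq, rfl⟩ := mem_shiftArcs.1 hp
    have := h.bounds hq; dsimp only; omega

theorem filter_partner_eq_succ (hj : j ≤ n) :
    (secStrs lam r (n + 1)).filter (fun M => partner M = j + 1) =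
      (closedSecStrs lam r (j + 1) ×ˢ secStrs lam r (n - j)).image
        fun x => x.1 ∪ shiftArcs (j + 1) x.2 := by
  ext M
  simp only [mem_filter, mem_image, mem_product, mem_secStrs, mem_closedSecStrs, Prod.exists]
  constructor
  · rintro ⟨h, hpj⟩
    obtain ⟨M₁, M₂, h₁, h1j, h₂, rfl⟩ :=
      h.exists_concat_eq ((partner_eq_iff h j.succ_ne_zero).1 hpj)
    exact ⟨M₁, M₂, ⟨⟨h₁, h1j⟩, by rwa [show n + 1 - (j + 1) = n - j by omega] at h₂⟩, rfl⟩
  · rintro ⟨M₁, M₂, ⟨⟨h₁, h1j⟩, h₂⟩, rfl⟩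
    have h := isCanSecStr_concat h₁ h₂
    rw [show j + 1 + (n - j) = n + 1 by omega] at h
    exact ⟨h, partner_eq_of_mem h (mem_union_left _ h1j)⟩

theorem arcWeight_image_concat (k m : ℕ) :
    arcWeight ((closedSecStrs lam r k ×ˢ secStrs lam r m).image
      fun x => x.1 ∪ shiftArcs k x.2) =
    arcWeight (closedSecStrs lam r k) * arcWeight (secStrs lam r m) := by
  refine arcWeight_image_prod (fun x hx y hy hxy => ?_) fun x hx => ?_
  · simp only [Set.mem_prod, mem_coe, mem_closedSecStrs, mem_secStrs] at hx hy
    have hx' := filter_concat hx.1.1 hx.2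
    have hy' := filter_concat hy.1.1 hy.2
    rw [hxy] at hx'
    exact Prod.ext (hx'.1.symm.trans hy'.1) (shiftArcs_injective _ (hx'.2.symm.trans hy'.2))
  · simp only [mem_product, mem_closedSecStrs, mem_secStrs] at hx
    rw [card_union_of_disjoint, card_shiftArcs]
    refine disjoint_left.2 fun p hp hp' => ?_
    obtain ⟨q, hq, rfl⟩ := mem_shiftArcs.1 hp'
    have hp₁ := hx.1.1.bounds hp; have hq₂ := hx.2.bounds hq
    dsimp only at hp₁; omega

theorem arcWeight_secStrs_succ (n : ℕ) :
    arcWeight (secStrs lam r (n + 1)) = arcWeight (secStrs lam r n) +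
      ∑ x ∈ antidiagonal n, arcWeight (closedSecStrs lam r (x.1 + 1)) *
        arcWeight (secStrs lam r x.2) := by
  have hpartner : ∀ M ∈ secStrs lam r (n + 1), partner M ∈ range (n + 2) := fun M hM => by
    have h := mem_secStrs.1 hM
    refine mem_range.2 (Nat.lt_succ_of_le (Finset.sup_le fun p hp => ?_))
    have := h.bounds hp; split_ifs <;> omega
  have hshift : arcWeight ((secStrs lam r n).image (shiftArcs 1)) = arcWeight (secStrs lam r n) :=
    (arcWeight_image 0 (shiftArcs_injective 1).injOn fun M _ => card_shiftArcs 1 M).trans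
      (one_mul _)
  have hfibers : arcWeight (secStrs lam r (n + 1)) = ∑ j ∈ range (n + 2),
      arcWeight ((secStrs lam r (n + 1)).filter fun M => partner M = j) :=
    (sum_fiberwise_of_maps_to hpartner _).symm
  rw [hfibers, sum_range_succ', add_comm, filter_partner_eq_zero, hshift,
    Nat.sum_antidiagonal_eq_sum_range_succ_mk]
  congr 1
  exact sum_congr rfl fun j hj => by
    rw [filter_partner_eq_succ (Nat.lt_succ_iff.1 (mem_range.1 hj)), arcWeight_image_concat]

end Counting

section Stacks

variable {n lam r : ℕ} {M : Finset (ℕ × ℕ)}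

theorem enclose_injOn (k : ℕ) (s : Finset (Finset (ℕ × ℕ)))
    (hs : ∀ M ∈ s, IsCanSecStr n lam r M) : Set.InjOn (enclose n k) s :=
  fun _ hM _ hM' => enclose_inj (fun _ hp => ((hs _ hM).bounds hp).1)
    (fun _ hp => ((hs _ hM').bounds hp).1)

theorem filter_closedSecStrs_eq_image (hr : 1 ≤ r) :
    (closedSecStrs lam r (n + 2)).filter (fun M => (1 + r, n + 2 - r) ∈ M) =
      (closedSecStrs lam r n).image (enclose n 1) := by
  ext M
  simp only [mem_filter, mem_image, mem_closedSecStrs]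
  constructor
  · rintro ⟨⟨h, htop⟩, hr'⟩
    have hst : ∀ t ≤ r, (1 + t, n + 2 - t) ∈ M := fun t ht => by
      rcases ht.lt_or_eq with ht | rfl
      exacts [h.outer_stack_mem htop ht, hr']
    obtain ⟨M', hM', rfl⟩ := IsCanSecStr.exists_enclose_eq (k := 1) h
      (fun q hq => by
        obtain ⟨t, ht, rfl⟩ := mem_stackArcs.1 hq
        simpa [Nat.lt_one_iff.1 ht] using htop)
      (fun _ t ht => by convert hst (t + 1) ht using 2 <;> omega)
    refine ⟨M', ⟨hM', ?_⟩, rfl⟩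
    rcases mem_union.1 (hst 1 hr) with hs | hs
    · obtain ⟨t, ht, he⟩ := mem_stackArcs.1 hs; simp only [Prod.ext_iff] at he; omega
    · exact add_mem_shiftArcs.1 hs
  · rintro ⟨M', ⟨h, htop⟩, rfl⟩
    have hn := h.bounds htop
    refine ⟨⟨isCanSecStr_enclose h (by omega) fun t ht h1t => ?_, ?_⟩, ?_⟩
    · convert h.outer_stack_mem htop (t := t - 1) (by omega) using 2 <;> omega
    · exact mem_union_left _ (mem_stackArcs.2 ⟨0, one_pos, rfl⟩)
    · have := h.bounds (h.outer_stack_mem htop (t := r - 1) (by omega))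
      refine mem_union_right _ ?_
      convert add_mem_shiftArcs.2 (h.outer_stack_mem htop (t := r - 1) (by omega)) using 2 <;>
        dsimp only at this ⊢ <;> omega

theorem minStackSecStrs_eq_image (hr : 1 ≤ r) :
    minStackSecStrs lam r (n + 2 * r) = (innerSecStrs lam r n).image (enclose n r) := by
  have hnr : n + 2 * r - r = n + r := by omega
  ext M
  simp only [minStackSecStrs, innerSecStrs, mem_filter, mem_image, mem_closedSecStrs, mem_secStrs,
    hnr]
  constructor
  · rintro ⟨⟨h, htop⟩, hnot⟩
    obtain ⟨M', hM', rfl⟩ := h.exists_enclose_eq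
      (fun q hq => by obtain ⟨t, ht, rfl⟩ := mem_stackArcs.1 hq; exact h.outer_stack_mem htop ht)
      (fun hin => absurd (by rwa [add_comm r 1] at hin) hnot)
    refine ⟨M', ⟨hM', fun h1n => hnot (mem_union_right _ ?_), ?_⟩, rfl⟩
    · exact add_mem_shiftArcs.2 h1n
    · have := h.bounds (h.outer_stack_mem htop (t := r - 1) (by omega)); dsimp only at this; omega
  · rintro ⟨M', ⟨h, h1n, hlen⟩, rfl⟩
    refine ⟨⟨isCanSecStr_enclose h hlen fun t ht hrt => absurd ht (not_lt.2 hrt),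
      mem_union_left _ (mem_stackArcs.2 ⟨0, hr, by simp⟩)⟩, fun hmem => ?_⟩
    rcases mem_union.1 hmem with hs | hs
    · obtain ⟨t, ht, he⟩ := mem_stackArcs.1 hs; simp only [Prod.ext_iff] at he; omega
    · exact h1n (add_mem_shiftArcs.1 hs)

theorem arcWeight_closedSecStrs_add_two (hr : 1 ≤ r) (n : ℕ) :
    arcWeight (closedSecStrs lam r (n + 2)) =
      Polynomial.X * arcWeight (closedSecStrs lam r n) +
        arcWeight (minStackSecStrs lam r (n + 2)) := by
  have hclosed : ∀ M ∈ closedSecStrs lam r n, IsCanSecStr n lam r M := fun M hM =>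
    (mem_closedSecStrs.1 hM).1
  have himage := arcWeight_image 1 (enclose_injOn 1 _ hclosed)
    fun M hM => card_enclose (n := n) fun p hp => ((hclosed M hM).bounds hp).1
  rw [← filter_closedSecStrs_eq_image hr, pow_one] at himage
  rw [← himage, arcWeight, ← sum_filter_add_sum_filter_not _ fun M => (1 + r, n + 2 - r) ∈ M]
  rfl

theorem arcWeight_minStackSecStrs (hr : 1 ≤ r) (n : ℕ) :
    arcWeight (minStackSecStrs lam r (n + 2 * r)) =
      Polynomial.X ^ r * arcWeight (innerSecStrs lam r n) := by
  have hinner : ∀ M ∈ innerSecStrs lam r n, IsCanSecStr n lam r M := fun M hM =>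
    mem_secStrs.1 (mem_filter.1 hM).1
  rw [minStackSecStrs_eq_image hr, arcWeight_image r (enclose_injOn r _ hinner)
    fun M hM => card_enclose fun p hp => ((hinner M hM).bounds hp).1]

theorem arcWeight_innerSecStrs (n : ℕ) :
    arcWeight (innerSecStrs lam r n) = arcWeight (secStrs lam r n) -
      arcWeight (closedSecStrs lam r n) - if n < lam - 1 then 1 else 0 := by
  split_ifs with hn
  · have hempty : innerSecStrs lam r n = ∅ :=
      filter_false_of_mem fun M _ hM => by omega
    have hclosed : closedSecStrs lam r n = ∅ := by
      rw [closedSecStrs, secStrs_eq_singleton_empty (by omega)]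
      exact filter_false_of_mem fun M hM => by simp [mem_singleton.1 hM]
    simp [hempty, hclosed, secStrs_eq_singleton_empty (show n ≤ lam by omega), arcWeight]
  · have hinner : innerSecStrs lam r n = (secStrs lam r n).filter fun M => (1, n) ∉ M :=
      filter_congr fun M _ => and_iff_left (by omega)
    rw [sub_zero, hinner, eq_sub_iff_add_eq', arcWeight, arcWeight, arcWeight, closedSecStrs,
      sum_filter_add_sum_filter_not]

end Stacks

theorem coeff_Sgf (lam r n : ℕ) :
    PowerSeries.coeff n (Sgf lam r) = arcWeight (secStrs lam r n) := by
  have hcount : ∀ l, sCount lam r n l = ((secStrs lam r n).filter fun M => M.card = l).card :=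
    fun l => by
      rw [sCount, ← Fintype.card_coe, ← Nat.card_eq_fintype_card]
      exact Nat.card_congr (Equiv.subtypeEquivRight fun M => by rw [mem_filter, mem_secStrs])
  rw [Sgf, PowerSeries.coeff_mk, arcWeight, ← sum_fiberwise_of_maps_to (g := Finset.card)
    (t := range (n + 1)) fun M hM => mem_range.2 (Nat.lt_succ_of_le (mem_secStrs.1 hM).card_le)]
  refine sum_congr rfl fun l _ => ?_
  rw [hcount, sum_congr rfl fun M hM => by rw [(mem_filter.1 hM).2], sum_const, nsmul_eq_mul,
    Polynomial.C_eq_natCast]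

def closedGf (lam r : ℕ) : PowerSeries (Polynomial ℚ) :=
  PowerSeries.mk fun n => arcWeight (closedSecStrs lam r n)

def minStackGf (lam r : ℕ) : PowerSeries (Polynomial ℚ) :=
  PowerSeries.mk fun n => arcWeight (minStackSecStrs lam r n)

theorem coeff_xxy_pow_mul (k m : ℕ) (f : PowerSeries (Polynomial ℚ)) :
    PowerSeries.coeff m (xxy ^ k * f) =
      if 2 * k ≤ m then Polynomial.X ^ k * PowerSeries.coeff (m - 2 * k) f else 0 := by
  have : xxy ^ k * f = PowerSeries.C (Polynomial.X ^ k) * f * PowerSeries.X ^ (2 * k) := by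
    rw [xxy, mul_pow, ← pow_mul, map_pow]; ring
  rw [this, PowerSeries.coeff_mul_X_pow', PowerSeries.coeff_C_mul]

theorem coeff_sum_range_X_pow (l m : ℕ) :
    PowerSeries.coeff m (∑ i ∈ range l, PowerSeries.X ^ i : PowerSeries (Polynomial ℚ)) =
      if m < l then 1 else 0 := by
  simp only [map_sum, PowerSeries.coeff_X_pow, sum_ite_eq, mem_range]

section GeneratingFunctions

variable {lam r : ℕ}

theorem Sgf_eq (hlam : 1 ≤ lam) (hr : 1 ≤ r) :
    Sgf lam r = 1 + PowerSeries.X * Sgf lam r + closedGf lam r * Sgf lam r := by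
  have hU₀ : arcWeight (closedSecStrs lam r 0) = 0 := by
    rw [closedSecStrs_eq_empty hlam (by omega)]; rfl
  refine PowerSeries.ext fun n => ?_
  rcases n with _ | n
  · rw [map_add, map_add, PowerSeries.coeff_zero_X_mul, PowerSeries.coeff_mul,
      Finset.Nat.antidiagonal_zero, sum_singleton, closedGf, PowerSeries.coeff_mk, hU₀, zero_mul,
      add_zero, add_zero, PowerSeries.coeff_one, if_pos rfl, coeff_Sgf,
      secStrs_eq_singleton_empty (Nat.zero_le lam), arcWeight, sum_singleton, card_empty, pow_zero]
  · rw [map_add, map_add, PowerSeries.coeff_succ_X_mul, PowerSeries.coeff_mul,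
      Finset.Nat.sum_antidiagonal_succ, PowerSeries.coeff_one, if_neg n.succ_ne_zero]
    simp only [coeff_Sgf, closedGf, PowerSeries.coeff_mk, hU₀, zero_mul, zero_add,
      arcWeight_secStrs_succ]

theorem one_sub_xxy_mul_closedGf (hlam : 1 ≤ lam) (hr : 1 ≤ r) :
    (1 - xxy) * closedGf lam r = minStackGf lam r := by
  refine PowerSeries.ext fun m => ?_
  rw [sub_mul, one_mul, map_sub, ← pow_one xxy, coeff_xxy_pow_mul]
  simp only [closedGf, minStackGf, PowerSeries.coeff_mk]
  rcases lt_or_ge m 2 with hm | hm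
  · rw [if_neg (by omega), minStackSecStrs, closedSecStrs_eq_empty hlam (by omega), filter_empty,
      sub_zero]
  · obtain ⟨n, rfl⟩ := Nat.exists_eq_add_of_le' hm
    rw [if_pos hm, Nat.add_sub_cancel, pow_one, arcWeight_closedSecStrs_add_two hr]; ring

theorem xxy_pow_mul_eq_minStackGf (hlam : 1 ≤ lam) (hr : 1 ≤ r) :
    xxy ^ r * (Sgf lam r - closedGf lam r - ∑ i ∈ range (lam - 1), PowerSeries.X ^ i) =
      minStackGf lam r := by
  refine PowerSeries.ext fun m => ?_
  rw [coeff_xxy_pow_mul]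
  simp only [minStackGf, PowerSeries.coeff_mk]
  rcases lt_or_ge m (2 * r) with hm | hm
  · rw [if_neg (by omega), minStackSecStrs, closedSecStrs_eq_empty hlam hm, filter_empty]; rfl
  · obtain ⟨n, rfl⟩ := Nat.exists_eq_add_of_le' hm
    rw [if_pos hm, Nat.add_sub_cancel, arcWeight_minStackSecStrs hr, arcWeight_innerSecStrs,
      map_sub, map_sub, coeff_Sgf, closedGf, PowerSeries.coeff_mk, coeff_sum_range_X_pow]

end GeneratingFunctions

end

/-- The generating function of `r`-canonical secondary structures with minimum arc-length `λ`
satisfies `(x²y)^r·S(x,y)² − B(x,y)·S(x,y) + A(x,y) = 0`. -/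
theorem Sgf_functional_equation (lam r : ℕ) (hlam : 1 ≤ lam) (hr : 1 ≤ r) :
    xxy ^ r * (Sgf lam r) ^ 2 - Bgf lam r * Sgf lam r + Agf r = 0 := by
  have hS := Sgf_eq hlam hr
  have hC := (one_sub_xxy_mul_closedGf hlam hr).trans (xxy_pow_mul_eq_minStackGf hlam hr).symm
  rw [Bgf, Agf]
  linear_combination (xxy - 1 - xxy ^ r) * hS - Sgf lam r * hC
end

section
/- Let T(x,y) count reducible r-canonical secondary structures with minimum arc-length λ and let S(x,y) count all such structures. Then S(x,y) − T(x,y) = (x²y)^r/(1 − x²y) · (T(x,y) − Σ_{i=0}^{λ−2} x^i). -/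
open PowerSeries

/-- A structure on `1,…,n` is reducible if it contains no rainbow, i.e. no arc `(1,n)`. -/
def IsReducible (n : ℕ) (M : Finset (ℕ × ℕ)) : Prop :=
  ∀ p ∈ M, ¬ (p.1 = 1 ∧ p.2 = n)

noncomputable def tCount (lam r n l : ℕ) : ℕ :=
  Nat.card {M : Finset (ℕ × ℕ) // IsCanSecStr n lam r M ∧ IsReducible n M ∧ M.card = l}

/-- `T(x,y)`, the generating function of reducible `r`-canonical structures. -/
noncomputable def Tgf (lam r : ℕ) : PowerSeries (Polynomial ℚ) :=
  PowerSeries.mk fun n =>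
    ∑ l ∈ Finset.range (n + 1), Polynomial.C ((tCount lam r n l : ℚ)) * Polynomial.X ^ l

/-!
Let `U = S - T` count the structures containing the rainbow `(1, n)`; by canonicity the outer
stack `(1, n), (2, n - 1), …` of such a structure has at least `r` arcs. Both halves of the
recursion come from one operation, `wrap k n`: shift a structure on `1, …, n` by `k` and enclose
it in a stack of `k` arcs. Wrapping with `k = 1` matches the structures counted by `U` on `n`
vertices with those on `n + 2` whose outer stack has at least `r + 1` arcs; wrapping with `k = r`
matches the reducible structures on `n` vertices with those on `n + 2r` whose outer stack has
exactly `r` arcs, except when the innermost stack arc would be shorter than `λ`, i.e.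
`n < λ - 1`, where only the empty structure is lost. Hence
`U = x²y U + (x²y)^r (T - ∑_{i < λ - 1} x^i)`, and `1 - x²y` is a unit.
-/

namespace SecStr

def IsSecStr (n lam : ℕ) (M : Finset (ℕ × ℕ)) : Prop :=
  (∀ p ∈ M, 1 ≤ p.1 ∧ p.1 + lam ≤ p.2 ∧ p.2 ≤ n) ∧
  (∀ p ∈ M, ∀ q ∈ M, p ≠ q → p.1 ≠ q.1 ∧ p.1 ≠ q.2 ∧ p.2 ≠ q.1 ∧ p.2 ≠ q.2) ∧
  (∀ p ∈ M, ∀ q ∈ M, ¬ (p.1 < q.1 ∧ q.1 < p.2 ∧ p.2 < q.2))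

def HasStack (s : ℕ) (M : Finset (ℕ × ℕ)) (p : ℕ × ℕ) : Prop :=
  ∀ t < s, (p.1 + t, p.2 - t) ∈ M

def IsCanonical (r : ℕ) (M : Finset (ℕ × ℕ)) : Prop :=
  ∀ p ∈ M, (p.1 - 1, p.2 + 1) ∉ M → HasStack r M p

def IsCanonicalExcept (r : ℕ) (M : Finset (ℕ × ℕ)) (a : ℕ × ℕ) : Prop :=
  ∀ p ∈ M, p ≠ a → (p.1 - 1, p.2 + 1) ∉ M → HasStack r M p

variable {n lam r k s t j m l : ℕ} {M N : Finset (ℕ × ℕ)} {p q : ℕ × ℕ}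

theorem isCanSecStr_iff : IsCanSecStr n lam r M ↔ IsSecStr n lam M ∧ IsCanonical r M := by
  simp only [IsCanSecStr, IsSecStr, IsCanonical, HasStack, and_assoc]

theorem IsSecStr.one_le (hM : IsSecStr n lam M) : ∀ p ∈ M, 1 ≤ p.1 :=
  fun p hp => (hM.1 p hp).1

theorem IsSecStr.card_le (hM : IsSecStr n lam M) : M.card ≤ n := by
  simpa using Finset.card_le_card_of_injOn Prod.fst (t := Finset.Icc 1 n)
    (fun p hp => by have := hM.1 p hp; simp only [Finset.coe_Icc, Set.mem_Icc]; omega)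
    (fun p hp q hq h => by_contra fun hne => (hM.2.1 p hp q hq hne).1 h)

theorem setOf_isSecStr_finite (n lam : ℕ) : {M | IsSecStr n lam M}.Finite := by
  refine (Finset.Icc 1 n ×ˢ Finset.Icc 1 n).powerset.finite_toSet.subset fun M hM => ?_
  simp only [Finset.coe_powerset, Set.mem_preimage, Set.mem_powerset_iff, Finset.coe_subset]
  intro p hp
  have := hM.1 p hp
  simp only [Finset.mem_product, Finset.mem_Icc]
  omega

theorem HasStack.mono (h : HasStack s M p) (hts : k ≤ s) : HasStack k M p :=
  fun t ht => h t (by omega)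

theorem HasStack.mem (h : HasStack s M p) (hs : 1 ≤ s) : p ∈ M := by
  simpa using h 0 hs

theorem hasStack_one : HasStack 1 M p ↔ p ∈ M :=
  ⟨fun h => h.mem le_rfl, fun h t ht => by simpa [Nat.lt_one_iff.1 ht] using h⟩

theorem hasStack_add :
    HasStack (s + k) M p ↔ HasStack s M p ∧ HasStack k M (p.1 + s, p.2 - s) := by
  refine ⟨fun h => ⟨h.mono (by omega), fun t ht => ?_⟩, fun ⟨h₁, h₂⟩ t ht => ?_⟩
  · simpa [add_assoc, Nat.sub_sub] using h (s + t) (by omega)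
  · rcases lt_or_ge t s with hts | hts
    · exact h₁ t hts
    · obtain ⟨t, rfl⟩ := Nat.exists_eq_add_of_le hts
      simpa [add_assoc, Nat.sub_sub] using h₂ t (by omega)

theorem isCanonical_iff_except (hM : ∀ p ∈ M, 1 ≤ p.1) :
    IsCanonical r M ↔ IsCanonicalExcept r M (1, n) ∧ ((1, n) ∈ M → HasStack r M (1, n)) := by
  have hroot : ((1 : ℕ) - 1, n + 1) ∉ M := fun h => by simpa using hM _ h
  refine ⟨fun h => ⟨fun p hp _ => h p hp, fun h1 => h _ h1 hroot⟩, fun ⟨h, h1⟩ p hp => ?_⟩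
  rcases eq_or_ne p (1, n) with rfl | hne
  · exact fun _ => h1 hp
  · exact h p hp hne

def stack (k n : ℕ) : Finset (ℕ × ℕ) :=
  (Finset.range k).image fun t => (1 + t, n + 2 * k - t)

def wrap (k n : ℕ) (N : Finset (ℕ × ℕ)) : Finset (ℕ × ℕ) :=
  stack k n ∪ N.image fun q => (q.1 + k, q.2 + k)

theorem mem_wrap : p ∈ wrap k n N ↔
    (∃ t < k, (1 + t, n + 2 * k - t) = p) ∨ ∃ q ∈ N, (q.1 + k, q.2 + k) = p := by
  simp [wrap, stack]

theorem mem_wrap_of_lt (hp : k < p.1) : p ∈ wrap k n N ↔ k ≤ p.2 ∧ (p.1 - k, p.2 - k) ∈ N := by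
  rw [mem_wrap]
  constructor
  · rintro (⟨t, ht, rfl⟩ | ⟨q, hq, rfl⟩)
    · dsimp only at hp; omega
    · simpa using hq
  · exact fun ⟨h2, h⟩ => Or.inr ⟨_, h, Prod.ext (by dsimp only; omega) (by dsimp only; omega)⟩

theorem shift_mem_wrap (hq : 1 ≤ q.1) : (q.1 + k, q.2 + k) ∈ wrap k n N ↔ q ∈ N := by
  rw [mem_wrap_of_lt (by dsimp only; omega)]
  simp

theorem stack_mem_wrap (ht : t < k) : (1 + t, n + 2 * k - t) ∈ wrap k n N :=
  mem_wrap.2 (Or.inl ⟨t, ht, rfl⟩)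

theorem hasStack_stack_wrap : HasStack k (wrap k n N) (1, n + 2 * k) :=
  fun _ ht => stack_mem_wrap ht

theorem card_wrap (hN : ∀ q ∈ N, 1 ≤ q.1) : (wrap k n N).card = k + N.card := by
  rw [wrap, Finset.card_union_of_disjoint, stack, Finset.card_image_of_injective,
    Finset.card_image_of_injective, Finset.card_range]
  · exact fun q q' h => by simp only [Prod.mk.injEq, add_left_inj] at h; exact Prod.ext h.1 h.2
  · exact fun t t' h => by simp only [Prod.mk.injEq] at h; omega
  · simp only [stack, Finset.disjoint_left, Finset.mem_image, Finset.mem_range, not_exists,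
      not_and]
    rintro _ ⟨t, ht, rfl⟩ q hq h
    have := hN q hq
    simp only [Prod.mk.injEq] at h
    omega

theorem injOn_wrap : Set.InjOn (wrap k n) {N | ∀ q ∈ N, 1 ≤ q.1} := by
  intro N hN N' hN' h
  ext q
  constructor
  · intro hq
    have hq1 := hN q hq
    rwa [← shift_mem_wrap hq1, h, shift_mem_wrap hq1] at hq
  · intro hq
    have hq1 := hN' q hq
    rwa [← shift_mem_wrap (k := k) (n := n) hq1, ← h, shift_mem_wrap hq1] at hq

/-- Arcs of `M` starting at `1, …, k` are stack arcs, since left endpoints are distinct;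
all other arcs are shifted arcs. -/
theorem exists_eq_wrap (hM : IsSecStr (n + 2 * k) lam M)
    (hs : HasStack k M (1, n + 2 * k)) : ∃ N, (∀ q ∈ N, 1 ≤ q.1) ∧ wrap k n N = M := by
  refine ⟨(M.filter (k < ·.1)).image fun p => (p.1 - k, p.2 - k), ?_, ?_⟩
  · simp only [Finset.mem_image, Finset.mem_filter]
    rintro _ ⟨p, ⟨-, hp⟩, rfl⟩
    dsimp only
    omega
  ext p
  rw [mem_wrap]
  constructor
  · rintro (⟨t, ht, rfl⟩ | ⟨_, hq, rfl⟩)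
    · exact hs t ht
    · obtain ⟨p, hp, rfl⟩ := Finset.mem_image.1 hq
      obtain ⟨hpM, hpk⟩ := Finset.mem_filter.1 hp
      have := hM.1 p hpM
      convert hpM using 1
      exact Prod.ext (by dsimp only; omega) (by dsimp only; omega)
  · intro hp
    by_cases hpk : k < p.1
    · exact Or.inr ⟨_, Finset.mem_image_of_mem _ (Finset.mem_filter.2 ⟨hp, hpk⟩),
        Prod.ext (by dsimp only; omega) (by dsimp only; have := hM.1 p hp; omega)⟩
    · have h1 := (hM.1 p hp).1
      have hst := hs (p.1 - 1) (by omega)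
      refine Or.inl ⟨p.1 - 1, by omega, by_contra fun hne => ?_⟩
      exact (hM.2.1 _ hst p hp hne).1 (by dsimp only; omega)

theorem IsSecStr.wrap (hlam : lam ≤ n + 1) (hN : IsSecStr n lam N) :
    IsSecStr (n + 2 * k) lam (SecStr.wrap k n N) := by
  obtain ⟨h1, h2, h3⟩ := hN
  refine ⟨?_, ?_, ?_⟩
  · intro _ hx
    rcases mem_wrap.1 hx with ⟨t, ht, rfl⟩ | ⟨q, hq, rfl⟩ <;> dsimp only
    · omega
    · have := h1 q hq; omega
  · rintro _ hx _ hy hne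
    rcases mem_wrap.1 hx with ⟨t, ht, rfl⟩ | ⟨p, hp, rfl⟩ <;>
      rcases mem_wrap.1 hy with ⟨t', ht', rfl⟩ | ⟨q, hq, rfl⟩ <;> dsimp only
    · have : t ≠ t' := by rintro rfl; exact hne rfl
      omega
    · have := h1 q hq; omega
    · have := h1 p hp; omega
    · have := h2 p hp q hq (by rintro rfl; exact hne rfl); omega
  · rintro _ hx _ hy
    rcases mem_wrap.1 hx with ⟨t, ht, rfl⟩ | ⟨p, hp, rfl⟩ <;>
      rcases mem_wrap.1 hy with ⟨t', ht', rfl⟩ | ⟨q, hq, rfl⟩ <;> dsimp only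
    · omega
    · have := h1 q hq; omega
    · have := h1 p hp; omega
    · have := h3 p hp q hq; omega

/-- The innermost stack arc `(k, n + k + 1)` bounds the shifted arcs: they neither share an
endpoint with a stack arc nor leave `k + 1, …, n + k`. -/
theorem IsSecStr.of_wrap (hk : 1 ≤ k) (hN : ∀ q ∈ N, 1 ≤ q.1)
    (h : IsSecStr (n + 2 * k) lam (SecStr.wrap k n N)) : lam ≤ n + 1 ∧ IsSecStr n lam N := by
  obtain ⟨h1, h2, h3⟩ := h
  have hshift : ∀ q ∈ N, (q.1 + k, q.2 + k) ∈ SecStr.wrap k n N := fun q hq =>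
    (shift_mem_wrap (hN q hq)).2 hq
  have hinner := h1 _ (stack_mem_wrap (n := n) (N := N) (show k - 1 < k by omega))
  refine ⟨by dsimp only at hinner; omega, fun q hq => ?_, fun p hp q hq hne => ?_,
    fun p hp q hq => ?_⟩
  · have hq1 := hN q hq
    have := h1 _ (hshift q hq)
    dsimp only at this
    refine ⟨hq1, by omega, by_contra fun hqn => ?_⟩
    have hst := stack_mem_wrap (n := n) (N := N) (show n + 2 * k - (q.2 + k) < k by omega)
    have := (h2 _ (hshift q hq) _ hst (by simp only [ne_eq, Prod.mk.injEq]; omega)).2.2.2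
    dsimp only at this
    omega
  · have := h2 _ (hshift p hp) _ (hshift q hq) (by simpa [Prod.ext_iff] using hne)
    dsimp only at this
    omega
  · have := h3 _ (hshift p hp) _ (hshift q hq)
    dsimp only at this
    omega

theorem hasStack_shift_wrap_iff (hN : IsSecStr n lam N) (hq : 1 ≤ q.1) :
    HasStack s (wrap k n N) (q.1 + k, q.2 + k) ↔ HasStack s N q := by
  refine forall₂_congr fun t _ => ?_
  rw [mem_wrap_of_lt (by dsimp only; omega)]
  have e : (q.1 + k + t - k, q.2 + k - t - k) = (q.1 + t, q.2 - t) :=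
    Prod.ext (by dsimp only; omega) (by dsimp only; omega)
  rw [e]
  exact ⟨And.right, fun h => ⟨by have := hN.1 _ h; dsimp only at this ⊢; omega, h⟩⟩

theorem hasStack_wrap_iff (hN : IsSecStr n lam N) :
    HasStack s (wrap k n N) (1, n + 2 * k) ↔ HasStack (s - k) N (1, n) := by
  rcases le_total s k with hsk | hks
  · rw [Nat.sub_eq_zero_of_le hsk]
    exact iff_of_true (hasStack_stack_wrap.mono hsk) fun _ ht => absurd ht (Nat.not_lt_zero _)
  · obtain ⟨s, rfl⟩ := Nat.exists_eq_add_of_le hks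
    rw [hasStack_add, Nat.add_sub_cancel_left]
    have e : ((1, n + 2 * k).1 + k, (1, n + 2 * k).2 - k) = ((1, n).1 + k, (1, n).2 + k) :=
      Prod.ext rfl (by dsimp only; omega)
    rw [e, hasStack_shift_wrap_iff hN le_rfl]
    exact and_iff_right hasStack_stack_wrap

theorem one_le_of_mem_wrap (hk : 1 ≤ k) : ∀ p ∈ wrap k n N, 1 ≤ p.1 := by
  intro _ hp
  rcases mem_wrap.1 hp with ⟨t, -, rfl⟩ | ⟨q, hq, rfl⟩
  · exact Nat.le_add_right 1 t
  · exact le_add_left hk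

theorem parent_shift_mem_wrap_iff (hN : ∀ q ∈ N, 1 ≤ q.1) (hq : 1 ≤ q.1) (hne : q ≠ (1, n)) :
    (q.1 + k - 1, q.2 + k + 1) ∈ wrap k n N ↔ (q.1 - 1, q.2 + 1) ∈ N := by
  rw [mem_wrap]
  constructor
  · rintro (⟨t, ht, h⟩ | ⟨q', hq', h⟩) <;> simp only [Prod.mk.injEq] at h
    · exact absurd (Prod.ext (by omega) (by omega)) hne
    · have := hN q' hq'
      convert hq' using 1
      exact Prod.ext (by omega) (by omega)
  · intro h
    have := hN _ h
    exact Or.inr ⟨_, h, Prod.ext (by dsimp only at this ⊢; omega) (by dsimp only; omega)⟩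

/-- Wrapping gives every arc of `N` except `(1, n)` its parent back, while `(1, n)` acquires
the innermost stack arc as parent and the stack on `(1, n + 2k)` continues into `N`. -/
theorem isCanonical_wrap_iff (hk : 1 ≤ k) (hN : IsSecStr n lam N) :
    IsCanonical r (wrap k n N) ↔ IsCanonicalExcept r N (1, n) ∧ HasStack (r - k) N (1, n) := by
  have hN1 := hN.one_le
  have hroot : ((1 : ℕ) - 1, n + 2 * k + 1) ∉ wrap k n N := fun h => by
    simpa using one_le_of_mem_wrap hk _ h
  constructor
  · intro h
    refine ⟨fun q hq hne hpar => ?_, ?_⟩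
    · refine (hasStack_shift_wrap_iff hN (hN1 q hq)).1
        (h _ ((shift_mem_wrap (hN1 q hq)).2 hq) ?_)
      rwa [parent_shift_mem_wrap_iff hN1 (hN1 q hq) hne]
    · exact (hasStack_wrap_iff hN).1
        (h _ (by simpa using stack_mem_wrap (n := n) (N := N) hk) hroot)
  · rintro ⟨hin, htop⟩ _ hp hpar
    rcases mem_wrap.1 hp with ⟨t, ht, rfl⟩ | ⟨q, hq, rfl⟩
    · obtain rfl : t = 0 := by
        by_contra ht0
        refine hpar ?_
        convert stack_mem_wrap (n := n) (N := N) (show t - 1 < k by omega) using 1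
        exact Prod.ext (by dsimp only; omega) (by dsimp only; omega)
      simpa using (hasStack_wrap_iff hN).2 htop
    · have hne : q ≠ (1, n) := by
        rintro rfl
        refine hpar ?_
        convert stack_mem_wrap (n := n) (N := N) (show k - 1 < k by omega) using 1
        exact Prod.ext (by dsimp only; omega) (by dsimp only; omega)
      refine (hasStack_shift_wrap_iff hN (hN1 q hq)).2 (hin q hq hne fun h => hpar ?_)
      exact (parent_shift_mem_wrap_iff hN1 (hN1 q hq) hne).2 h

theorem isCanSecStr_wrap_iff (hk : 1 ≤ k) (hN : ∀ q ∈ N, 1 ≤ q.1) :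
    IsCanSecStr (n + 2 * k) lam r (wrap k n N) ↔ lam ≤ n + 1 ∧ IsSecStr n lam N ∧
      IsCanonicalExcept r N (1, n) ∧ HasStack (r - k) N (1, n) := by
  rw [isCanSecStr_iff]
  constructor
  · rintro ⟨hW, hcan⟩
    obtain ⟨hlam, hsec⟩ := hW.of_wrap hk hN
    exact ⟨hlam, hsec, (isCanonical_wrap_iff hk hsec).1 hcan⟩
  · rintro ⟨hlam, hsec, h⟩
    exact ⟨hsec.wrap hlam, (isCanonical_wrap_iff hk hsec).2 h⟩

def canSet (lam r n j : ℕ) : Set (Finset (ℕ × ℕ)) :=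
  {M | IsCanSecStr n lam r M ∧ M.card = j}

def reducibleSet (lam r n j : ℕ) : Set (Finset (ℕ × ℕ)) :=
  {M ∈ canSet lam r n j | (1, n) ∉ M}

def stackSet (lam r n j s : ℕ) : Set (Finset (ℕ × ℕ)) :=
  {M ∈ canSet lam r n j | HasStack s M (1, n)}

theorem canSet_finite : (canSet lam r n j).Finite :=
  (setOf_isSecStr_finite n lam).subset fun _ hM => (isCanSecStr_iff.1 hM.1).1

theorem canSet_eq_empty (h : n < j) : canSet lam r n j = ∅ :=
  Set.eq_empty_of_forall_notMem fun _ ⟨hM, hc⟩ => by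
    have := (isCanSecStr_iff.1 hM).1.card_le
    omega

theorem sCount_eq : sCount lam r n j = (canSet lam r n j).ncard :=
  Nat.card_coe_set_eq _

theorem isReducible_iff : IsReducible n M ↔ (1, n) ∉ M :=
  ⟨fun h hM => h _ hM ⟨rfl, rfl⟩, fun h p hp ⟨h1, h2⟩ => h (by rwa [← h1, ← h2])⟩

theorem tCount_eq : tCount lam r n j = (reducibleSet lam r n j).ncard := by
  rw [tCount, ← Nat.card_coe_set_eq]
  refine Nat.card_congr (Equiv.subtypeEquivRight fun M => ?_)
  simp only [reducibleSet, canSet, isReducible_iff, Set.mem_ofPred_eq]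
  tauto

theorem hasStack_iff_mem (hr : 1 ≤ r) (hM : IsCanSecStr n lam r M) :
    HasStack r M (1, n) ↔ (1, n) ∈ M := by
  rw [isCanSecStr_iff] at hM
  exact ⟨fun h => h.mem hr, ((isCanonical_iff_except hM.1.one_le).1 hM.2).2⟩

theorem sCount_eq_tCount_add (hr : 1 ≤ r) :
    sCount lam r n j = tCount lam r n j + (stackSet lam r n j r).ncard := by
  rw [sCount_eq, tCount_eq, ← Set.ncard_inter_add_ncard_sdiff_eq_ncard (canSet lam r n j)
    {M | HasStack r M (1, n)} canSet_finite, add_comm]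
  congr 2
  ext M
  simp only [reducibleSet, Set.mem_sdiff, Set.mem_ofPred_eq, and_congr_right_iff]
  exact fun hM => not_congr (hasStack_iff_mem hr hM.1)

theorem ncard_stackSet_eq_add :
    (stackSet lam r n j r).ncard =
      (stackSet lam r n j (r + 1)).ncard +
        (stackSet lam r n j r \ stackSet lam r n j (r + 1)).ncard := by
  rw [add_comm, Set.ncard_sdiff_add_ncard_of_subset
    (show stackSet lam r n j (r + 1) ⊆ stackSet lam r n j r from
      fun _ hM => ⟨hM.1, hM.2.mono (by omega)⟩)
    (canSet_finite.subset fun _ hM => hM.1)]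

theorem stackSet_eq_empty (hs : 1 ≤ s) (h : n + 1 < 2 * s + lam ∨ j < s) :
    stackSet lam r n j s = ∅ := by
  refine Set.eq_empty_of_forall_notMem fun M ⟨⟨hM, hc⟩, hst⟩ => ?_
  have hsec := (isCanSecStr_iff.1 hM).1
  have hin := hsec.1 _ (hst (s - 1) (by omega))
  dsimp only at hin
  have hcard := Finset.card_le_card_of_injOn (fun t => (1 + t, n - t)) (s := Finset.range s)
    (fun t ht => hst t (Finset.mem_range.1 ht))
    (fun t _ t' _ h => by simpa using congrArg Prod.fst h)
  rw [Finset.card_range] at hcard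
  omega

theorem image_wrap_stackSet (hr : 1 ≤ r) :
    wrap 1 n '' stackSet lam r n j r = stackSet lam r (n + 2) (j + 1) (r + 1) := by
  ext M
  constructor
  · rintro ⟨N, ⟨⟨hN, hcard⟩, hst⟩, rfl⟩
    obtain ⟨hsec, hcan⟩ := isCanSecStr_iff.1 hN
    have hlam := hsec.1 _ (hst.mem hr)
    refine ⟨⟨(isCanSecStr_wrap_iff le_rfl hsec.one_le).2 ⟨by dsimp only at hlam; omega, hsec,
      ((isCanonical_iff_except hsec.one_le).1 hcan).1, hst.mono (by omega)⟩, ?_⟩, ?_⟩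
    · rw [card_wrap hsec.one_le, hcard, add_comm]
    · exact (hasStack_wrap_iff (k := 1) hsec).2 hst
  · rintro ⟨⟨hM, hcard⟩, hst⟩
    obtain ⟨N, hN, rfl⟩ := exists_eq_wrap (k := 1) (isCanSecStr_iff.1 hM).1 (hst.mono (by omega))
    obtain ⟨-, hsec, hexc, -⟩ := (isCanSecStr_wrap_iff le_rfl hN).1 hM
    have hstN : HasStack r N (1, n) := (hasStack_wrap_iff (k := 1) hsec).1 hst
    refine ⟨N, ⟨⟨isCanSecStr_iff.2 ⟨hsec, (isCanonical_iff_except hN).2 ⟨hexc, fun _ => hstN⟩⟩,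
      ?_⟩, hstN⟩, rfl⟩
    rw [card_wrap hN] at hcard
    omega

theorem ncard_stackSet_succ (hr : 1 ≤ r) :
    (stackSet lam r (n + 2) (j + 1) (r + 1)).ncard = (stackSet lam r n j r).ncard := by
  rw [← image_wrap_stackSet hr, Set.InjOn.ncard_image (injOn_wrap.mono fun N hN =>
    (isCanSecStr_iff.1 hN.1.1).1.one_le)]

theorem image_wrap_reducibleSet (hr : 1 ≤ r) (hlam : lam ≤ m + 1) :
    wrap r m '' reducibleSet lam r m l =
      stackSet lam r (m + 2 * r) (l + r) r \ stackSet lam r (m + 2 * r) (l + r) (r + 1) := by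
  ext M
  have hstack : ∀ {N}, IsSecStr m lam N →
      (HasStack (r + 1) (wrap r m N) (1, m + 2 * r) ↔ (1, m) ∈ N) := fun hsec => by
    rw [hasStack_wrap_iff hsec, Nat.add_sub_cancel_left, hasStack_one]
  constructor
  · rintro ⟨N, ⟨⟨hN, hcard⟩, hred⟩, rfl⟩
    obtain ⟨hsec, hcan⟩ := isCanSecStr_iff.1 hN
    refine ⟨⟨⟨(isCanSecStr_wrap_iff hr hsec.one_le).2 ⟨hlam, hsec,
      ((isCanonical_iff_except hsec.one_le).1 hcan).1, by simp [HasStack]⟩, ?_⟩,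
      hasStack_stack_wrap⟩, fun h => hred ((hstack hsec).1 h.2)⟩
    rw [card_wrap hsec.one_le, hcard, add_comm]
  · rintro ⟨⟨⟨hM, hcard⟩, hst⟩, hnot⟩
    obtain ⟨N, hN, rfl⟩ := exists_eq_wrap (isCanSecStr_iff.1 hM).1 hst
    obtain ⟨-, hsec, hexc, -⟩ := (isCanSecStr_wrap_iff hr hN).1 hM
    have hred : (1, m) ∉ N := fun h => hnot ⟨⟨hM, hcard⟩, (hstack hsec).2 h⟩
    refine ⟨N, ⟨⟨isCanSecStr_iff.2 ⟨hsec, (isCanonical_iff_except hN).2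
      ⟨hexc, fun h => absurd h hred⟩⟩, ?_⟩, hred⟩, rfl⟩
    rw [card_wrap hN] at hcard
    omega

theorem ncard_stackSet_sdiff (hr : 1 ≤ r) (hlam : lam ≤ m + 1) :
    (stackSet lam r (m + 2 * r) (l + r) r \ stackSet lam r (m + 2 * r) (l + r) (r + 1)).ncard =
      tCount lam r m l := by
  rw [← image_wrap_reducibleSet hr hlam, Set.InjOn.ncard_image (injOn_wrap.mono fun N hN =>
    (isCanSecStr_iff.1 hN.1.1).1.one_le), tCount_eq]

theorem tCount_of_lt (h : n + 1 < lam) : tCount lam r n j = if j = 0 then 1 else 0 := by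
  have hempty : ∀ M ∈ canSet lam r n j, M = ∅ := fun M hM =>
    Finset.eq_empty_of_forall_notMem fun p hp => by
      have := (isCanSecStr_iff.1 hM.1).1.1 p hp
      omega
  rw [tCount_eq]
  split_ifs with hj
  · subst hj
    refine Set.ncard_eq_one.2 ⟨∅, Set.eq_singleton_iff_unique_mem.2 ⟨?_, fun M hM => hempty M hM.1⟩⟩
    refine ⟨⟨isCanSecStr_iff.2 ⟨⟨?_, ?_, ?_⟩, ?_⟩, rfl⟩, ?_⟩ <;> simp [IsCanonical]
  · convert Set.ncard_empty (Finset (ℕ × ℕ))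
    refine Set.eq_empty_of_forall_notMem fun M hM => hj ?_
    rw [← hM.1.2, hempty M hM.1, Finset.card_empty]

theorem ncard_stackSet_sdiff_eq (hlam : 1 ≤ lam) (hr : 1 ≤ r) :
    ((stackSet lam r n j r \ stackSet lam r n j (r + 1)).ncard : ℤ) =
      if 2 * r ≤ n ∧ r ≤ j then
        (tCount lam r (n - 2 * r) (j - r) : ℤ) - if n - 2 * r + 1 < lam ∧ j - r = 0 then 1 else 0
      else 0 := by
  split_ifs with h hsmall
  · obtain ⟨m, rfl⟩ := Nat.exists_eq_add_of_le' h.1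
    obtain ⟨l, rfl⟩ := Nat.exists_eq_add_of_le' h.2
    simp only [Nat.add_sub_cancel] at hsmall ⊢
    rw [stackSet_eq_empty hr (by omega), Set.empty_sdiff, Set.ncard_empty,
      tCount_of_lt hsmall.1, if_pos hsmall.2]
    simp
  · obtain ⟨m, rfl⟩ := Nat.exists_eq_add_of_le' h.1
    obtain ⟨l, rfl⟩ := Nat.exists_eq_add_of_le' h.2
    simp only [Nat.add_sub_cancel] at hsmall ⊢
    by_cases hlam' : lam ≤ m + 1
    · rw [ncard_stackSet_sdiff hr hlam', sub_zero]
    · rw [stackSet_eq_empty hr (by omega), Set.empty_sdiff, Set.ncard_empty,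
        tCount_of_lt (by omega)]
      simp_all
  · rw [stackSet_eq_empty hr (by omega), Set.empty_sdiff, Set.ncard_empty, Nat.cast_zero]

theorem ncard_stackSet_rec (hlam : 1 ≤ lam) (hr : 1 ≤ r) (n j : ℕ) :
    ((stackSet lam r n j r).ncard : ℤ) =
      (if 2 ≤ n ∧ 1 ≤ j then ((stackSet lam r (n - 2) (j - 1) r).ncard : ℤ) else 0) +
        if 2 * r ≤ n ∧ r ≤ j then
          (tCount lam r (n - 2 * r) (j - r) : ℤ) - if n - 2 * r + 1 < lam ∧ j - r = 0 then 1 else 0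
        else 0 := by
  have hlong : (stackSet lam r n j (r + 1)).ncard =
      if 2 ≤ n ∧ 1 ≤ j then (stackSet lam r (n - 2) (j - 1) r).ncard else 0 := by
    split_ifs with h
    · obtain ⟨n, rfl⟩ := Nat.exists_eq_add_of_le' h.1
      obtain ⟨j, rfl⟩ := Nat.exists_eq_add_of_le' h.2
      exact ncard_stackSet_succ hr
    · rw [stackSet_eq_empty (by omega) (by omega), Set.ncard_empty]
  rw [ncard_stackSet_eq_add, Nat.cast_add, hlong, ncard_stackSet_sdiff_eq hlam hr]
  push_cast
  rfl

end SecStr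

open SecStr

theorem Polynomial.coeff_sum_range_C_mul_X_pow {R : Type*} [Semiring R] {n : ℕ} {f : ℕ → R}
    (hf : ∀ l, n < l → f l = 0) (j : ℕ) :
    (∑ l ∈ Finset.range (n + 1), Polynomial.C (f l) * Polynomial.X ^ l).coeff j = f j := by
  simp only [Polynomial.finsetSum_coeff, Polynomial.coeff_C_mul_X_pow, Finset.sum_ite_eq,
    Finset.mem_range]
  split_ifs with h
  · rfl
  · exact (hf j (by omega)).symm

theorem coeff_coeff_Sgf (lam r n j : ℕ) : (coeff n (Sgf lam r)).coeff j = sCount lam r n j := by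
  rw [Sgf, coeff_mk, Polynomial.coeff_sum_range_C_mul_X_pow]
  intro l hl
  rw [sCount_eq, canSet_eq_empty hl, Set.ncard_empty, Nat.cast_zero]

theorem coeff_coeff_Tgf (lam r n j : ℕ) : (coeff n (Tgf lam r)).coeff j = tCount lam r n j := by
  rw [Tgf, coeff_mk, Polynomial.coeff_sum_range_C_mul_X_pow]
  intro l hl
  have hempty : reducibleSet lam r n l = ∅ :=
    Set.subset_empty_iff.1 fun _ hM => canSet_eq_empty (r := r) (lam := lam) hl ▸ hM.1
  rw [tCount_eq, hempty, Set.ncard_empty, Nat.cast_zero]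

theorem coeff_coeff_xxy_pow_mul (F : PowerSeries (Polynomial ℚ)) (k n j : ℕ) :
    (coeff n (xxy ^ k * F)).coeff j =
      if 2 * k ≤ n ∧ k ≤ j then (coeff (n - 2 * k) F).coeff (j - k) else 0 := by
  rw [xxy, mul_pow, ← pow_mul, ← map_pow, mul_comm, ← mul_assoc, coeff_mul_C, mul_comm F,
    coeff_X_pow_mul', mul_comm 2]
  split_ifs with h1 h2 h2 <;> simp_all [Polynomial.coeff_mul_X_pow']

theorem coeff_coeff_sum_range_X_pow (lam n j : ℕ) :
    (coeff n (∑ i ∈ Finset.range (lam - 1), (X : PowerSeries (Polynomial ℚ)) ^ i)).coeff j =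
      if n + 1 < lam ∧ j = 0 then 1 else 0 := by
  simp only [map_sum, coeff_X_pow, Finset.sum_ite_eq, Finset.mem_range]
  by_cases h : n + 1 < lam
  · rw [if_pos (by omega)]
    simp [Polynomial.coeff_one, h]
  · rw [if_neg (by omega), if_neg (by tauto), Polynomial.coeff_zero]

theorem isUnit_one_sub_xxy : IsUnit (1 - xxy) := by
  rw [isUnit_iff_constantCoeff, xxy]
  simp

/-- `S(x,y) − T(x,y) = (x²y)^r/(1 − x²y) · (T(x,y) − Σ_{i=0}^{λ−2} x^i)`. -/
theorem Sgf_sub_Tgf (lam r : ℕ) (hlam : 1 ≤ lam) (hr : 1 ≤ r) :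
    Sgf lam r - Tgf lam r =
      xxy ^ r * Ring.inverse (1 - xxy) *
        (Tgf lam r - ∑ i ∈ Finset.range (lam - 1), PowerSeries.X ^ i) := by
  have hrec : Sgf lam r - Tgf lam r = xxy ^ 1 * (Sgf lam r - Tgf lam r) +
      xxy ^ r * (Tgf lam r - ∑ i ∈ Finset.range (lam - 1), PowerSeries.X ^ i) := by
    ext n j
    simp only [map_add, map_sub, Polynomial.coeff_add, Polynomial.coeff_sub,
      coeff_coeff_xxy_pow_mul, coeff_coeff_Sgf, coeff_coeff_Tgf, coeff_coeff_sum_range_X_pow,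
      sCount_eq_tCount_add hr, Nat.cast_add, add_sub_cancel_left, mul_one]
    exact_mod_cast ncard_stackSet_rec hlam hr n j
  calc Sgf lam r - Tgf lam r
      = Ring.inverse (1 - xxy) * ((1 - xxy) * (Sgf lam r - Tgf lam r)) := by
        rw [← mul_assoc, Ring.inverse_mul_cancel _ isUnit_one_sub_xxy, one_mul]
    _ = _ := by
        rw [show (1 - xxy) * (Sgf lam r - Tgf lam r) =
          xxy ^ r * (Tgf lam r - ∑ i ∈ Finset.range (lam - 1), PowerSeries.X ^ i) by
            linear_combination hrec]
        ring
end

section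
/- Let s_p(n) be the number of r-canonical secondary structures of length n with minimum arc-length λ admitting a compatible RY-sequence with ⌊pn⌋ purines, and let s(n,l) be the number of such structures with l arcs. Then a structure with l arcs admits such a compatible sequence if and only if l ≤ min(⌊pn⌋, ⌈(1−p)n⌉); consequently s_p(n) = Σ_{l=0}^{min(⌊pn⌋,⌈(1−p)n⌉)} s(n,l). -/
/-- `f : {1,…,n} → {R,Y}` (with `true` = purine R, `false` = pyrimidine Y) is a compatible
RY-sequence for `M` with exactly `m` purines: the endpoints of each arc carry different
letters, and exactly `m` of the `n` positions carry the letter R. -/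
def IsCompatibleRY (n m : ℕ) (M : Finset (ℕ × ℕ)) (f : ℕ → Bool) : Prop :=
  (∀ p ∈ M, f p.1 ≠ f p.2) ∧ ((Finset.Icc 1 n).filter fun v => f v = true).card = m

open Finset

lemma Nat.ceil_natCast_sub {x : ℝ} {n : ℕ} (hx₀ : 0 ≤ x) (hxn : x ≤ n) :
    ⌈(n : ℝ) - x⌉₊ = n - ⌊x⌋₊ := by
  have hint : ⌈(n : ℝ) - x⌉ = n - ⌊x⌋ := by
    rw [sub_eq_add_neg, Int.ceil_natCast_add, Int.ceil_neg, sub_eq_add_neg]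
  have hfloor : ⌊x⌋ ≤ n := (Int.floor_mono hxn).trans_eq (Int.floor_natCast n)
  rw [← Int.ceil_toNat, ← Int.floor_toNat, hint]
  have := Int.floor_nonneg.2 hx₀
  omega

section Matching

variable {α : Type*}

def IsMatchingOn (V : Finset α) (M : Finset (α × α)) : Prop :=
  (∀ q ∈ M, q.1 ∈ V ∧ q.2 ∈ V ∧ q.1 ≠ q.2) ∧
  ∀ q ∈ M, ∀ q' ∈ M, q ≠ q' → q.1 ≠ q'.1 ∧ q.1 ≠ q'.2 ∧ q.2 ≠ q'.1 ∧ q.2 ≠ q'.2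

namespace IsMatchingOn

variable {V : Finset α} {M : Finset (α × α)}

lemma card_le_card_filter (hM : IsMatchingOn V M) {f : α → Bool} (hf : ∀ q ∈ M, f q.1 ≠ f q.2)
    (b : Bool) : #M ≤ #{v ∈ V | f v = b} := by
  refine card_le_card_of_injOn (fun q => if f q.1 = b then q.1 else q.2) (fun q hq => ?_) ?_
  · obtain ⟨h₁, h₂, -⟩ := hM.1 q hq
    have := hf q hq
    by_cases hb : f q.1 = b <;> simp only [hb, if_true, if_false, coe_filter, Set.mem_ofPred_eq]
    · exact ⟨h₁, trivial⟩
    · exact ⟨h₂, by revert hb this; cases f q.1 <;> cases f q.2 <;> cases b <;> simp⟩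
  · intro q hq q' hq' heq
    by_contra hne
    have := hM.2 q hq q' hq' hne
    simp only at heq
    split_ifs at heq <;> tauto

variable [DecidableEq α]

lemma card_fst_image (hM : IsMatchingOn V M) : #(M.image Prod.fst) = #M :=
  card_image_of_injOn fun q hq q' hq' h => by_contra fun hne => (hM.2 q hq q' hq' hne).1 h

lemma card_snd_image (hM : IsMatchingOn V M) : #(M.image Prod.snd) = #M :=
  card_image_of_injOn fun q hq q' hq' h => by_contra fun hne => (hM.2 q hq q' hq' hne).2.2.2 h

lemma disjoint_fst_image_snd_image (hM : IsMatchingOn V M) :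
    Disjoint (M.image Prod.fst) (M.image Prod.snd) := by
  simp only [disjoint_left, mem_image, not_exists, not_and]
  rintro _ ⟨q, hq, rfl⟩ q' hq' h
  by_cases hqq' : q' = q
  · exact (hM.1 q hq).2.2 (hqq' ▸ h).symm
  · exact (hM.2 q' hq' q hq hqq').2.2.1 h

lemma fst_image_subset (hM : IsMatchingOn V M) : M.image Prod.fst ⊆ V :=
  image_subset_iff.2 fun q hq => (hM.1 q hq).1

lemma snd_image_subset (hM : IsMatchingOn V M) : M.image Prod.snd ⊆ V :=
  image_subset_iff.2 fun q hq => (hM.1 q hq).2.1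

lemma exists_coloring_iff (hM : IsMatchingOn V M) (m : ℕ) :
    (∃ f : α → Bool, (∀ q ∈ M, f q.1 ≠ f q.2) ∧ #{v ∈ V | f v = true} = m) ↔
      #M ≤ m ∧ m + #M ≤ #V := by
  constructor
  · rintro ⟨f, hf, rfl⟩
    have hsplit := card_filter_add_card_filter_not (s := V) (fun v => f v = true)
    simp only [Bool.not_eq_true] at hsplit
    have := hM.card_le_card_filter hf false
    exact ⟨hM.card_le_card_filter hf true, by omega⟩
  · rintro ⟨hm, hmV⟩
    -- colour the left ends `R`, the right ends `Y`, and fill up with unpaired vertices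
    obtain ⟨S, hLS, hSR, rfl⟩ := exists_subsuperset_card_eq
      (subset_sdiff.2 ⟨hM.fst_image_subset, hM.disjoint_fst_image_snd_image⟩)
      (hM.card_fst_image.trans_le hm)
      (by rw [card_sdiff_of_subset hM.snd_image_subset, hM.card_snd_image]; omega)
    refine ⟨fun v => v ∈ S, fun q hq => ?_, ?_⟩
    · have h₁ : q.1 ∈ S := hLS (mem_image_of_mem _ hq)
      have h₂ : q.2 ∉ S := fun h => (mem_sdiff.1 (hSR h)).2 (mem_image_of_mem _ hq)
      simp [h₁, h₂]
    · rw [filter_congr fun v _ => decide_eq_true_iff, filter_mem_eq_inter,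
        inter_eq_right.2 (hSR.trans sdiff_subset)]

end IsMatchingOn

end Matching

lemma Nat.card_subtype_and_mem_eq_sum {β γ : Type*} [DecidableEq γ] {P : β → Prop}
    (hP : {x | P x}.Finite) (g : β → γ) (t : Finset γ) :
    Nat.card {x // P x ∧ g x ∈ t} = ∑ c ∈ t, Nat.card {x // P x ∧ g x = c} := by
  have hcard : ∀ (Q : β → Prop) [DecidablePred Q],
      Nat.card {x // P x ∧ Q x} = #{x ∈ hP.toFinset | Q x} :=
    fun Q => (Nat.card_congr (Equiv.subtypeEquivRight fun x => by simp)).trans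
      (Nat.card_eq_finsetCard _)
  rw [hcard, card_eq_sum_card_fiberwise (f := g) (t := t)
    fun x hx => mem_coe.2 (mem_filter.1 hx).2]
  refine sum_congr rfl fun c hc => ?_
  rw [hcard, filter_filter]
  exact congrArg card (filter_congr fun x _ => ⟨And.right, fun h => ⟨h ▸ hc, h⟩⟩)

lemma IsCanSecStr.isMatchingOn {n lam r : ℕ} {M : Finset (ℕ × ℕ)} (hM : IsCanSecStr n lam r M)
    (hlam : 1 ≤ lam) : IsMatchingOn (Icc 1 n) M :=
  ⟨fun q hq => by have := hM.1 q hq; simp only [mem_Icc]; omega, hM.2.1⟩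

lemma setOf_isCanSecStr_finite (n lam r : ℕ) : {M | IsCanSecStr n lam r M}.Finite := by
  refine (Icc 1 n ×ˢ Icc 1 n).powerset.finite_toSet.subset fun M hM =>
    mem_coe.2 <| mem_powerset.2 fun q hq => ?_
  have := hM.1 q hq
  simp only [mem_product, mem_Icc]
  omega

theorem compatible_RY_characterization_general (n lam r : ℕ) (hlam : 1 ≤ lam)
    (p : ℝ) (hp0 : 0 < p) (hp1 : p < 1) :
    (∀ M : Finset (ℕ × ℕ), ∀ l : ℕ, IsCanSecStr n lam r M → M.card = l →
      ((∃ f : ℕ → Bool, IsCompatibleRY n (⌊p * n⌋₊) M f) ↔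
        l ≤ min ⌊p * n⌋₊ ⌈(1 - p) * n⌉₊)) ∧
    Nat.card {M : Finset (ℕ × ℕ) // IsCanSecStr n lam r M ∧
        ∃ f : ℕ → Bool, IsCompatibleRY n (⌊p * n⌋₊) M f} =
      ∑ l ∈ Finset.range (min ⌊p * n⌋₊ ⌈(1 - p) * n⌉₊ + 1),
        Nat.card {M : Finset (ℕ × ℕ) // IsCanSecStr n lam r M ∧ M.card = l} := by
  have hpn : p * n ≤ n := mul_le_of_le_one_left n.cast_nonneg hp1.le
  have hmn : ⌊p * n⌋₊ ≤ n := Nat.floor_le_of_le hpn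
  have hceil : ⌈(1 - p) * n⌉₊ = n - ⌊p * n⌋₊ := by
    rw [sub_mul, one_mul, Nat.ceil_natCast_sub (by positivity) hpn]
  have key : ∀ M, IsCanSecStr n lam r M →
      ((∃ f, IsCompatibleRY n ⌊p * n⌋₊ M f) ↔ M.card ≤ min ⌊p * n⌋₊ ⌈(1 - p) * n⌉₊) := by
    intro M hM
    simp only [IsCompatibleRY]
    rw [(hM.isMatchingOn hlam).exists_coloring_iff, hceil, Nat.card_Icc]
    omega
  refine ⟨fun M l hM hl => hl ▸ key M hM, ?_⟩
  calc _ = Nat.card {M // IsCanSecStr n lam r M ∧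
        M.card ∈ range (min ⌊p * n⌋₊ ⌈(1 - p) * n⌉₊ + 1)} :=
        Nat.card_congr <| Equiv.subtypeEquivRight fun M => and_congr_right fun hM =>
          (key M hM).trans (by rw [mem_range, Nat.lt_succ_iff])
    _ = _ := Nat.card_subtype_and_mem_eq_sum (setOf_isCanSecStr_finite n lam r) _ _

/-- A structure with `l` arcs admits a compatible RY-sequence with `⌊pn⌋` purines iff
`l ≤ min(⌊pn⌋, ⌈(1−p)n⌉)`; consequently
`s_p(n) = Σ_{l=0}^{min(⌊pn⌋,⌈(1−p)n⌉)} s(n,l)`. -/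
theorem compatible_RY_characterization (n lam r : ℕ) (hlam : 1 ≤ lam) (hr : 1 ≤ r)
    (p : ℝ) (hp0 : 0 < p) (hp1 : p < 1) :
    (∀ M : Finset (ℕ × ℕ), ∀ l : ℕ, IsCanSecStr n lam r M → M.card = l →
      ((∃ f : ℕ → Bool, IsCompatibleRY n (⌊p * n⌋₊) M f) ↔
        l ≤ min ⌊p * n⌋₊ ⌈(1 - p) * n⌉₊)) ∧
    Nat.card {M : Finset (ℕ × ℕ) // IsCanSecStr n lam r M ∧
        ∃ f : ℕ → Bool, IsCompatibleRY n (⌊p * n⌋₊) M f} =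
      ∑ l ∈ Finset.range (min ⌊p * n⌋₊ ⌈(1 - p) * n⌉₊ + 1),
        Nat.card {M : Finset (ℕ × ℕ) // IsCanSecStr n lam r M ∧ M.card = l} :=
  compatible_RY_characterization_general n lam r hlam p hp0 hp1
end

section
/- Let a, u, c, g be nonnegative integers (counts of A, U, C, G) with Watson-Crick and wobble pairing (allowed pairs A-U, C-G, U-G). The maximum of l₁ + l₂ + l₃ over nonnegative integers l₁, l₂, l₃ satisfying l₁ ≤ a, l₁ + l₃ ≤ u, l₂ ≤ c, l₂ + l₃ ≤ g equals min( min(a,u) + g, min(c,g) + u ). -/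
/-- With Watson-Crick and wobble pairing (allowed pairs A-U, C-G, U-G) and nucleotide
counts `a, u, c, g`, the maximum of `l₁ + l₂ + l₃` over nonnegative integers with
`l₁ ≤ a`, `l₁ + l₃ ≤ u`, `l₂ ≤ c`, `l₂ + l₃ ≤ g` equals
`min(min(a,u) + g, min(c,g) + u)`. -/
theorem wobble_ilp_optimum (a u c g : ℕ) :
    IsGreatest {m : ℕ | ∃ l₁ l₂ l₃ : ℕ,
        l₁ ≤ a ∧ l₁ + l₃ ≤ u ∧ l₂ ≤ c ∧ l₂ + l₃ ≤ g ∧ m = l₁ + l₂ + l₃}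
      (min (min a u + g) (min c g + u)) := by
  refine ⟨?_, ?_⟩
  · -- Greedy: all Watson-Crick pairs first, then wobble pairs from the leftover U and G;
    -- the total is `min (min c g + u) (min a u + g)`.
    exact ⟨min a u, min c g, min (u - min a u) (g - min c g),
      by omega, by omega, by omega, by omega, by omega⟩
  · rintro m ⟨l₁, l₂, l₃, hA, hU, hC, hG, rfl⟩
    -- The C-G and U-G pairs each use a G, and there are at most `min a u` A-U pairs;
    -- symmetrically, the A-U and U-G pairs each use a U, and there are at most `min c g` C-G pairs.
    exact le_min (by omega) (by omega)
end
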